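/- arXiv:funct-an/9712002 — 9 statements merged into one kernel-verified Lean document; each statement's English description precedes it below -/
import Mathlib

section
/- Let A be a C*-algebra, let p ∈ A be a projection, and let x ∈ A satisfy x·p = x and ‖x*·x − p‖ < 1. Then there exists a partial isometry v ∈ A with v*·v = p and ‖v − x‖ ≤ 1 − (1 − ‖x*·x − p‖)^(1/2) ≤ ‖x*·x − p‖. (One may take v = x·(x*·x)^(−1/2), the inverse square root computed by continuous functional calculus inside the corner p·A·p.) -/
/-!
Pass to the unitization. There `y = 1 + (x⋆x - p)` is self-adjoint with `‖y - 1‖ = d < 1`,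
so `σ(y) ⊆ [1 - d, 1 + d] ⊆ (0, ∞)` and `z = y^(-1/2)` exists. The projection `1 - p`
annihilates `y - 1` on both sides, and `z - 1 = h(y)(y - 1)` for a continuous `h`, so `z`
fixes `1 - p`. Hence `v = x z` satisfies `v⋆v = z (y - (1 - p)) z = 1 - (1 - p) = p`, and
`‖v - x‖² = ‖(z - 1) y (z - 1)‖ = sup_{r ∈ σ(y)} (1 - √r)² ≤ (1 - √(1 - d))²`.
-/

open Set

lemma Real.one_sub_sqrt_one_sub_le {d : ℝ} (hd : 0 ≤ d) : 1 - √(1 - d) ≤ d := by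
  have : 1 - d ≤ √(1 - d) := Real.le_sqrt_self_iff.mpr (by linarith)
  linarith

lemma Real.abs_one_sub_sqrt_le {d r : ℝ} (hd : d ≤ 1) (hr : r ∈ Icc (1 - d) (1 + d)) :
    |1 - √r| ≤ 1 - √(1 - d) := by
  obtain ⟨hr₁, hr₂⟩ := hr
  rcases le_total r 1 with hr1 | hr1
  · have : √r ≤ 1 := Real.sqrt_le_one.mpr hr1
    rw [abs_of_nonneg (by linarith)]
    linarith [Real.sqrt_le_sqrt hr₁]
  · have : 1 ≤ √r := Real.one_le_sqrt.mpr hr1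
    -- concavity of `√`
    have hconc : √(1 + d) + √(1 - d) ≤ 2 := by
      nlinarith [Real.sq_sqrt (show 0 ≤ 1 + d by linarith),
        Real.sq_sqrt (show 0 ≤ 1 - d by linarith), sq_nonneg (√(1 + d) - √(1 - d))]
    rw [abs_of_nonpos (by linarith)]
    linarith [Real.sqrt_le_sqrt hr₂]

section Unital

variable {B : Type*} [CStarAlgebra B]

lemma spectrum_subset_Icc_of_norm_sub_one_le {y : B} {d : ℝ} (h : ‖y - 1‖ ≤ d) :
    spectrum ℝ y ⊆ Icc (1 - d) (1 + d) := by
  intro r hr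
  have : Nontrivial B := by
    by_contra! hB
    simp [spectrum.of_subsingleton] at hr
  have hr' : r - 1 ∈ spectrum ℝ (y - algebraMap ℝ B 1) := by
    rw [← spectrum.sub_singleton_eq]
    exact Set.sub_mem_sub hr rfl
  have := (spectrum.norm_le_norm_of_mem hr').trans (by simpa using h)
  rw [Real.norm_eq_abs, abs_le] at this
  constructor <;> linarith [this.1, this.2]

lemma pos_of_mem_spectrum_of_norm_sub_one_lt {y : B} (h : ‖y - 1‖ < 1) :
    ∀ r ∈ spectrum ℝ y, 0 < r := fun _ hr => by
  linarith [(spectrum_subset_Icc_of_norm_sub_one_le le_rfl hr).1]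

noncomputable def invSqrt (y : B) : B := cfc (fun r : ℝ => (√r)⁻¹) y

lemma isSelfAdjoint_invSqrt (y : B) : IsSelfAdjoint (invSqrt y) := cfc_predicate _ y

variable {y : B} (hy : IsSelfAdjoint y) (hpos : ∀ r ∈ spectrum ℝ y, 0 < r)
include hy hpos

lemma invSqrt_mul_mul_invSqrt : invSqrt y * y * invSqrt y = 1 := by
  have hc : ContinuousOn (fun r : ℝ => (√r)⁻¹) (spectrum ℝ y) :=
    Real.continuous_sqrt.continuousOn.inv₀ fun r hr => (Real.sqrt_pos.mpr (hpos r hr)).ne'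
  rw [invSqrt]
  conv_lhs => enter [1, 2]; rw [← cfc_id' ℝ y]
  rw [← cfc_mul .., ← cfc_mul .., ← cfc_const_one ℝ y]
  refine cfc_congr fun r hr => ?_
  obtain ⟨s, hs, rfl⟩ : ∃ s, 0 < s ∧ r = s ^ 2 :=
    ⟨√r, Real.sqrt_pos.mpr (hpos r hr), (Real.sq_sqrt (hpos r hr).le).symm⟩
  rw [Real.sqrt_sq hs.le]
  field_simp

lemma invSqrt_sub_one_eq_cfc_mul :
    invSqrt y - 1 = cfc (fun r : ℝ => -(√r * (√r + 1))⁻¹) y * (y - 1) := by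
  have hsqrt : ∀ r ∈ spectrum ℝ y, 0 < √r := fun r hr => Real.sqrt_pos.mpr (hpos r hr)
  have hc : ContinuousOn (fun r : ℝ => (√r)⁻¹) (spectrum ℝ y) :=
    Real.continuous_sqrt.continuousOn.inv₀ fun r hr => (hsqrt r hr).ne'
  have hc' : ContinuousOn (fun r : ℝ => -(√r * (√r + 1))⁻¹) (spectrum ℝ y) := by
    refine (ContinuousOn.inv₀ (by fun_prop) fun r hr => ?_).neg
    have := hsqrt r hr
    positivity
  calc invSqrt y - 1 = cfc (fun r : ℝ => (√r)⁻¹ - 1) y := by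
        rw [cfc_sub _ (fun _ => 1) y hc continuousOn_const, cfc_const_one ℝ y, invSqrt]
    _ = cfc (fun r : ℝ => -(√r * (√r + 1))⁻¹ * (r - 1)) y := by
        refine cfc_congr fun r hr => ?_
        obtain ⟨s, hs, rfl⟩ : ∃ s, 0 < s ∧ r = s ^ 2 :=
          ⟨√r, hsqrt r hr, (Real.sq_sqrt (hpos r hr).le).symm⟩
        rw [Real.sqrt_sq hs.le]
        field_simp
        ring
    _ = cfc (fun r : ℝ => -(√r * (√r + 1))⁻¹) y * (y - 1) := by
        rw [cfc_mul _ (fun r : ℝ => r - 1) y hc' (continuousOn_id.sub continuousOn_const),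
          cfc_sub (fun r : ℝ => r) (fun _ => 1) y continuousOn_id continuousOn_const,
          cfc_id' ℝ y, cfc_const_one ℝ y]

lemma mul_invSqrt_of_mul_sub_one_eq_zero {q : B} (hq : q * (y - 1) = 0) : q * invSqrt y = q := by
  have hcomm : Commute (cfc (fun r : ℝ => -(√r * (√r + 1))⁻¹) y) (y - 1) :=
    ((Commute.refl y).sub_right (Commute.one_right y)).cfc_real _
  have := congrArg (q * ·) (invSqrt_sub_one_eq_cfc_mul hy hpos)
  simp only [mul_sub, mul_one, hcomm.eq, ← mul_assoc, hq, zero_mul, sub_eq_zero] at this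
  exact this

lemma invSqrt_mul_of_sub_one_mul_eq_zero {q : B} (hq : (y - 1) * q = 0) : invSqrt y * q = q := by
  have := congrArg (· * q) (invSqrt_sub_one_eq_cfc_mul hy hpos)
  simp only [sub_mul, one_mul, mul_assoc, hq, mul_zero, sub_eq_zero] at this
  exact this

omit hpos in
lemma norm_invSqrt_sub_one_mul_mul_le (h : ‖y - 1‖ < 1) :
    ‖(invSqrt y - 1) * y * (invSqrt y - 1)‖ ≤ (1 - √(1 - ‖y - 1‖)) ^ 2 := by
  have hspec := spectrum_subset_Icc_of_norm_sub_one_le (le_refl ‖y - 1‖)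
  have hpos := pos_of_mem_spectrum_of_norm_sub_one_lt h
  have hc : ContinuousOn (fun r : ℝ => (√r)⁻¹) (spectrum ℝ y) :=
    Real.continuous_sqrt.continuousOn.inv₀ fun r hr => (Real.sqrt_pos.mpr (hpos r hr)).ne'
  have hc₁ : ContinuousOn (fun r : ℝ => (√r)⁻¹ - 1) (spectrum ℝ y) :=
    hc.sub continuousOn_const
  have hcfc : (invSqrt y - 1) * y * (invSqrt y - 1) = cfc (fun r : ℝ => (1 - √r) ^ 2) y := by
    calc (invSqrt y - 1) * y * (invSqrt y - 1)
        = cfc (fun r : ℝ => ((√r)⁻¹ - 1) * r * ((√r)⁻¹ - 1)) y := by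
          rw [cfc_mul (fun r : ℝ => ((√r)⁻¹ - 1) * r) _ y (hc₁.mul continuousOn_id) hc₁,
            cfc_mul _ (fun r : ℝ => r) y hc₁ continuousOn_id, cfc_id' ℝ y,
            cfc_sub _ (fun _ => 1) y hc continuousOn_const, cfc_const_one ℝ y, invSqrt]
      _ = cfc (fun r : ℝ => (1 - √r) ^ 2) y := by
          refine cfc_congr fun r hr => ?_
          obtain ⟨s, hs, rfl⟩ : ∃ s, 0 < s ∧ r = s ^ 2 :=
            ⟨√r, Real.sqrt_pos.mpr (hpos r hr), (Real.sq_sqrt (hpos r hr).le).symm⟩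
          rw [Real.sqrt_sq hs.le]
          field_simp
  rw [hcfc]
  refine norm_cfc_le (sq_nonneg _) fun r hr => ?_
  rw [Real.norm_eq_abs, abs_pow]
  exact pow_le_pow_left₀ (abs_nonneg _) (Real.abs_one_sub_sqrt_le h.le (hspec hr)) 2

end Unital

section Corner

variable {B : Type*} [CStarAlgebra B] {p x : B}

lemma one_sub_mul_star_mul_self_sub (hp : IsSelfAdjoint p) (hpp : p * p = p) (hxp : x * p = x) :
    (1 - p) * (star x * x - p) = 0 := by
  have hpx : p * star x = star x := by rw [← hp.star_eq, ← star_mul, hxp]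
  rw [sub_mul, one_mul, mul_sub, ← mul_assoc, hpx, hpp, sub_self]

lemma star_mul_self_sub_mul_one_sub (hpp : p * p = p) (hxp : x * p = x) :
    (star x * x - p) * (1 - p) = 0 := by
  rw [mul_sub, mul_one, sub_mul, mul_assoc, hxp, hpp, sub_self]

/-- `1 + (x⋆x - p)` is `x⋆x` on the corner `pBp` and `1` on `(1 - p)B(1 - p)`, so this is
`(x⋆x)^(-1/2)` computed in `pBp`, extended by `1 - p`. -/
noncomputable def cornerInvSqrt (p x : B) : B := invSqrt (1 + (star x * x - p))

lemma isSelfAdjoint_one_add_star_mul_self_sub (hp : IsSelfAdjoint p) :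
    IsSelfAdjoint (1 + (star x * x - p)) :=
  (IsSelfAdjoint.one B).add ((IsSelfAdjoint.star_mul_self x).sub hp)

lemma pos_of_mem_spectrum_one_add_star_mul_self_sub (hx : ‖star x * x - p‖ < 1) :
    ∀ r ∈ spectrum ℝ (1 + (star x * x - p)), 0 < r :=
  pos_of_mem_spectrum_of_norm_sub_one_lt (by rwa [add_sub_cancel_left])

variable (hp : IsSelfAdjoint p) (hpp : p * p = p) (hxp : x * p = x) (hx : ‖star x * x - p‖ < 1)
include hp hpp hxp hx

lemma cornerInvSqrt_mul_one_sub : cornerInvSqrt p x * (1 - p) = 1 - p :=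
  invSqrt_mul_of_sub_one_mul_eq_zero (isSelfAdjoint_one_add_star_mul_self_sub hp)
    (pos_of_mem_spectrum_one_add_star_mul_self_sub hx)
    (by rw [add_sub_cancel_left, star_mul_self_sub_mul_one_sub hpp hxp])

lemma one_sub_mul_cornerInvSqrt : (1 - p) * cornerInvSqrt p x = 1 - p :=
  mul_invSqrt_of_mul_sub_one_eq_zero (isSelfAdjoint_one_add_star_mul_self_sub hp)
    (pos_of_mem_spectrum_one_add_star_mul_self_sub hx)
    (by rw [add_sub_cancel_left, one_sub_mul_star_mul_self_sub hp hpp hxp])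

theorem star_mul_self_of_mul_cornerInvSqrt :
    star (x * cornerInvSqrt p x) * (x * cornerInvSqrt p x) = p := by
  have hzyz : cornerInvSqrt p x * (1 + (star x * x - p)) * cornerInvSqrt p x = 1 :=
    invSqrt_mul_mul_invSqrt (isSelfAdjoint_one_add_star_mul_self_sub hp)
      (pos_of_mem_spectrum_one_add_star_mul_self_sub hx)
  have hzq := cornerInvSqrt_mul_one_sub hp hpp hxp hx
  have hqz := one_sub_mul_cornerInvSqrt hp hpp hxp hx
  have hz : star (cornerInvSqrt p x) = cornerInvSqrt p x := (isSelfAdjoint_invSqrt _).star_eq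
  generalize cornerInvSqrt p x = z at *
  calc star (x * z) * (x * z) = z * (1 + (star x * x - p)) * z - z * (1 - p) * z := by
        rw [star_mul, hz]; noncomm_ring
    _ = p := by rw [hzyz, hzq, hqz]; abel

theorem norm_mul_cornerInvSqrt_sub_le :
    ‖x * cornerInvSqrt p x - x‖ ≤ 1 - √(1 - ‖star x * x - p‖) := by
  have hbound : ‖(cornerInvSqrt p x - 1) * (1 + (star x * x - p)) * (cornerInvSqrt p x - 1)‖ ≤
      (1 - √(1 - ‖star x * x - p‖)) ^ 2 := by
    have := norm_invSqrt_sub_one_mul_mul_le (isSelfAdjoint_one_add_star_mul_self_sub hp)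
      (by rwa [add_sub_cancel_left])
    rwa [add_sub_cancel_left] at this
  have hzq := cornerInvSqrt_mul_one_sub hp hpp hxp hx
  have hz : star (cornerInvSqrt p x) = cornerInvSqrt p x := (isSelfAdjoint_invSqrt _).star_eq
  generalize cornerInvSqrt p x = z at *
  have hsq : ‖x * z - x‖ ^ 2 = ‖(z - 1) * (1 + (star x * x - p)) * (z - 1)‖ := by
    rw [sq, ← CStarRing.norm_star_mul_self, star_sub, star_mul, hz]
    congr 1
    calc (z * star x - star x) * (x * z - x)
        = (z - 1) * (1 + (star x * x - p)) * (z - 1) - (z * (1 - p) - (1 - p)) * (z - 1) := by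
          noncomm_ring
      _ = (z - 1) * (1 + (star x * x - p)) * (z - 1) := by
          rw [hzq, sub_self, zero_mul, sub_zero]
  have hc : 0 ≤ 1 - √(1 - ‖star x * x - p‖) :=
    sub_nonneg.mpr (Real.sqrt_le_one.mpr (by linarith [norm_nonneg (star x * x - p)]))
  exact pow_le_pow_iff_left₀ (norm_nonneg _) hc two_ne_zero |>.mp (hsq ▸ hbound)

end Corner

/-- Let `A` be a C*-algebra, `p ∈ A` a projection, and `x ∈ A` with
`x·p = x` and `‖x*·x − p‖ < 1`.  Then there is a partial isometry `v ∈ A` with `v*·v = p`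
and `‖v − x‖ ≤ 1 − (1 − ‖x*·x − p‖)^(1/2) ≤ ‖x*·x − p‖`. -/
theorem stmt_0 {A : Type*} [NonUnitalNormedRing A] [StarRing A] [CStarRing A]
    [CompleteSpace A] [NormedSpace ℂ A] [IsScalarTower ℂ A A] [SMulCommClass ℂ A A]
    [StarModule ℂ A]
    (p x : A) (hp_sa : IsSelfAdjoint p) (hp_idem : p * p = p)
    (hxp : x * p = x) (hx : ‖star x * x - p‖ < 1) :
    ∃ v : A, star v * v = p ∧
      ‖v - x‖ ≤ 1 - Real.sqrt (1 - ‖star x * x - p‖) ∧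
      1 - Real.sqrt (1 - ‖star x * x - p‖) ≤ ‖star x * x - p‖ := by
  let _ : NonUnitalCStarAlgebra A := {}
  have hP : IsSelfAdjoint (p : Unitization ℂ A) := hp_sa.inr ℂ
  have hPP : (p * p : Unitization ℂ A) = p := by rw [← Unitization.inr_mul, hp_idem]
  have hXP : (x * p : Unitization ℂ A) = x := by rw [← Unitization.inr_mul, hxp]
  have hnorm : ‖star (x : Unitization ℂ A) * x - p‖ = ‖star x * x - p‖ := by
    rw [← Unitization.inr_star, ← Unitization.inr_mul, ← Unitization.inr_sub,
      Unitization.norm_inr]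
  rw [← hnorm] at hx ⊢
  lift (x : Unitization ℂ A) * cornerInvSqrt (p : Unitization ℂ A) x to A
    using by rw [Unitization.fst_mul, Unitization.fst_inr, zero_mul] with v hv
  refine ⟨v, Unitization.inr_injective (R := ℂ) ?_, ?_,
    Real.one_sub_sqrt_one_sub_le (norm_nonneg _)⟩
  · rw [Unitization.inr_mul, Unitization.inr_star, hv,
      star_mul_self_of_mul_cornerInvSqrt hP hPP hXP hx]
  · rw [← Unitization.norm_inr (𝕜 := ℂ), Unitization.inr_sub, hv]
    exact norm_mul_cornerInvSqrt_sub_le hP hPP hXP hx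
end

section
/- Let A and B be separable unital C*-algebras, and let φ : A → B and ψ : B → A be ∗-homomorphisms such that ψ∘φ is approximately unitarily equivalent to the identity map of A and φ∘ψ is approximately unitarily equivalent to the identity map of B. Then A and B are isomorphic, i.e. there exists a ∗-algebra isomorphism from A onto B. -/
open Filter Topology

/-- Composition with a pointwise limit along a convergent sequence. -/
lemma stmt1_lim_comp {E F : Type*} [SeminormedAddCommGroup E] [NormedAddCommGroup F]
    (T : ℕ → E → F) (hsub : ∀ n x y, T n (x - y) = T n x - T n y)
    (hnorm : ∀ n x, ‖T n x‖ ≤ ‖x‖) (g : ℕ → E) (x : E) (L : F)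
    (hg : Tendsto (fun n => ‖g n - x‖) atTop (𝓝 0))
    (hT : Tendsto (fun n => T n x) atTop (𝓝 L)) :
    Tendsto (fun n => T n (g n)) atTop (𝓝 L) := by
  rw [tendsto_iff_norm_sub_tendsto_zero]
  have hT' := tendsto_iff_norm_sub_tendsto_zero.mp hT
  have hb : Tendsto (fun n => ‖g n - x‖ + ‖T n x - L‖) atTop (𝓝 0) := by
    simpa using hg.add hT'
  refine squeeze_zero (fun n => norm_nonneg _) (fun n => ?_) hb
  calc ‖T n (g n) - L‖ = ‖(T n (g n) - T n x) + (T n x - L)‖ := by abel_nf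
    _ ≤ ‖T n (g n) - T n x‖ + ‖T n x - L‖ := norm_add_le _ _
    _ ≤ ‖g n - x‖ + ‖T n x - L‖ := by
        gcongr
        rw [← hsub]
        exact hnorm _ _

lemma stmt1_cauchy_of_dense {E F : Type*} [SeminormedAddCommGroup E] [NormedAddCommGroup F]
    (c : ℕ → E) (hc : DenseRange c) (T : ℕ → E → F)
    (hsub : ∀ n x y, T n (x - y) = T n x - T n y)
    (hnorm : ∀ n x, ‖T n x‖ ≤ ‖x‖)
    (hstep : ∀ n, ∀ i ≤ n, ‖T (n+1) (c i) - T n (c i)‖ ≤ 2 * (1/2 : ℝ)^n) :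
    ∀ x, CauchySeq fun n => T n x := by
  have hci : ∀ i, CauchySeq fun n => T n (c i) := by
    intro i
    apply cauchySeq_of_le_geometric (1/2 : ℝ) (2 + 2^i * (2 * ‖c i‖)) (by norm_num)
    intro n
    rw [dist_eq_norm]
    rcases le_or_gt i n with hin | hni
    · calc ‖T n (c i) - T (n+1) (c i)‖ = ‖T (n+1) (c i) - T n (c i)‖ := norm_sub_rev _ _
        _ ≤ 2 * (1/2 : ℝ)^n := hstep n i hin
        _ ≤ (2 + 2^i * (2 * ‖c i‖)) * (1/2)^n := by
            have : (0:ℝ) ≤ 2^i * (2 * ‖c i‖) := by positivity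
            nlinarith [pow_pos (by norm_num : (0:ℝ) < 1/2) n]
    · have h1 : ‖T n (c i) - T (n+1) (c i)‖ ≤ 2 * ‖c i‖ := by
        calc ‖T n (c i) - T (n+1) (c i)‖ ≤ ‖T n (c i)‖ + ‖T (n+1) (c i)‖ := norm_sub_le _ _
          _ ≤ ‖c i‖ + ‖c i‖ := add_le_add (hnorm _ _) (hnorm _ _)
          _ = 2 * ‖c i‖ := by ring
      have h2 : (1:ℝ) ≤ 2^i * (1/2)^n := by
        have : ((1:ℝ)/2)^n ≥ (1/2)^i := by
          apply pow_le_pow_of_le_one (by norm_num) (by norm_num) hni.le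
        calc (1:ℝ) = 2^i * (1/2)^i := by
              rw [← mul_pow]; norm_num
          _ ≤ 2^i * (1/2)^n := by gcongr
      have h3 : (0:ℝ) ≤ (1/2)^n := by positivity
      nlinarith [norm_nonneg (c i), pow_pos (by norm_num : (0:ℝ) < 2) i]
  intro x
  rw [Metric.cauchySeq_iff']
  intro ε hε
  obtain ⟨i, hi⟩ := Metric.denseRange_iff.mp hc x (ε/4) (by linarith)
  obtain ⟨N, hN⟩ := Metric.cauchySeq_iff'.mp (hci i) (ε/4) (by linarith)
  refine ⟨N, fun n hn => ?_⟩
  have e1 : ‖T n x - T n (c i)‖ ≤ ε/4 := by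
    rw [← hsub]; exact (hnorm _ _).trans (by rw [← dist_eq_norm]; exact hi.le)
  have e2 : ‖T N (c i) - T N x‖ ≤ ε/4 := by
    rw [← hsub]; refine (hnorm _ _).trans ?_
    rw [← dist_eq_norm, dist_comm]; exact hi.le
  have e3 : dist (T n (c i)) (T N (c i)) < ε/4 := hN n hn
  rw [dist_eq_norm] at e3 ⊢
  calc ‖T n x - T N x‖
      = ‖(T n x - T n (c i)) + ((T n (c i) - T N (c i)) + (T N (c i) - T N x))‖ := by abel_nf
    _ ≤ ‖T n x - T n (c i)‖ + ‖(T n (c i) - T N (c i)) + (T N (c i) - T N x)‖ := norm_add_le _ _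
    _ ≤ ‖T n x - T n (c i)‖ + (‖T n (c i) - T N (c i)‖ + ‖T N (c i) - T N x‖) :=
        by gcongr; exact norm_add_le _ _
    _ < ε := by linarith

lemma stmt1_fix_of_dense {E : Type*} [NormedAddCommGroup E]
    (c : ℕ → E) (hc : DenseRange c) (G : E → E)
    (hG : ∀ x y, ‖G x - G y‖ ≤ ‖x - y‖)
    (hfix : ∀ i, G (c i) = c i) : ∀ x, G x = x := by
  intro x
  apply eq_of_forall_dist_le
  intro ε hε
  obtain ⟨i, hi⟩ := Metric.denseRange_iff.mp hc x (ε/2) (by linarith)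
  calc dist (G x) x ≤ dist (G x) (G (c i)) + dist (G (c i)) x := dist_triangle _ _ _
    _ = dist (G x) (G (c i)) + dist (c i) x := by rw [hfix]
    _ ≤ dist x (c i) + dist (c i) x := by
        gcongr
        rw [dist_eq_norm, dist_eq_norm]
        exact hG _ _
    _ ≤ ε/2 + ε/2 := by rw [dist_comm (c i) x]; exact add_le_add hi.le hi.le
    _ = ε := by ring

theorem stmt1_main {A B : Type*}
    [NormedRing A] [StarRing A] [CompleteSpace A] [NormedAlgebra ℂ A] [ContinuousStar A]
    [NormedRing B] [StarRing B] [CompleteSpace B] [NormedAlgebra ℂ B] [ContinuousStar B]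
    (a : ℕ → A) (b : ℕ → B) (ha : DenseRange a) (hb : DenseRange b)
    (Φn : ℕ → A → B) (Ψn : ℕ → B → A)
    (hΦsub : ∀ n x y, Φn n (x - y) = Φn n x - Φn n y)
    (hΦadd : ∀ n x y, Φn n (x + y) = Φn n x + Φn n y)
    (hΦmul : ∀ n x y, Φn n (x * y) = Φn n x * Φn n y)
    (hΦstar : ∀ n x, Φn n (star x) = star (Φn n x))
    (hΦsmul : ∀ n (r : ℂ) x, Φn n (r • x) = r • Φn n x)
    (hΦnorm : ∀ n x, ‖Φn n x‖ ≤ ‖x‖)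
    (hΨsub : ∀ n x y, Ψn n (x - y) = Ψn n x - Ψn n y)
    (hΨadd : ∀ n x y, Ψn n (x + y) = Ψn n x + Ψn n y)
    (hΨmul : ∀ n x y, Ψn n (x * y) = Ψn n x * Ψn n y)
    (hΨstar : ∀ n x, Ψn n (star x) = star (Ψn n x))
    (hΨsmul : ∀ n (r : ℂ) x, Ψn n (r • x) = r • Ψn n x)
    (hΨnorm : ∀ n x, ‖Ψn n x‖ ≤ ‖x‖)
    (h1 : ∀ n, ∀ i ≤ n, ‖Ψn n (Φn n (a i)) - a i‖ ≤ (1/2 : ℝ)^n)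
    (h2 : ∀ n, ∀ i ≤ n, ‖Ψn (n+1) (Φn (n+1) (Ψn n (b i))) - Ψn n (b i)‖ ≤ (1/2 : ℝ)^(n+1))
    (h3 : ∀ n, ∀ i ≤ n, ‖Φn (n+1) (Ψn n (b i)) - b i‖ ≤ (1/2 : ℝ)^n)
    (h4 : ∀ n, ∀ i ≤ n, ‖Φn (n+1) (Ψn n (Φn n (a i))) - Φn n (a i)‖ ≤ (1/2 : ℝ)^n) :
    Nonempty (A ≃⋆ₐ[ℂ] B) := by
  haveI : Nonempty A := ⟨0⟩
  haveI : Nonempty B := ⟨0⟩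
  have hpow : Tendsto (fun n : ℕ => (1/2 : ℝ)^n) atTop (𝓝 0) :=
    tendsto_pow_atTop_nhds_zero_of_lt_one (by norm_num) (by norm_num)
  -- step estimates
  have hstepΦ : ∀ n, ∀ i ≤ n, ‖Φn (n+1) (a i) - Φn n (a i)‖ ≤ 2 * (1/2 : ℝ)^n := by
    intro n i hin
    calc ‖Φn (n+1) (a i) - Φn n (a i)‖
        = ‖(Φn (n+1) (a i) - Φn (n+1) (Ψn n (Φn n (a i)))) +
            (Φn (n+1) (Ψn n (Φn n (a i))) - Φn n (a i))‖ := by abel_nf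
      _ ≤ ‖Φn (n+1) (a i) - Φn (n+1) (Ψn n (Φn n (a i)))‖ +
            ‖Φn (n+1) (Ψn n (Φn n (a i))) - Φn n (a i)‖ := norm_add_le _ _
      _ ≤ ‖a i - Ψn n (Φn n (a i))‖ + (1/2)^n := by
          gcongr
          · rw [← hΦsub]; exact hΦnorm _ _
          · exact h4 n i hin
      _ ≤ (1/2)^n + (1/2)^n := by
          gcongr
          rw [norm_sub_rev]; exact h1 n i hin
      _ = 2 * (1/2)^n := by ring
  have hstepΨ : ∀ n, ∀ i ≤ n, ‖Ψn (n+1) (b i) - Ψn n (b i)‖ ≤ 2 * (1/2 : ℝ)^n := by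
    intro n i hin
    calc ‖Ψn (n+1) (b i) - Ψn n (b i)‖
        = ‖(Ψn (n+1) (b i) - Ψn (n+1) (Φn (n+1) (Ψn n (b i)))) +
            (Ψn (n+1) (Φn (n+1) (Ψn n (b i))) - Ψn n (b i))‖ := by abel_nf
      _ ≤ ‖Ψn (n+1) (b i) - Ψn (n+1) (Φn (n+1) (Ψn n (b i)))‖ +
            ‖Ψn (n+1) (Φn (n+1) (Ψn n (b i))) - Ψn n (b i)‖ := norm_add_le _ _
      _ ≤ ‖b i - Φn (n+1) (Ψn n (b i))‖ + (1/2)^(n+1) := by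
          gcongr
          · rw [← hΨsub]; exact hΨnorm _ _
          · exact h2 n i hin
      _ ≤ (1/2)^n + (1/2)^(n+1) := by
          gcongr
          rw [norm_sub_rev]; exact h3 n i hin
      _ ≤ 2 * (1/2)^n := by
          rw [pow_succ]
          nlinarith [pow_pos (by norm_num : (0:ℝ) < 1/2) n]
  have hΦc : ∀ x, CauchySeq fun n => Φn n x :=
    stmt1_cauchy_of_dense a ha Φn hΦsub hΦnorm hstepΦ
  have hΨc : ∀ y, CauchySeq fun n => Ψn n y :=
    stmt1_cauchy_of_dense b hb Ψn hΨsub hΨnorm hstepΨ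
  set Φf : A → B := fun x => limUnder atTop fun n => Φn n x with hΦf
  set Ψf : B → A := fun y => limUnder atTop fun n => Ψn n y with hΨf
  have hΦt : ∀ x, Tendsto (fun n => Φn n x) atTop (𝓝 (Φf x)) :=
    fun x => (hΦc x).tendsto_limUnder
  have hΨt : ∀ y, Tendsto (fun n => Ψn n y) atTop (𝓝 (Ψf y)) :=
    fun y => (hΨc y).tendsto_limUnder
  -- algebraic properties of the limits
  have hΦfsub : ∀ x y, Φf (x - y) = Φf x - Φf y := fun x y =>
    tendsto_nhds_unique (hΦt (x - y))
      (((hΦt x).sub (hΦt y)).congr fun n => (hΦsub n x y).symm)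
  have hΦfadd : ∀ x y, Φf (x + y) = Φf x + Φf y := fun x y =>
    tendsto_nhds_unique (hΦt (x + y))
      (((hΦt x).add (hΦt y)).congr fun n => (hΦadd n x y).symm)
  have hΦfmul : ∀ x y, Φf (x * y) = Φf x * Φf y := fun x y =>
    tendsto_nhds_unique (hΦt (x * y))
      (((hΦt x).mul (hΦt y)).congr fun n => (hΦmul n x y).symm)
  have hΦfstar : ∀ x, Φf (star x) = star (Φf x) := fun x =>
    tendsto_nhds_unique (hΦt (star x))
      (((hΦt x).star).congr fun n => (hΦstar n x).symm)
  have hΦfsmul : ∀ (r : ℂ) x, Φf (r • x) = r • Φf x := fun r x =>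
    tendsto_nhds_unique (hΦt (r • x))
      (((hΦt x).const_smul r).congr fun n => (hΦsmul n r x).symm)
  have hΨfsub : ∀ x y, Ψf (x - y) = Ψf x - Ψf y := fun x y =>
    tendsto_nhds_unique (hΨt (x - y))
      (((hΨt x).sub (hΨt y)).congr fun n => (hΨsub n x y).symm)
  have hΦfnorm : ∀ x, ‖Φf x‖ ≤ ‖x‖ := fun x =>
    le_of_tendsto (hΦt x).norm (Eventually.of_forall fun n => hΦnorm n x)
  have hΨfnorm : ∀ y, ‖Ψf y‖ ≤ ‖y‖ := fun y =>
    le_of_tendsto (hΨt y).norm (Eventually.of_forall fun n => hΨnorm n y)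
  -- the inverse identities on the dense ranges
  have hfixA : ∀ i, Ψf (Φf (a i)) = a i := by
    intro i
    have t1 : Tendsto (fun n => Ψn n (Φn n (a i))) atTop (𝓝 (Ψf (Φf (a i)))) := by
      apply stmt1_lim_comp Ψn hΨsub hΨnorm _ (Φf (a i))
      · exact tendsto_iff_norm_sub_tendsto_zero.mp (hΦt (a i))
      · exact hΨt (Φf (a i))
    have t2 : Tendsto (fun n => Ψn n (Φn n (a i))) atTop (𝓝 (a i)) := by
      rw [tendsto_iff_norm_sub_tendsto_zero]
      exact squeeze_zero' (Eventually.of_forall fun n => norm_nonneg _)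
        (eventually_atTop.mpr ⟨i, fun n hn => h1 n i hn⟩) hpow
    exact tendsto_nhds_unique t1 t2
  have hfixB : ∀ i, Φf (Ψf (b i)) = b i := by
    intro i
    have t1 : Tendsto (fun n => Φn (n+1) (Ψn n (b i))) atTop (𝓝 (Φf (Ψf (b i)))) := by
      apply stmt1_lim_comp (fun n => Φn (n+1)) (fun n => hΦsub (n+1))
        (fun n => hΦnorm (n+1)) _ (Ψf (b i))
      · exact tendsto_iff_norm_sub_tendsto_zero.mp (hΨt (b i))
      · exact (hΦt (Ψf (b i))).comp (tendsto_add_atTop_nat 1)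
    have t2 : Tendsto (fun n => Φn (n+1) (Ψn n (b i))) atTop (𝓝 (b i)) := by
      rw [tendsto_iff_norm_sub_tendsto_zero]
      exact squeeze_zero' (Eventually.of_forall fun n => norm_nonneg _)
        (eventually_atTop.mpr ⟨i, fun n hn => h3 n i hn⟩) hpow
    exact tendsto_nhds_unique t1 t2
  -- extend to everything by density
  have hleft : ∀ x, Ψf (Φf x) = x := by
    apply stmt1_fix_of_dense a ha _ _ hfixA
    intro x y
    calc ‖Ψf (Φf x) - Ψf (Φf y)‖ = ‖Ψf (Φf x - Φf y)‖ := by rw [hΨfsub]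
      _ ≤ ‖Φf x - Φf y‖ := hΨfnorm _
      _ = ‖Φf (x - y)‖ := by rw [hΦfsub]
      _ ≤ ‖x - y‖ := hΦfnorm _
  have hright : ∀ y, Φf (Ψf y) = y := by
    apply stmt1_fix_of_dense b hb _ _ hfixB
    intro x y
    calc ‖Φf (Ψf x) - Φf (Ψf y)‖ = ‖Φf (Ψf x - Ψf y)‖ := by rw [hΦfsub]
      _ ≤ ‖Ψf x - Ψf y‖ := hΦfnorm _
      _ = ‖Ψf (x - y)‖ := by rw [hΨfsub]
      _ ≤ ‖x - y‖ := hΨfnorm _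
  exact ⟨{ toFun := Φf, invFun := Ψf, left_inv := hleft, right_inv := hright,
           map_mul' := hΦfmul, map_add' := hΦfadd,
           map_star' := hΦfstar, map_smul' := hΦfsmul }⟩

lemma stmt1_map_unitary {A B : Type*} [Ring A] [StarRing A] [Ring B] [StarRing B]
    [Algebra ℂ A] [Algebra ℂ B] (φ : A →⋆ₐ[ℂ] B) {p : A} (hp : p ∈ unitary A) :
    φ p ∈ unitary B := by
  rw [Unitary.mem_iff] at hp ⊢
  constructor
  · rw [← map_star, ← map_mul, hp.1, map_one]
  · rw [← map_star, ← map_mul, hp.2, map_one]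

lemma stmt1_conj {A B : Type*} [Ring A] [StarRing A] [Ring B] [StarRing B]
    [Algebra ℂ A] [Algebra ℂ B] (φ : A →⋆ₐ[ℂ] B) (p : A) (hp : p ∈ unitary A)
    (w : B) (x : A) :
    (w * star (φ p)) * φ (p * x * star p) * star (w * star (φ p)) = w * φ x * star w := by
  have h : star (φ p) * φ p = 1 := by
    rw [← map_star, ← map_mul, Unitary.star_mul_self_of_mem hp, map_one]
  simp only [map_mul, map_star, star_mul, star_star, mul_assoc]
  rw [← mul_assoc (star (φ p)) (φ p), h, one_mul, ← mul_assoc (star (φ p)) (φ p), h, one_mul]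

example {A B : Type*} [Ring A] [StarRing A] [Ring B] [StarRing B]
    [Algebra ℂ A] [Algebra ℂ B] (φ : A →⋆ₐ[ℂ] B) (q : B) (hq : q ∈ unitary B)
    (x y : A) (hqs : star q * q = 1) :
    q * φ (x * y) * star q = (q * φ x * star q) * (q * φ y * star q) := by
  rw [map_mul]
  simp only [mul_assoc]
  rw [← mul_assoc (star q) q, hqs, one_mul]
/-- If `A` and `B` are separable unital C*-algebras and
`φ : A → B`, `ψ : B → A` are ∗-homomorphisms with `ψ ∘ φ` approximately unitarily
equivalent to `id_A` and `φ ∘ ψ` approximately unitarily equivalent to `id_B`,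
then `A ≅ B`. -/
theorem stmt_1 {A B : Type*}
    [NormedRing A] [StarRing A] [CStarRing A] [CompleteSpace A]
    [NormedAlgebra ℂ A] [StarModule ℂ A] [TopologicalSpace.SeparableSpace A]
    [NormedRing B] [StarRing B] [CStarRing B] [CompleteSpace B]
    [NormedAlgebra ℂ B] [StarModule ℂ B] [TopologicalSpace.SeparableSpace B]
    (φ : A →⋆ₐ[ℂ] B) (ψ : B →⋆ₐ[ℂ] A)
    (hψφ : ∃ u : ℕ → A, (∀ n, u n ∈ unitary A) ∧
      ∀ a : A, Filter.Tendsto (fun n => ‖u n * ψ (φ a) * star (u n) - a‖)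
        Filter.atTop (nhds 0))
    (hφψ : ∃ u : ℕ → B, (∀ n, u n ∈ unitary B) ∧
      ∀ b : B, Filter.Tendsto (fun n => ‖u n * φ (ψ b) * star (u n) - b‖)
        Filter.atTop (nhds 0)) :
    Nonempty (A ≃⋆ₐ[ℂ] B) := by
  classical
  -- trivial case
  by_cases hAtriv : Subsingleton A
  · have h01 : (0 : B) = 1 := by
      calc (0 : B) = φ 0 := (map_zero φ).symm
        _ = φ 1 := by rw [Subsingleton.elim (0 : A) 1]
        _ = 1 := map_one φ
    haveI : Subsingleton B := subsingleton_of_zero_eq_one h01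
    exact ⟨{ toFun := fun _ => 0, invFun := fun _ => 0,
             left_inv := fun _ => Subsingleton.elim _ _,
             right_inv := fun _ => Subsingleton.elim _ _,
             map_mul' := fun _ _ => Subsingleton.elim _ _,
             map_add' := fun _ _ => Subsingleton.elim _ _,
             map_star' := fun _ => Subsingleton.elim _ _,
             map_smul' := fun _ _ => Subsingleton.elim _ _ }⟩
  haveI hAnt : Nontrivial A := not_subsingleton_iff_nontrivial.mp hAtriv
  haveI hBnt : Nontrivial B := by
    by_contra hB
    haveI := not_nontrivial_iff_subsingleton.mp hB
    exact zero_ne_one (α := A) (by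
      calc (0 : A) = ψ 0 := (map_zero ψ).symm
        _ = ψ 1 := by rw [Subsingleton.elim (0 : B) 1]
        _ = 1 := map_one ψ)
  letI : CStarAlgebra A := ⟨⟩
  letI : CStarAlgebra B := ⟨⟩
  haveI : Nonempty A := ⟨0⟩
  haveI : Nonempty B := ⟨0⟩
  obtain ⟨a, ha⟩ := TopologicalSpace.exists_dense_seq A
  obtain ⟨b, hb⟩ := TopologicalSpace.exists_dense_seq B
  -- finite approximation lemmas
  have FA : ∀ (N : ℕ) (c : ℕ → A) (ε : ℝ), 0 < ε →
      ∃ v, v ∈ unitary A ∧ ∀ i ≤ N, ‖v * ψ (φ (c i)) * star v - c i‖ ≤ ε := by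
    obtain ⟨u, hu, hconv⟩ := hψφ
    intro N c ε hε
    have h : ∀ᶠ n in Filter.atTop, ∀ i ∈ Set.Iic N, ‖u n * ψ (φ (c i)) * star (u n) - c i‖ ≤ ε :=
      (Filter.eventually_all_finite (Set.finite_Iic N)).mpr
        (fun i _ => ((hconv (c i)).eventually_lt_const hε).mono fun n hn => hn.le)
    obtain ⟨n, hn⟩ := h.exists
    exact ⟨u n, hu n, fun i hi => hn i hi⟩
  have FB : ∀ (N : ℕ) (c : ℕ → B) (ε : ℝ), 0 < ε →
      ∃ v, v ∈ unitary B ∧ ∀ i ≤ N, ‖v * φ (ψ (c i)) * star v - c i‖ ≤ ε := by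
    obtain ⟨u, hu, hconv⟩ := hφψ
    intro N c ε hε
    have h : ∀ᶠ n in Filter.atTop, ∀ i ∈ Set.Iic N, ‖u n * φ (ψ (c i)) * star (u n) - c i‖ ≤ ε :=
      (Filter.eventually_all_finite (Set.finite_Iic N)).mpr
        (fun i _ => ((hconv (c i)).eventually_lt_const hε).mono fun n hn => hn.le)
    obtain ⟨n, hn⟩ := h.exists
    exact ⟨u n, hu n, fun i hi => hn i hi⟩
  -- one step of the intertwining construction
  have stepEx : ∀ (n : ℕ) (s : A × B), s.1 ∈ unitary A → s.2 ∈ unitary B →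
      ∃ s' : A × B, s'.1 ∈ unitary A ∧ s'.2 ∈ unitary B ∧
        (∀ i ≤ n, ‖s'.2 * φ (s.1 * ψ (b i) * star s.1) * star s'.2 - b i‖ ≤ (1/2:ℝ)^n) ∧
        (∀ i ≤ n, ‖s'.2 * φ (s.1 * ψ (s.2 * φ (a i) * star s.2) * star s.1) * star s'.2 -
          s.2 * φ (a i) * star s.2‖ ≤ (1/2:ℝ)^n) ∧
        (∀ i ≤ n+1, ‖s'.1 * ψ (s'.2 * φ (a i) * star s'.2) * star s'.1 - a i‖ ≤ (1/2:ℝ)^(n+1)) ∧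
        (∀ i ≤ n, ‖s'.1 * ψ (s'.2 * φ (s.1 * ψ (b i) * star s.1) * star s'.2) * star s'.1 -
          s.1 * ψ (b i) * star s.1‖ ≤ (1/2:ℝ)^(n+1)) := by
    rintro n ⟨p, q⟩ hp hq
    obtain ⟨w, hw, hwspec⟩ := FB (2*n+1)
      (fun i => if i ≤ n then b i else q * φ (a (i - (n+1))) * star q) ((1/2)^n) (by positivity)
    set q' : B := w * star (φ p) with hq'def
    have hq' : q' ∈ unitary B :=
      mul_mem hw (Unitary.star_mem (stmt1_map_unitary φ hp))
    have hconjB : ∀ x : B, q' * φ (p * ψ x * star p) * star q' = w * φ (ψ x) * star w :=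
      fun x => stmt1_conj φ p hp w (ψ x)
    obtain ⟨v, hv, hvspec⟩ := FA (2*n+2)
      (fun i => if i ≤ n+1 then a i else p * ψ (b (i - (n+2))) * star p)
      ((1/2)^(n+1)) (by positivity)
    set p' : A := v * star (ψ q') with hp'def
    have hp' : p' ∈ unitary A :=
      mul_mem hv (Unitary.star_mem (stmt1_map_unitary ψ hq'))
    have hconjA : ∀ y : B, p' * ψ (q' * y * star q') * star p' = v * ψ y * star v :=
      fun y => stmt1_conj ψ q' hq' v y
    refine ⟨(p', q'), hp', hq', ?_, ?_, ?_, ?_⟩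
    · intro i hi
      have h := hwspec i (by omega)
      rw [if_pos hi] at h
      rw [hconjB]
      exact h
    · intro i hi
      have h := hwspec ((n+1)+i) (by omega)
      rw [if_neg (by omega), Nat.add_sub_cancel_left] at h
      rw [hconjB]
      exact h
    · intro i hi
      have h := hvspec i (by omega)
      rw [if_pos hi] at h
      rw [hconjA]
      exact h
    · intro i hi
      have h := hvspec ((n+2)+i) (by omega)
      rw [if_neg (by omega), Nat.add_sub_cancel_left] at h
      rw [hconjA]
      exact h
  -- build the chain of unitaries by recursion and choice
  obtain ⟨p0, hp0, hp0spec⟩ := FA 0 a 1 one_pos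
  let T := {s : A × B // s.1 ∈ unitary A ∧ s.2 ∈ unitary B}
  let s0 : T := ⟨(p0, 1), hp0, one_mem (unitary B)⟩
  let step : ℕ → T → T := fun n s =>
    ⟨Classical.choose (stepEx n s.1 s.2.1 s.2.2),
     (Classical.choose_spec (stepEx n s.1 s.2.1 s.2.2)).1,
     (Classical.choose_spec (stepEx n s.1 s.2.1 s.2.2)).2.1⟩
  let ch : ℕ → T := fun n => Nat.rec s0 step n
  let P : ℕ → A := fun n => (ch n).1.1
  let Q : ℕ → B := fun n => (ch n).1.2
  have hPu : ∀ n, P n ∈ unitary A := fun n => (ch n).2.1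
  have hQu : ∀ n, Q n ∈ unitary B := fun n => (ch n).2.2
  have hch : ∀ n,
      (∀ i ≤ n, ‖Q (n+1) * φ (P n * ψ (b i) * star (P n)) * star (Q (n+1)) - b i‖ ≤ (1/2:ℝ)^n) ∧
      (∀ i ≤ n, ‖Q (n+1) * φ (P n * ψ (Q n * φ (a i) * star (Q n)) * star (P n)) * star (Q (n+1)) -
        Q n * φ (a i) * star (Q n)‖ ≤ (1/2:ℝ)^n) ∧
      (∀ i ≤ n+1, ‖P (n+1) * ψ (Q (n+1) * φ (a i) * star (Q (n+1))) * star (P (n+1)) - a i‖ ≤ (1/2:ℝ)^(n+1)) ∧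
      (∀ i ≤ n, ‖P (n+1) * ψ (Q (n+1) * φ (P n * ψ (b i) * star (P n)) * star (Q (n+1))) * star (P (n+1)) -
        P n * ψ (b i) * star (P n)‖ ≤ (1/2:ℝ)^(n+1)) := by
    intro n
    exact (Classical.choose_spec (stepEx n (ch n).1 (ch n).2.1 (ch n).2.2)).2.2
  have h1 : ∀ n, ∀ i ≤ n,
      ‖P n * ψ (Q n * φ (a i) * star (Q n)) * star (P n) - a i‖ ≤ (1/2:ℝ)^n := by
    intro n i hi
    cases n with
    | zero =>
      have hi0 : i = 0 := Nat.le_zero.mp hi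
      subst hi0
      have h := hp0spec 0 le_rfl
      have hQ0 : Q 0 = 1 := rfl
      have hP0 : P 0 = p0 := rfl
      rw [hQ0, hP0]
      simpa using h
    | succ m => exact (hch m).2.2.1 i hi
  refine stmt1_main a b ha hb
    (fun n x => Q n * φ x * star (Q n)) (fun n y => P n * ψ y * star (P n))
    ?_ ?_ ?_ ?_ ?_ ?_ ?_ ?_ ?_ ?_ ?_ ?_
    h1 (fun n => (hch n).2.2.2) (fun n => (hch n).1) (fun n => (hch n).2.1)
  · intro n x y; simp [map_sub, mul_sub, sub_mul]
  · intro n x y; simp [map_add, mul_add, add_mul]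
  · intro n x y
    show Q n * φ (x * y) * star (Q n) = (Q n * φ x * star (Q n)) * (Q n * φ y * star (Q n))
    rw [map_mul]
    simp only [mul_assoc]
    rw [← mul_assoc (star (Q n)) (Q n), Unitary.star_mul_self_of_mem (hQu n), one_mul]
  · intro n x; simp [map_star, star_mul, star_star, mul_assoc]
  · intro n r x; simp [map_smul, mul_smul_comm, smul_mul_assoc]
  · intro n x
    rw [CStarRing.norm_mul_mem_unitary _ (Unitary.star_mem (hQu n)),
      CStarRing.norm_mem_unitary_mul _ (hQu n)]
    exact NonUnitalStarAlgHom.norm_apply_le φ x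
  · intro n x y; simp [map_sub, mul_sub, sub_mul]
  · intro n x y; simp [map_add, mul_add, add_mul]
  · intro n x y
    show P n * ψ (x * y) * star (P n) = (P n * ψ x * star (P n)) * (P n * ψ y * star (P n))
    rw [map_mul]
    simp only [mul_assoc]
    rw [← mul_assoc (star (P n)) (P n), Unitary.star_mul_self_of_mem (hPu n), one_mul]
  · intro n x; simp [map_star, star_mul, star_star, mul_assoc]
  · intro n r x; simp [map_smul, mul_smul_comm, smul_mul_assoc]
  · intro n x
    rw [CStarRing.norm_mul_mem_unitary _ (Unitary.star_mem (hPu n)),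
      CStarRing.norm_mem_unitary_mul _ (hPu n)]
    exact NonUnitalStarAlgHom.norm_apply_le ψ x
end

section
/- Let A be a C*-algebra, let a, h ∈ A be positive elements with ‖a‖ ≤ 1 and ‖h‖ ≤ 1, and let q ∈ A be a projection. Then ‖q·a − q‖ ≤ 12·‖q·h·a·h − q‖^(1/3). -/
/-!
The key point is the operator inequality `1 - a ≤ 2 (1 - h a h)` for `0 ≤ a, h ≤ 1`: writing
`1 = (1 - h) + h`, `b = 1 - a` and using
`2 (x⋆ b x + y⋆ b y) - (x + y)⋆ b (x + y) = (x - y)⋆ b (x - y) ≥ 0`, one gets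
`b ≤ 2 ((1 - h) b (1 - h) + h b h) ≤ 2 ((1 - h)² + h² - h a h) ≤ 2 (1 - h a h)`.
Compressing by `q` yields `‖q a - q‖² ≤ ‖q (1 - a) q‖ ≤ 2 ‖q (1 - h a h) q‖ ≤ 2 ‖q h a h - q‖`,
and since also `‖q a - q‖ ≤ 1` the square may be replaced by a cube. The non-unital case is
reduced to the unital one through the unitization.
-/

lemma star_left_conjugate_add_le {R : Type*} [Ring R] [PartialOrder R] [StarRing R]
    [StarOrderedRing R] {b : R} (hb : 0 ≤ b) (x y : R) :
    star (x + y) * b * (x + y) ≤ 2 * (star x * b * x + star y * b * y) := by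
  rw [← sub_nonneg]
  convert star_left_conjugate_nonneg hb (x - y) using 1
  simp only [star_add, star_sub]
  noncomm_ring

lemma IsStarProjection.norm_conj_one_sub_le {A : Type*} [NormedRing A] [StarRing A]
    [CStarRing A] {q : A} (hq : IsStarProjection q) (b : A) :
    ‖q * (1 - b) * q‖ ≤ ‖q * b - q‖ :=
  calc ‖q * (1 - b) * q‖ = ‖(q * b - q) * q‖ := by
        rw [← norm_neg, ← hq.isIdempotentElem.eq]; congr 1; noncomm_ring
    _ ≤ ‖q * b - q‖ * ‖q‖ := norm_mul_le _ _
    _ ≤ ‖q * b - q‖ := mul_le_of_le_one_right (norm_nonneg _) (hq.norm_le q)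

namespace CStarAlgebra

variable {A : Type*} [CStarAlgebra A] [PartialOrder A] [StarOrderedRing A]

lemma mul_self_le_self {h : A} (h₀ : 0 ≤ h) (h₁ : h ≤ 1) : h * h ≤ h := by
  simpa [sq] using pow_antitone h₀ h₁ (show 1 ≤ 2 by norm_num)

lemma norm_star_conj_le {x y : A} (hx : 0 ≤ x) (hxy : x ≤ y) (z : A) :
    ‖star z * x * z‖ ≤ ‖star z * y * z‖ :=
  norm_le_norm_of_nonneg_of_le (star_left_conjugate_nonneg hx z)
    (star_left_conjugate_le_conjugate hxy z)

lemma one_sub_le_two_mul_one_sub_conj {a h : A} (ha₀ : 0 ≤ a) (ha₁ : a ≤ 1) (hh₀ : 0 ≤ h)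
    (hh₁ : h ≤ 1) : 1 - a ≤ 2 * (1 - h * a * h) := by
  have hh : IsSelfAdjoint h := .of_nonneg hh₀
  have hb : (0 : A) ≤ 1 - a := sub_nonneg.mpr ha₁
  have hsplit := star_left_conjugate_add_le hb (1 - h) h
  have hconj := star_left_conjugate_le_conjugate (sub_le_self 1 ha₀) (1 - h)
  have hsq := mul_self_le_self hh₀ hh₁
  simp only [star_sub, star_one, hh.star_eq, sub_add_cancel, one_mul, mul_one] at hsplit hconj
  calc 1 - a ≤ 2 * ((1 - h) * (1 - a) * (1 - h) + h * (1 - a) * h) := hsplit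
    _ ≤ 2 * ((1 - h) * (1 - h) + h * (1 - a) * h) := by
      simp only [two_mul]
      gcongr
    _ = 2 * (1 - h * a * h) - 4 * (h - h * h) := by noncomm_ring
    _ ≤ 2 * (1 - h * a * h) := sub_le_self _ (by simpa using nsmul_nonneg (sub_nonneg.mpr hsq) 4)

end CStarAlgebra

namespace IsStarProjection

open CStarAlgebra

variable {A : Type*} [CStarAlgebra A] [PartialOrder A] [StarOrderedRing A]

lemma norm_mul_sub_self_sq_le {q a : A} (hq : IsStarProjection q) (ha₀ : 0 ≤ a)
    (ha₁ : a ≤ 1) : ‖q * a - q‖ ^ 2 ≤ ‖q * (1 - a) * q‖ := by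
  have hb₀ : (0 : A) ≤ 1 - a := sub_nonneg.mpr ha₁
  have hb₁ : 1 - a ≤ 1 := sub_le_self 1 ha₀
  have hb₂ : (0 : A) ≤ (1 - a) * (1 - a) := by
    simpa [(IsSelfAdjoint.of_nonneg hb₀).star_eq] using star_mul_self_nonneg (1 - a)
  have key := norm_star_conj_le hb₂ (mul_self_le_self hb₀ hb₁) q
  have hmul : (q * a - q) * star (q * a - q) = q * ((1 - a) * (1 - a)) * q := by
    simp only [star_sub, star_mul, (IsSelfAdjoint.of_nonneg ha₀).star_eq, hq.isSelfAdjoint.star_eq]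
    noncomm_ring
  rw [hq.isSelfAdjoint.star_eq] at key
  rwa [sq, ← CStarRing.norm_self_mul_star, hmul]

lemma norm_conj_le_one {q x : A} (hq : IsStarProjection q) (hx₀ : 0 ≤ x)
    (hx₁ : x ≤ 1) : ‖q * x * q‖ ≤ 1 := by
  have key := norm_star_conj_le hx₀ hx₁ q
  rw [hq.isSelfAdjoint.star_eq, mul_one, hq.isIdempotentElem.eq] at key
  exact key.trans (hq.norm_le q)

lemma norm_mul_sub_self_pow_three_le {q a h : A} (hq : IsStarProjection q)
    (ha₀ : 0 ≤ a) (ha₁ : a ≤ 1) (hh₀ : 0 ≤ h) (hh₁ : h ≤ 1) :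
    ‖q * a - q‖ ^ 3 ≤ 2 * ‖q * h * a * h - q‖ := by
  have hsq := hq.norm_mul_sub_self_sq_le ha₀ ha₁
  have hle := hq.norm_conj_le_one (sub_nonneg.mpr ha₁) (sub_le_self 1 ha₀)
  have hconj : ‖q * (1 - a) * q‖ ≤ 2 * ‖q * (1 - h * a * h) * q‖ := by
    have key := norm_star_conj_le (sub_nonneg.mpr ha₁)
      (one_sub_le_two_mul_one_sub_conj ha₀ ha₁ hh₀ hh₁) q
    rw [hq.isSelfAdjoint.star_eq, two_mul, mul_add, add_mul] at key
    linarith [norm_add_le (q * (1 - h * a * h) * q) (q * (1 - h * a * h) * q)]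
  have hε := hq.norm_conj_one_sub_le (h * a * h)
  simp only [← mul_assoc] at hε
  nlinarith [norm_nonneg (q * a - q)]

end IsStarProjection

lemma IsStarProjection.norm_mul_sub_self_pow_three_le_of_norm_le_one {A : Type*}
    [NonUnitalCStarAlgebra A] [PartialOrder A] [StarOrderedRing A] {q a h : A}
    (hq : IsStarProjection q) (ha₀ : 0 ≤ a) (ha₁ : ‖a‖ ≤ 1) (hh₀ : 0 ≤ h) (hh₁ : ‖h‖ ≤ 1) :
    ‖q * a - q‖ ^ 3 ≤ 2 * ‖q * h * a * h - q‖ := by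
  have hinr {x : A} (hx₀ : 0 ≤ x) (hx₁ : ‖x‖ ≤ 1) :
      (0 : Unitization ℂ A) ≤ x ∧ (x : Unitization ℂ A) ≤ 1 :=
    ⟨Unitization.inr_nonneg_iff.mpr hx₀,
      (CStarAlgebra.norm_le_one_iff_of_nonneg _ (Unitization.inr_nonneg_iff.mpr hx₀)).mp
        (by rwa [Unitization.norm_inr])⟩
  have key := (hq.map (Unitization.inrNonUnitalStarAlgHom ℂ A)).norm_mul_sub_self_pow_three_le
    (hinr ha₀ ha₁).1 (hinr ha₀ ha₁).2 (hinr hh₀ hh₁).1 (hinr hh₀ hh₁).2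
  simpa only [Unitization.inrNonUnitalStarAlgHom_apply, ← Unitization.inr_mul,
    ← Unitization.inr_sub, Unitization.norm_inr] using key

lemma le_two_mul_rpow_one_third_of_pow_three_le {x ε : ℝ} (hx : 0 ≤ x) (h : x ^ 3 ≤ 2 * ε) :
    x ≤ 2 * ε ^ ((1 : ℝ) / 3) := by
  have hε : 0 ≤ ε := by nlinarith [pow_nonneg hx 3]
  have hroot : x ≤ (2 * ε) ^ (3 : ℝ)⁻¹ :=
    (Real.le_rpow_inv_iff_of_pos hx (by positivity) (by norm_num)).mpr (by exact_mod_cast h)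
  calc x ≤ 2 ^ (3 : ℝ)⁻¹ * ε ^ ((1 : ℝ) / 3) := by
        rwa [one_div, ← Real.mul_rpow zero_le_two hε]
    _ ≤ 2 * ε ^ ((1 : ℝ) / 3) := by
        gcongr
        exact Real.rpow_le_self_of_one_le one_le_two (by norm_num)

/-- Let `A` be a C*-algebra, `a, h ∈ A` positive with `‖a‖ ≤ 1`, `‖h‖ ≤ 1`,
and let `q ∈ A` be a projection.  Then `‖q·a − q‖ ≤ 12·‖q·h·a·h − q‖^(1/3)`. -/
theorem stmt_2 {A : Type*} [NonUnitalNormedRing A] [StarRing A] [CStarRing A]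
    [CompleteSpace A] [NormedSpace ℂ A] [IsScalarTower ℂ A A] [SMulCommClass ℂ A A]
    [StarModule ℂ A]
    (a h q : A) (ha : ∃ x : A, a = star x * x) (hh : ∃ x : A, h = star x * x)
    (hna : ‖a‖ ≤ 1) (hnh : ‖h‖ ≤ 1)
    (hq_sa : IsSelfAdjoint q) (hq_idem : q * q = q) :
    ‖q * a - q‖ ≤ 12 * ‖q * h * a * h - q‖ ^ ((1 : ℝ) / 3) := by
  let _ : NonUnitalCStarAlgebra A := {}
  let _ : PartialOrder A := CStarAlgebra.spectralOrder A
  have _ : StarOrderedRing A := CStarAlgebra.spectralOrderedRing A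
  obtain ⟨x, rfl⟩ := ha
  obtain ⟨y, rfl⟩ := hh
  have hcube := IsStarProjection.norm_mul_sub_self_pow_three_le_of_norm_le_one
    ⟨hq_idem, hq_sa⟩ (star_mul_self_nonneg x) hna (star_mul_self_nonneg y) hnh
  refine (le_two_mul_rpow_one_third_of_pow_three_le (norm_nonneg _) hcube).trans ?_
  gcongr
  norm_num
end

section
/- Let H be a complex Hilbert space, let b be a bounded linear operator on H with 0 ≤ b ≤ 1 (b positive of norm at most 1), and let η ∈ H be a unit vector. Then ‖b·η − η‖ ≤ 4·(1 − ‖b·η‖)^(1/3). -/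
/-!
Testing positivity of `b` on `η - bη` and using `‖b‖ ≤ 1` gives `‖bη‖² ≤ re ⟪bη, η⟫`, i.e.
`b² ≤ b` on `η`. Expanding the square then yields `‖bη - η‖² ≤ 1 - ‖bη‖² ≤ 2 (1 - ‖bη‖)`,
and `√(2x) ≤ 4 x^(1/3)` for `0 ≤ x ≤ 1`.
-/

open scoped InnerProductSpace

namespace ContinuousLinearMap

variable {𝕜 E : Type*} [RCLike 𝕜] [NormedAddCommGroup E] [InnerProductSpace 𝕜 E]

theorem IsPositive.norm_apply_sq_le_re_inner {T : E →L[𝕜] E} (hT : T.IsPositive) (hT1 : ‖T‖ ≤ 1)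
    (x : E) : ‖T x‖ ^ 2 ≤ RCLike.re ⟪T x, x⟫_𝕜 := by
  have hpos : 0 ≤ RCLike.re ⟪T (x - T x), x - T x⟫_𝕜 := hT.re_inner_nonneg_left _
  have hsymm : ⟪T (T x), x⟫_𝕜 = ⟪T x, T x⟫_𝕜 := hT.inner_left_eq_inner_right _ _
  have hT2 : RCLike.re ⟪T (T x), T x⟫_𝕜 ≤ ‖T x‖ ^ 2 :=
    calc RCLike.re ⟪T (T x), T x⟫_𝕜 ≤ ‖T (T x)‖ * ‖T x‖ := re_inner_le_norm _ _
      _ ≤ ‖T‖ * ‖T x‖ * ‖T x‖ := by gcongr; exact T.le_opNorm _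
      _ ≤ ‖T x‖ ^ 2 := by nlinarith [norm_nonneg (T x)]
  have hexpand : RCLike.re ⟪T (x - T x), x - T x⟫_𝕜
      = RCLike.re ⟪T x, x⟫_𝕜 - 2 * ‖T x‖ ^ 2 + RCLike.re ⟪T (T x), T x⟫_𝕜 := by
    rw [map_sub, inner_sub_left, inner_sub_right, inner_sub_right, hsymm]
    simp only [map_sub, inner_self_eq_norm_sq]
    ring
  linarith

theorem IsPositive.norm_sub_apply_sq_le {T : E →L[𝕜] E} (hT : T.IsPositive) (hT1 : ‖T‖ ≤ 1)
    {x : E} (hx : ‖x‖ = 1) : ‖T x - x‖ ^ 2 ≤ 2 * (1 - ‖T x‖) := by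
  have hTx : ‖T x‖ ≤ 1 := by simpa [hx] using T.le_of_opNorm_le hT1 x
  have hsq := norm_sub_sq (𝕜 := 𝕜) (T x) x
  rw [hx] at hsq
  nlinarith [hT.norm_apply_sq_le_re_inner hT1 x, norm_nonneg (T x)]

end ContinuousLinearMap

theorem Real.le_two_mul_rpow_one_third_of_sq_le {x y : ℝ} (hx0 : 0 ≤ x) (hx1 : x ≤ 1)
    (hy : y ^ 2 ≤ 2 * x) : y ≤ 2 * x ^ ((1 : ℝ) / 3) := by
  have hsqrt2 : √2 ≤ 2 := by
    rw [Real.sqrt_le_left (by norm_num)]; norm_num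
  have hsqrt : √x ≤ x ^ ((1 : ℝ) / 3) := by
    rw [Real.sqrt_eq_rpow]
    exact Real.rpow_le_rpow_of_exponent_ge' hx0 hx1 (by norm_num) (by norm_num)
  calc y ≤ √(2 * x) := Real.le_sqrt_of_sq_le hy
    _ = √2 * √x := Real.sqrt_mul (by norm_num) x
    _ ≤ 2 * x ^ ((1 : ℝ) / 3) := mul_le_mul hsqrt2 hsqrt (Real.sqrt_nonneg x) (by norm_num)

theorem stmt_3_general {H : Type*} [NormedAddCommGroup H] [InnerProductSpace ℂ H]
    (b : H →L[ℂ] H) (hb : b.IsPositive) (hbnorm : ‖b‖ ≤ 1)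
    (η : H) (hη : ‖η‖ = 1) :
    ‖b η - η‖ ≤ 4 * (1 - ‖b η‖) ^ ((1 : ℝ) / 3) := by
  have hbη : ‖b η‖ ≤ 1 := by simpa [hη] using b.le_of_opNorm_le hbnorm η
  have h := Real.le_two_mul_rpow_one_third_of_sq_le (by linarith) (by linarith [norm_nonneg (b η)])
    (hb.norm_sub_apply_sq_le hbnorm hη)
  linarith [Real.rpow_nonneg (sub_nonneg.mpr hbη) ((1 : ℝ) / 3)]

/-- Let `H` be a complex Hilbert space, `b` a bounded operator on `H` with
`0 ≤ b ≤ 1` (positive of norm at most one), and `η ∈ H` a unit vector.  Then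
`‖b·η − η‖ ≤ 4·(1 − ‖b·η‖)^(1/3)`. -/
theorem stmt_3 {H : Type*} [NormedAddCommGroup H] [InnerProductSpace ℂ H] [CompleteSpace H]
    (b : H →L[ℂ] H) (hb : b.IsPositive) (hbnorm : ‖b‖ ≤ 1)
    (η : H) (hη : ‖η‖ = 1) :
    ‖b η - η‖ ≤ 4 * (1 - ‖b η‖) ^ ((1 : ℝ) / 3) :=
  stmt_3_general b hb hbnorm η hη
end

section
/- Let A be a unital C*-algebra and let T : M_n(ℂ) → A be a unital completely positive map. Then there exists a partial isometry t in the C*-algebra M_n(M_n(A)) of n×n matrices over n×n matrices over A such that: t*·t is the matrix whose ((1,1),(1,1)) entry is 1_A and all other entries are 0; and for every b ∈ M_n(ℂ), t*·(b⊗1⊗1)·t is the matrix whose ((1,1),(1,1)) entry is T(b) and all other entries are 0. Here b⊗1⊗1 denotes the element of M_n(M_n(A)) whose entry at position ((i,k),(j,l)) is b_{ij}·δ_{kl}·1_A. -/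
/-- A square matrix over a ∗-ring is positive if it is of the form `Yᴴ·Y`.
(In a C*-algebra this is the usual notion of positivity.) -/
def MatPos {R : Type*} [NonUnitalSemiring R] [StarRing R] {k : ℕ}
    (X : Matrix (Fin k) (Fin k) R) : Prop :=
  ∃ Y : Matrix (Fin k) (Fin k) R, X = star Y * Y

/-- A linear map between C*-algebras is completely positive if all of its entrywise
amplifications to matrix algebras map positive matrices to positive matrices. -/
def IsCP {A B : Type*} [NonUnitalSemiring A] [StarRing A] [Module ℂ A]
    [NonUnitalSemiring B] [StarRing B] [Module ℂ B] (T : A →ₗ[ℂ] B) : Prop :=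
  ∀ (k : ℕ) (X : Matrix (Fin k) (Fin k) A), MatPos X → MatPos (X.map fun x => T x)

/-! Complete positivity, applied to the positive matrix `[e_ij]` of matrix units, factors the
Choi matrix `[T e_ij]` as `W*·W`. Let `t` be the matrix whose only nonzero column sits at index
`(0,0)` and has entry `W k i` at row `(i,k)`. Then the corner of `t*·(b ⊗ 1)·t` is
`∑ b_ij (W*·W)_ij = ∑ b_ij T(e_ij) = T b`, and `b = 1` gives `t*·t`. -/

open Matrix

section MatrixUnits

variable {R : Type*} [Semiring R] [StarRing R] {n : ℕ}

theorem matPos_matrixUnits (z : Fin n) :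
    MatPos (Matrix.of fun i j : Fin n => single i j (1 : R)) := by
  classical
  refine ⟨Matrix.of fun k j => if k = z then single z j 1 else 0, ?_⟩
  ext i j : 1
  rw [mul_apply, Finset.sum_eq_single z (fun k _ hk => by simp [hk]) (by simp)]
  simp [star_eq_conjTranspose, single_mul_single_same]

end MatrixUnits

section Choi

variable {B : Type*} {n : ℕ}

def choiMatrix [AddCommMonoid B] [Module ℂ B] (T : Matrix (Fin n) (Fin n) ℂ →ₗ[ℂ] B) :
    Matrix (Fin n) (Fin n) B :=
  Matrix.of fun i j => T (single i j 1)

theorem apply_eq_sum_smul_choiMatrix [AddCommMonoid B] [Module ℂ B]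
    (T : Matrix (Fin n) (Fin n) ℂ →ₗ[ℂ] B) (b : Matrix (Fin n) (Fin n) ℂ) :
    T b = ∑ i, ∑ j, b i j • choiMatrix T i j := by
  conv_lhs => rw [matrix_eq_sum_single b]
  simp [choiMatrix, ← map_smul, smul_single]

theorem IsCP.matPos_choiMatrix [Semiring B] [StarRing B] [Module ℂ B]
    {T : Matrix (Fin n) (Fin n) ℂ →ₗ[ℂ] B} (hT : IsCP T) (hn : 0 < n) :
    MatPos (choiMatrix T) :=
  hT n _ (matPos_matrixUnits ⟨0, hn⟩)

end Choi

section ColumnMatrix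

variable {κ B : Type*} [Fintype κ] [DecidableEq κ] [Semiring B] [StarRing B]

def colMatrix (c : κ) (v : κ → B) : Matrix κ κ B :=
  Matrix.of fun p q => if q = c then v p else 0

theorem star_colMatrix_mul_mul (c : κ) (v : κ → B) (M : Matrix κ κ B) :
    star (colMatrix c v) * M * colMatrix c v = single c c (star v ⬝ᵥ M *ᵥ v) := by
  ext q q'
  by_cases hq : q = c
  · by_cases hq' : q' = c
    · subst hq hq'
      simp only [colMatrix, mul_apply, star_apply, of_apply, ↓reduceIte, Finset.sum_mul, mul_assoc,
        dotProduct, Pi.star_apply, mulVec, Finset.mul_sum, single_apply_same]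
      exact Finset.sum_comm
    · simp [colMatrix, mul_apply, hq', Ne.symm hq']
  · simp [colMatrix, mul_apply, star_eq_conjTranspose, hq, Ne.symm hq]

end ColumnMatrix

section TensorOne

variable {ι A : Type*} [DecidableEq ι] [Semiring A] [Algebra ℂ A]

def tensorOne (b : Matrix ι ι ℂ) : Matrix (ι × ι) (ι × ι) A :=
  Matrix.of fun p q => if p.2 = q.2 then b p.1 q.1 • (1 : A) else 0

theorem tensorOne_one : tensorOne (1 : Matrix ι ι ℂ) = (1 : Matrix (ι × ι) (ι × ι) A) := by
  ext p q
  simp only [tensorOne, one_apply, ite_smul, one_smul, zero_smul, of_apply, Prod.ext_iff]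
  split_ifs <;> simp_all

theorem star_dotProduct_tensorOne_mulVec [Fintype ι] [StarRing A] (W : Matrix ι ι A)
    (b : Matrix ι ι ℂ) :
    star (fun p : ι × ι => W p.2 p.1) ⬝ᵥ tensorOne b *ᵥ (fun p => W p.2 p.1)
      = ∑ i, ∑ j, b i j • (star W * W) i j := by
  simp only [dotProduct, Pi.star_apply, mulVec, tensorOne, of_apply, ite_mul,
    Algebra.smul_mul_assoc, one_mul, zero_mul, Fintype.sum_prod_type, Finset.sum_ite_eq,
    Finset.mem_univ, ↓reduceIte, Finset.mul_sum, Algebra.mul_smul_comm, mul_apply, star_apply,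
    Finset.smul_sum]
  exact Finset.sum_congr rfl fun i _ => Finset.sum_comm

end TensorOne

theorem stmt_8_general {A : Type*} [NormedRing A] [StarRing A]
    [NormedAlgebra ℂ A]
    (n : ℕ) (hn : 0 < n)
    (T : Matrix (Fin n) (Fin n) ℂ →ₗ[ℂ] A) (hT1 : T 1 = 1) (hTcp : IsCP T) :
    ∃ t : Matrix (Fin n × Fin n) (Fin n × Fin n) A,
      star t * t
        = Matrix.single ((⟨0, hn⟩ : Fin n), (⟨0, hn⟩ : Fin n))
            ((⟨0, hn⟩ : Fin n), (⟨0, hn⟩ : Fin n)) (1 : A) ∧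
      ∀ b : Matrix (Fin n) (Fin n) ℂ,
        star t * (Matrix.of fun p q : Fin n × Fin n =>
            if p.2 = q.2 then b p.1 q.1 • (1 : A) else 0) * t
          = Matrix.single ((⟨0, hn⟩ : Fin n), (⟨0, hn⟩ : Fin n))
              ((⟨0, hn⟩ : Fin n), (⟨0, hn⟩ : Fin n)) (T b) := by
  obtain ⟨W, hW⟩ := hTcp.matPos_choiMatrix hn
  set z : Fin n := ⟨0, hn⟩
  let t := colMatrix (z, z) fun p : Fin n × Fin n => W p.2 p.1
  have compress (b : Matrix (Fin n) (Fin n) ℂ) :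
      star t * tensorOne b * t = single (z, z) (z, z) (T b) := by
    rw [star_colMatrix_mul_mul, star_dotProduct_tensorOne_mulVec, ← hW,
      ← apply_eq_sum_smul_choiMatrix]
  refine ⟨t, ?_, compress⟩
  simpa only [tensorOne_one, mul_one, hT1] using compress 1

/-- Let `A` be a unital C*-algebra and `T : M_n(ℂ) → A` unital completely
positive.  Then there is a partial isometry `t ∈ M_n(M_n(A))` with
`t*·t = e_{(1,1),(1,1)} ⊗ 1` and `t*·(b ⊗ 1 ⊗ 1)·t = e_{(1,1),(1,1)} ⊗ T(b)` for all
`b ∈ M_n(ℂ)`. -/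
theorem stmt_8 {A : Type*} [NormedRing A] [StarRing A] [CStarRing A] [CompleteSpace A]
    [NormedAlgebra ℂ A] [StarModule ℂ A]
    (n : ℕ) (hn : 0 < n)
    (T : Matrix (Fin n) (Fin n) ℂ →ₗ[ℂ] A) (hT1 : T 1 = 1) (hTcp : IsCP T) :
    ∃ t : Matrix (Fin n × Fin n) (Fin n × Fin n) A,
      star t * t
        = Matrix.single ((⟨0, hn⟩ : Fin n), (⟨0, hn⟩ : Fin n))
            ((⟨0, hn⟩ : Fin n), (⟨0, hn⟩ : Fin n)) (1 : A) ∧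
      ∀ b : Matrix (Fin n) (Fin n) ℂ,
        star t * (Matrix.of fun p q : Fin n × Fin n =>
            if p.2 = q.2 then b p.1 q.1 • (1 : A) else 0) * t
          = Matrix.single ((⟨0, hn⟩ : Fin n), (⟨0, hn⟩ : Fin n))
              ((⟨0, hn⟩ : Fin n), (⟨0, hn⟩ : Fin n)) (T b) :=
  stmt_8_general n hn T hT1 hTcp
end

section
/- Let A be a unital C*-algebra, let u ∈ A be a unitary, and let s ∈ A be an isometry with range projection e = s·s*. Then for every unitary v ∈ A, ‖u − (e·u·e + (1−e)·u·(1−e))‖ ≤ (2·‖s*·u·s − v‖)^(1/2). -/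
/-!
With `e = s s*`, the difference `u - (e u e + (1 - e) u (1 - e))` is the off-diagonal part
`e u (1 - e) + (1 - e) u e`. Its two corners have orthogonal ranges and supports, so its norm is
the larger of theirs. Since `(1 - e) s = 0`, the corner `(1 - e) u e` equals
`(1 - e) (u s - s v) s*`, and with `t = s* u s` the C*-identity gives
`‖u s - s v‖² = ‖(v - t)* v + v* (v - t)‖ ≤ 2 ‖t - v‖`. The other corner is the adjoint of the
same corner for `u*` and `v*`.
-/

lemma isStarProjection_mul_star_of_star_mul_self {R : Type*} [Monoid R] [StarMul R] {s : R}
    (hs : star s * s = 1) :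
    IsStarProjection (s * star s) where
  isIdempotentElem := by
    rw [IsIdempotentElem, mul_assoc, ← mul_assoc (star s), hs, one_mul]
  isSelfAdjoint := IsSelfAdjoint.mul_star_self s

section CStarRing

variable {A : Type*} [NormedRing A] [StarRing A] [CStarRing A]

lemma norm_le_one_of_star_mul_self {s : A} (hs : star s * s = 1) : ‖s‖ ≤ 1 := by
  have h : ‖s‖ * ‖s‖ ≤ 1 := by
    rw [← CStarRing.norm_star_mul_self, hs]
    exact (IsStarProjection.one (R := A)).norm_le
  nlinarith [norm_nonneg s]

lemma sq_norm_mul_sub_mul_le {s u v : A} (hs : star s * s = 1) (hu : star u * u = 1)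
    (hv : v ∈ unitary A) : ‖u * s - s * v‖ ^ 2 ≤ 2 * ‖star s * u * s - v‖ := by
  set t := star s * u * s
  have hv' : star v * v = 1 := Unitary.star_mul_self_of_mem hv
  have key : star (u * s - s * v) * (u * s - s * v) = star (v - t) * v + star v * (v - t) := by
    have h₁ : star s * star u * (u * s) = 1 := by
      rw [mul_assoc, ← mul_assoc (star u), hu, one_mul, hs]
    have h₂ : star v * star s * (s * v) = 1 := by
      rw [mul_assoc, ← mul_assoc (star s), hs, one_mul, hv']
    calc star (u * s - s * v) * (u * s - s * v)
        = star s * star u * (u * s) - star t * v - star v * t + star v * star s * (s * v) := by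
          simp only [t, star_sub, star_mul, star_star]; noncomm_ring
      _ = star (v - t) * v + star v * (v - t) := by
          rw [h₁, h₂, star_sub, sub_mul, mul_sub, hv']; abel
  calc ‖u * s - s * v‖ ^ 2 = ‖star (v - t) * v + star v * (v - t)‖ := by
        rw [← key, CStarRing.norm_star_mul_self, sq]
    _ ≤ ‖star (v - t) * v‖ + ‖star v * (v - t)‖ := norm_add_le _ _
    _ = 2 * ‖t - v‖ := by
        rw [CStarRing.norm_mul_mem_unitary _ hv, norm_star,
          CStarRing.norm_mem_unitary_mul _ (Unitary.star_mem hv), norm_sub_rev]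
        ring

lemma norm_one_sub_mul_mul_le {s u v : A} (hs : star s * s = 1) (hu : star u * u = 1)
    (hv : v ∈ unitary A) :
    ‖(1 - s * star s) * u * (s * star s)‖ ≤ √(2 * ‖star s * u * s - v‖) := by
  have hp := (isStarProjection_mul_star_of_star_mul_self hs).one_sub
  have hcorner : (1 - s * star s) * u * (s * star s)
      = (1 - s * star s) * (u * s - s * v) * star s := by
    have hes : (1 - s * star s) * s = 0 := by
      rw [sub_mul, one_mul, mul_assoc, hs, mul_one, sub_self]
    rw [mul_sub, ← mul_assoc _ s v, hes, zero_mul, sub_zero]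
    simp only [mul_assoc]
  refine Real.le_sqrt_of_sq_le ((pow_le_pow_left₀ (norm_nonneg _) ?_ 2).trans
    (sq_norm_mul_sub_mul_le hs hu hv))
  calc ‖(1 - s * star s) * u * (s * star s)‖
      ≤ ‖1 - s * star s‖ * ‖u * s - s * v‖ * ‖star s‖ := by
        rw [hcorner]; exact norm_mul₃_le
    _ ≤ 1 * ‖u * s - s * v‖ * 1 := by
        gcongr
        · exact hp.norm_le
        · rw [norm_star]; exact norm_le_one_of_star_mul_self hs
    _ = ‖u * s - s * v‖ := by ring

lemma norm_mul_mul_one_sub_le {s u v : A} (hs : star s * s = 1) (hu : u * star u = 1)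
    (hv : v ∈ unitary A) :
    ‖s * star s * u * (1 - s * star s)‖ ≤ √(2 * ‖star s * u * s - v‖) := by
  have h := norm_one_sub_mul_mul_le hs (u := star u) (v := star v) (by rwa [star_star])
    (Unitary.star_mem hv)
  have hstar : star (s * star s * u * (1 - s * star s))
      = (1 - s * star s) * star u * (s * star s) := by
    simp only [star_mul, star_sub, star_one, star_star, mul_assoc]
  have hdefect : star s * star u * s - star v = star (star s * u * s - v) := by
    simp only [star_sub, star_mul, star_star, mul_assoc]
  rwa [hdefect, norm_star, ← hstar, norm_star] at h

end CStarRing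

section CStarAlgebra

variable {A : Type*} [CStarAlgebra A] [PartialOrder A] [StarOrderedRing A]

lemma IsStarProjection.star_mul_self_le {p x : A} (hp : IsStarProjection p) (hx : x * p = x) :
    star x * x ≤ ‖x‖ ^ 2 • p := by
  calc star x * x = star p * (star x * x) * p := by
        conv_lhs => rw [← hx, star_mul]
        simp only [mul_assoc]
    _ ≤ ‖star x * x‖ • (star p * p) := CStarAlgebra.star_left_conjugate_le_norm_smul
    _ = ‖x‖ ^ 2 • p := by
        rw [CStarRing.norm_star_mul_self, ← sq, hp.isSelfAdjoint.star_eq, hp.isIdempotentElem.eq]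

lemma IsStarProjection.norm_add_le_max {p x y : A} (hp : IsStarProjection p) (hx : x * p = x)
    (hy : y * p = 0) (hxy : star x * y = 0) : ‖x + y‖ ≤ max ‖x‖ ‖y‖ := by
  set r := max ‖x‖ ‖y‖
  have hy' : y * (1 - p) = y := by rw [mul_sub, mul_one, hy, sub_zero]
  have hyx : star y * x = 0 := by rw [← star_star x, ← star_mul, hxy, star_zero]
  have hsq : star (x + y) * (x + y) ≤ algebraMap ℝ A (r ^ 2) :=
    calc star (x + y) * (x + y) = star x * x + star y * y := by
          rw [star_add, add_mul, mul_add, mul_add, hxy, hyx, add_zero, zero_add]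
      _ ≤ r ^ 2 • p + r ^ 2 • (1 - p) := by
          gcongr
          · exact (hp.star_mul_self_le hx).trans (smul_le_smul_of_nonneg_right
              (pow_le_pow_left₀ (norm_nonneg _) (le_max_left _ _) 2) hp.nonneg)
          · exact (hp.one_sub.star_mul_self_le hy').trans (smul_le_smul_of_nonneg_right
              (pow_le_pow_left₀ (norm_nonneg _) (le_max_right _ _) 2) hp.one_sub.nonneg)
      _ = algebraMap ℝ A (r ^ 2) := by
          rw [← smul_add, add_sub_cancel, Algebra.algebraMap_eq_smul_one]
  have hr : 0 ≤ r := (norm_nonneg x).trans (le_max_left _ _)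
  have hnorm := (CStarAlgebra.norm_le_iff_le_algebraMap _ (by positivity)
    (star_mul_self_nonneg (x + y))).mpr hsq
  rw [CStarRing.norm_star_mul_self, ← sq] at hnorm
  exact le_of_pow_le_pow_left₀ two_ne_zero hr hnorm

lemma IsStarProjection.norm_sub_pinching_le_max {p : A} (hp : IsStarProjection p) (a : A) :
    ‖a - (p * a * p + (1 - p) * a * (1 - p))‖ ≤ max ‖p * a * (1 - p)‖ ‖(1 - p) * a * p‖ := by
  have hoff : a - (p * a * p + (1 - p) * a * (1 - p)) = p * a * (1 - p) + (1 - p) * a * p := by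
    noncomm_ring
  rw [hoff]
  refine hp.one_sub.norm_add_le_max ?_ ?_ ?_
  · rw [mul_assoc, hp.one_sub.isIdempotentElem.eq]
  · rw [mul_assoc, hp.mul_one_sub_self, mul_zero]
  · have hq : star (1 - p) = 1 - p := hp.one_sub.isSelfAdjoint.star_eq
    calc star (p * a * (1 - p)) * ((1 - p) * a * p)
        = (1 - p) * star a * (p * (1 - p)) * a * p := by
          simp only [star_mul, hq, hp.isSelfAdjoint.star_eq, mul_assoc]
      _ = 0 := by rw [hp.mul_one_sub_self, mul_zero, zero_mul, zero_mul]

end CStarAlgebra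

/-- Let `u` be a unitary and `s` an isometry with range projection
`e = s·s*` in a unital C*-algebra.  Then for every unitary `v`,
`‖u − (e·u·e + (1−e)·u·(1−e))‖ ≤ (2·‖s*·u·s − v‖)^(1/2)`. -/
theorem stmt_13 {A : Type*} [NormedRing A] [StarRing A] [CStarRing A] [CompleteSpace A]
    [NormedAlgebra ℂ A] [StarModule ℂ A]
    (u s : A) (hu : u ∈ unitary A) (hs : star s * s = 1)
    (e : A) (he : e = s * star s)
    (v : A) (hv : v ∈ unitary A) :
    ‖u - (e * u * e + (1 - e) * u * (1 - e))‖ ≤ Real.sqrt (2 * ‖star s * u * s - v‖) := by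
  let _ : CStarAlgebra A := {}
  let _ := CStarAlgebra.spectralOrder A
  have _ := CStarAlgebra.spectralOrderedRing A
  subst he
  exact ((isStarProjection_mul_star_of_star_mul_self hs).norm_sub_pinching_le_max u).trans
    (max_le (norm_mul_mul_one_sub_le hs (Unitary.mul_star_self_of_mem hu) hv)
      (norm_one_sub_mul_mul_le hs (Unitary.star_mul_self_of_mem hu) hv))
end

section
/- Let A be a unital C*-algebra, let s, t ∈ A be isometries, and let s₁, s₂ ∈ A be isometries satisfying the Cuntz relation s₁·s₁* + s₂·s₂* = 1 and commuting with s and t together with their adjoints (s_i·s = s·s_i, s_i*·s = s·s_i*, s_i·t = t·s_i, s_i*·t = t·s_i* for i = 1, 2). Then there exists a unitary z ∈ A (depending only on s, t, s₁, s₂) such that whenever u and v are unitaries in A commuting with s₁, s₂, s₁* and s₂*, one has ‖z*·u·z − v‖ ≤ 11·( max(‖s*·u·s − v‖, ‖t*·v·t − u‖) )^(1/2). -/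
set_option linter.unusedVariables false
set_option linter.unusedSectionVars false
set_option maxHeartbeats 1000000

namespace Stmt14

variable {A : Type*}

section RingPart
variable [Ring A] [StarRing A]

/-- triangular Cuntz-matrix unitary built from the Cuntz pair `s₁, s₂` and an isometry `x` -/
def zuW (s₁ s₂ x : A) : A :=
  s₁ * x * star s₁ + s₁ * star s₂ - s₁ * x * star x * star s₂ + s₂ * star x * star s₂

/-- `(1 - x x*) y (1 - x x*) + x y x*` -/
def mmW (x y : A) : A :=
  y - y * x * star x - x * star x * y + x * star x * y * x * star x + x * y * star x

/-- diagonal part of the conjugation of `y` by `zuW s₁ s₂ x` -/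
def nnW (s₁ s₂ x y z : A) : A := s₁ * z * star s₁ + s₂ * (mmW x y) * star s₂

/-- error part of the conjugation of `y` by `zuW s₁ s₂ x` -/
def eeW (s₁ s₂ x y z : A) : A :=
  s₁ * (star x * y * x - z) * star s₁ +
    (s₁ * (star x * y - star x * y * x * star x) * star s₂ +
      s₂ * (y * x - x * star x * y * x) * star s₁)

/-- corner-localized unitary -/
def wbW (s₁ s₂ X : A) : A := s₁ * X * star s₁ + s₂ * star s₂

/-- the exact slot-permutation unitary -/
def piW (s₁ s₂ s t : A) : A :=
  s₁ * s₂ * s * s₁ * star s₁ * star s₁ + s₁ * s₂ * s * s₂ * star s * star s₂ +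
    s₁ * s₁ * star s₁ * star t * star s₂ * star s₁ +
    s₂ * t * star s₂ * star t * star s₂ * star s₁ +
    (s₂ * star s₂ * star s₁ - s₂ * t * star t * star s₂ * star s₁) +
    (s₁ * s₂ * star s₂ - s₁ * s₂ * s * star s * star s₂)

theorem mass (x g : A) (h : x * g = g * x) (y : A) : x * (g * y) = g * (x * y) := by
  rw [← mul_assoc, h, mul_assoc]

theorem red1 (x y : A) (h : x * y = 1) (z : A) : x * (y * z) = z := by
  rw [← mul_assoc, h, one_mul]

theorem red0 (x y : A) (h : x * y = 0) (z : A) : x * (y * z) = 0 := by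
  rw [← mul_assoc, h, zero_mul]

theorem czpair (s₁ s₂ : A) (h : s₁ * star s₁ + s₂ * star s₂ = 1) :
    s₂ * star s₂ = 1 - s₁ * star s₁ := by rw [← h]; abel

theorem redc (s₁ s₂ : A) (h : s₁ * star s₁ + s₂ * star s₂ = 1) (y : A) :
    s₂ * (star s₂ * y) = y - s₁ * (star s₁ * y) := by
  rw [← mul_assoc, czpair s₁ s₂ h, sub_mul, one_mul, mul_assoc]

theorem commSG {x g : A} (h : x * star g = star g * x) : star x * g = g * star x := by
  have h2 := congrArg star h; simp only [star_mul, star_star] at h2; exact h2.symm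

theorem commSS {x g : A} (h : x * g = g * x) : star x * star g = star g * star x := by
  have h2 := congrArg star h; simp only [star_mul, star_star] at h2; exact h2.symm

theorem cuntz_orth12 (s₁ s₂ : A) (h11 : star s₁ * s₁ = 1) (h22 : star s₂ * s₂ = 1)
    (hcz : s₁ * star s₁ + s₂ * star s₂ = 1) : star s₁ * s₂ = 0 := by
  have h := congrArg (fun w => star s₁ * w * s₂) hcz
  simp only [add_mul, mul_add, mul_one, one_mul] at h
  have h2 : star s₁ * s₁ * (star s₁ * s₂) + star s₁ * s₂ * (star s₂ * s₂) = star s₁ * s₂ := by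
    calc star s₁ * s₁ * (star s₁ * s₂) + star s₁ * s₂ * (star s₂ * s₂)
        = star s₁ * (s₁ * star s₁) * s₂ + star s₁ * (s₂ * star s₂) * s₂ := by noncomm_ring
      _ = star s₁ * s₂ := h
  rw [h11, h22, one_mul, mul_one] at h2
  have h3 : star s₁ * s₂ + star s₁ * s₂ = 0 + star s₁ * s₂ := by rw [zero_add]; exact h2
  exact add_right_cancel h3

theorem zuU1 (s₁ s₂ x : A)
    (h11 : star s₁ * s₁ = 1) (h22 : star s₂ * s₂ = 1)
    (h12 : star s₁ * s₂ = 0) (h21 : star s₂ * s₁ = 0)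
    (hcz : s₁ * star s₁ + s₂ * star s₂ = 1)
    (hx : star x * x = 1)
    (c1 : x * s₁ = s₁ * x) (c2 : x * s₂ = s₂ * x)
    (c1' : x * star s₁ = star s₁ * x) (c2' : x * star s₂ = star s₂ * x) :
    star (zuW s₁ s₂ x) * zuW s₁ s₂ x = 1 := by
  have C1 : star x * s₁ = s₁ * star x := commSG c1'
  have C2 : star x * s₂ = s₂ * star x := commSG c2'
  have C1' : star x * star s₁ = star s₁ * star x := commSS c1
  have C2' : star x * star s₂ = star s₂ * star x := commSS c2
  simp only [zuW, mul_add, add_mul, mul_sub, sub_mul, mul_assoc, mul_one, one_mul,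
    mul_zero, zero_mul, sub_zero, zero_sub, add_zero, zero_add, star_mul, star_add,
    star_sub, star_star, star_one, star_zero, neg_mul, mul_neg, neg_neg,
    h11, h22, h12, h21, hx,
    red1 _ _ h11, red1 _ _ h22, red1 _ _ hx,
    red0 _ _ h12, red0 _ _ h21,
    czpair s₁ s₂ hcz, redc s₁ s₂ hcz,
    c1, c2, c1', c2', C1, C2, C1', C2',
    mass _ _ c1, mass _ _ c2, mass _ _ c1', mass _ _ c2',
    mass _ _ C1, mass _ _ C2, mass _ _ C1', mass _ _ C2']
  abel

theorem zuU2 (s₁ s₂ x : A)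
    (h11 : star s₁ * s₁ = 1) (h22 : star s₂ * s₂ = 1)
    (h12 : star s₁ * s₂ = 0) (h21 : star s₂ * s₁ = 0)
    (hcz : s₁ * star s₁ + s₂ * star s₂ = 1)
    (hx : star x * x = 1)
    (c1 : x * s₁ = s₁ * x) (c2 : x * s₂ = s₂ * x)
    (c1' : x * star s₁ = star s₁ * x) (c2' : x * star s₂ = star s₂ * x) :
    zuW s₁ s₂ x * star (zuW s₁ s₂ x) = 1 := by
  have C1 : star x * s₁ = s₁ * star x := commSG c1'
  have C2 : star x * s₂ = s₂ * star x := commSG c2'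
  have C1' : star x * star s₁ = star s₁ * star x := commSS c1
  have C2' : star x * star s₂ = star s₂ * star x := commSS c2
  simp only [zuW, mul_add, add_mul, mul_sub, sub_mul, mul_assoc, mul_one, one_mul,
    mul_zero, zero_mul, sub_zero, zero_sub, add_zero, zero_add, star_mul, star_add,
    star_sub, star_star, star_one, star_zero, neg_mul, mul_neg, neg_neg,
    h11, h22, h12, h21, hx,
    red1 _ _ h11, red1 _ _ h22, red1 _ _ hx,
    red0 _ _ h12, red0 _ _ h21,
    czpair s₁ s₂ hcz, redc s₁ s₂ hcz,
    c1, c2, c1', c2', C1, C2, C1', C2',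
    mass _ _ c1, mass _ _ c2, mass _ _ c1', mass _ _ c2',
    mass _ _ C1, mass _ _ C2, mass _ _ C1', mass _ _ C2']
  abel

theorem zuConj (s₁ s₂ x y z : A)
    (h11 : star s₁ * s₁ = 1) (h22 : star s₂ * s₂ = 1)
    (h12 : star s₁ * s₂ = 0) (h21 : star s₂ * s₁ = 0)
    (hcz : s₁ * star s₁ + s₂ * star s₂ = 1)
    (hx : star x * x = 1)
    (c1 : x * s₁ = s₁ * x) (c2 : x * s₂ = s₂ * x)
    (c1' : x * star s₁ = star s₁ * x) (c2' : x * star s₂ = star s₂ * x)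
    (d1 : y * s₁ = s₁ * y) (d2 : y * s₂ = s₂ * y)
    (d1' : y * star s₁ = star s₁ * y) (d2' : y * star s₂ = star s₂ * y) :
    star (zuW s₁ s₂ x) * y * zuW s₁ s₂ x = nnW s₁ s₂ x y z + eeW s₁ s₂ x y z := by
  have C1 : star x * s₁ = s₁ * star x := commSG c1'
  have C2 : star x * s₂ = s₂ * star x := commSG c2'
  have C1' : star x * star s₁ = star s₁ * star x := commSS c1
  have C2' : star x * star s₂ = star s₂ * star x := commSS c2
  simp only [zuW, mmW, nnW, eeW, mul_add, add_mul, mul_sub, sub_mul, mul_assoc, mul_one,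
    one_mul, mul_zero, zero_mul, sub_zero, zero_sub, add_zero, zero_add, star_mul, star_add,
    star_sub, star_star, star_one, star_zero, neg_mul, mul_neg, neg_neg,
    h11, h22, h12, h21, hx,
    red1 _ _ h11, red1 _ _ h22, red1 _ _ hx,
    red0 _ _ h12, red0 _ _ h21,
    czpair s₁ s₂ hcz, redc s₁ s₂ hcz,
    c1, c2, c1', c2', C1, C2, C1', C2',
    d1, d2, d1', d2',
    mass _ _ c1, mass _ _ c2, mass _ _ c1', mass _ _ c2',
    mass _ _ C1, mass _ _ C2, mass _ _ C1', mass _ _ C2',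
    mass _ _ d1, mass _ _ d2, mass _ _ d1', mass _ _ d2']
  abel

theorem cornerConj (s₁ s₂ X a b : A)
    (h11 : star s₁ * s₁ = 1) (h22 : star s₂ * s₂ = 1)
    (h12 : star s₁ * s₂ = 0) (h21 : star s₂ * s₁ = 0) :
    star (wbW s₁ s₂ X) * (s₁ * a * star s₁ + s₂ * b * star s₂) * wbW s₁ s₂ X
      = s₁ * (star X * a * X) * star s₁ + s₂ * b * star s₂ := by
  simp only [wbW, mul_add, add_mul, mul_sub, sub_mul, mul_assoc, mul_one, one_mul,
    mul_zero, zero_mul, sub_zero, zero_sub, add_zero, zero_add, star_mul, star_add,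
    star_sub, star_star, star_one, star_zero,
    h11, h22, h12, h21,
    red1 _ _ h11, red1 _ _ h22, red0 _ _ h12, red0 _ _ h21]

theorem wbMul (s₁ s₂ a b : A)
    (h11 : star s₁ * s₁ = 1) (h22 : star s₂ * s₂ = 1)
    (h12 : star s₁ * s₂ = 0) (h21 : star s₂ * s₁ = 0) :
    wbW s₁ s₂ a * wbW s₁ s₂ b = wbW s₁ s₂ (a * b) := by
  simp only [wbW, mul_add, add_mul, mul_assoc, mul_one, one_mul, mul_zero, zero_mul,
    add_zero, zero_add,
    red1 _ _ h11, red1 _ _ h22, red0 _ _ h12, red0 _ _ h21]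

theorem wbStar (s₁ s₂ a : A) : star (wbW s₁ s₂ a) = wbW s₁ s₂ (star a) := by
  simp only [wbW, star_add, star_mul, star_star, mul_assoc]

theorem wbU1 (s₁ s₂ X : A)
    (h11 : star s₁ * s₁ = 1) (h22 : star s₂ * s₂ = 1)
    (h12 : star s₁ * s₂ = 0) (h21 : star s₂ * s₁ = 0)
    (hcz : s₁ * star s₁ + s₂ * star s₂ = 1)
    (hX : star X * X = 1) :
    star (wbW s₁ s₂ X) * wbW s₁ s₂ X = 1 := by
  rw [wbStar, wbMul _ _ _ _ h11 h22 h12 h21, hX]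
  simpa [wbW] using hcz

theorem wbU2 (s₁ s₂ X : A)
    (h11 : star s₁ * s₁ = 1) (h22 : star s₂ * s₂ = 1)
    (h12 : star s₁ * s₂ = 0) (h21 : star s₂ * s₁ = 0)
    (hcz : s₁ * star s₁ + s₂ * star s₂ = 1)
    (hX : X * star X = 1) :
    wbW s₁ s₂ X * star (wbW s₁ s₂ X) = 1 := by
  rw [wbStar, wbMul _ _ _ _ h11 h22 h12 h21, hX]
  simpa [wbW] using hcz

theorem piU1 (s₁ s₂ s t : A)
    (h11 : star s₁ * s₁ = 1) (h22 : star s₂ * s₂ = 1)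
    (h12 : star s₁ * s₂ = 0) (h21 : star s₂ * s₁ = 0)
    (hcz : s₁ * star s₁ + s₂ * star s₂ = 1)
    (hs : star s * s = 1) (ht : star t * t = 1)
    (cs1 : s * s₁ = s₁ * s) (cs2 : s * s₂ = s₂ * s)
    (cs1' : s * star s₁ = star s₁ * s) (cs2' : s * star s₂ = star s₂ * s)
    (ct1 : t * s₁ = s₁ * t) (ct2 : t * s₂ = s₂ * t)
    (ct1' : t * star s₁ = star s₁ * t) (ct2' : t * star s₂ = star s₂ * t) :
    star (piW s₁ s₂ s t) * piW s₁ s₂ s t = 1 := by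
  have CS1 : star s * s₁ = s₁ * star s := commSG cs1'
  have CS2 : star s * s₂ = s₂ * star s := commSG cs2'
  have CS1' : star s * star s₁ = star s₁ * star s := commSS cs1
  have CS2' : star s * star s₂ = star s₂ * star s := commSS cs2
  have CT1 : star t * s₁ = s₁ * star t := commSG ct1'
  have CT2 : star t * s₂ = s₂ * star t := commSG ct2'
  have CT1' : star t * star s₁ = star s₁ * star t := commSS ct1
  have CT2' : star t * star s₂ = star s₂ * star t := commSS ct2
  simp only [piW, mul_add, add_mul, mul_sub, sub_mul, mul_assoc, mul_one, one_mul,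
    mul_zero, zero_mul, sub_zero, zero_sub, add_zero, zero_add, star_mul, star_add,
    star_sub, star_star, star_one, star_zero, neg_mul, mul_neg, neg_neg,
    h11, h22, h12, h21, hs, ht,
    red1 _ _ h11, red1 _ _ h22, red1 _ _ hs, red1 _ _ ht,
    red0 _ _ h12, red0 _ _ h21,
    czpair s₁ s₂ hcz, redc s₁ s₂ hcz,
    cs1, cs2, cs1', cs2', ct1, ct2, ct1', ct2',
    CS1, CS2, CS1', CS2', CT1, CT2, CT1', CT2',
    mass _ _ cs1, mass _ _ cs2, mass _ _ cs1', mass _ _ cs2',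
    mass _ _ ct1, mass _ _ ct2, mass _ _ ct1', mass _ _ ct2',
    mass _ _ CS1, mass _ _ CS2, mass _ _ CS1', mass _ _ CS2',
    mass _ _ CT1, mass _ _ CT2, mass _ _ CT1', mass _ _ CT2']
  abel

theorem piU2 (s₁ s₂ s t : A)
    (h11 : star s₁ * s₁ = 1) (h22 : star s₂ * s₂ = 1)
    (h12 : star s₁ * s₂ = 0) (h21 : star s₂ * s₁ = 0)
    (hcz : s₁ * star s₁ + s₂ * star s₂ = 1)
    (hs : star s * s = 1) (ht : star t * t = 1)
    (cs1 : s * s₁ = s₁ * s) (cs2 : s * s₂ = s₂ * s)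
    (cs1' : s * star s₁ = star s₁ * s) (cs2' : s * star s₂ = star s₂ * s)
    (ct1 : t * s₁ = s₁ * t) (ct2 : t * s₂ = s₂ * t)
    (ct1' : t * star s₁ = star s₁ * t) (ct2' : t * star s₂ = star s₂ * t) :
    piW s₁ s₂ s t * star (piW s₁ s₂ s t) = 1 := by
  have CS1 : star s * s₁ = s₁ * star s := commSG cs1'
  have CS2 : star s * s₂ = s₂ * star s := commSG cs2'
  have CS1' : star s * star s₁ = star s₁ * star s := commSS cs1
  have CS2' : star s * star s₂ = star s₂ * star s := commSS cs2
  have CT1 : star t * s₁ = s₁ * star t := commSG ct1'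
  have CT2 : star t * s₂ = s₂ * star t := commSG ct2'
  have CT1' : star t * star s₁ = star s₁ * star t := commSS ct1
  have CT2' : star t * star s₂ = star s₂ * star t := commSS ct2
  simp only [piW, mul_add, add_mul, mul_sub, sub_mul, mul_assoc, mul_one, one_mul,
    mul_zero, zero_mul, sub_zero, zero_sub, add_zero, zero_add, star_mul, star_add,
    star_sub, star_star, star_one, star_zero, neg_mul, mul_neg, neg_neg,
    h11, h22, h12, h21, hs, ht,
    red1 _ _ h11, red1 _ _ h22, red1 _ _ hs, red1 _ _ ht,
    red0 _ _ h12, red0 _ _ h21,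
    czpair s₁ s₂ hcz, redc s₁ s₂ hcz,
    cs1, cs2, cs1', cs2', ct1, ct2, ct1', ct2',
    CS1, CS2, CS1', CS2', CT1, CT2, CT1', CT2',
    mass _ _ cs1, mass _ _ cs2, mass _ _ cs1', mass _ _ cs2',
    mass _ _ ct1, mass _ _ ct2, mass _ _ ct1', mass _ _ ct2',
    mass _ _ CS1, mass _ _ CS2, mass _ _ CS1', mass _ _ CS2',
    mass _ _ CT1, mass _ _ CT2, mass _ _ CT1', mass _ _ CT2']
  abel

theorem piConj (s₁ s₂ s t u v : A)
    (h11 : star s₁ * s₁ = 1) (h22 : star s₂ * s₂ = 1)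
    (h12 : star s₁ * s₂ = 0) (h21 : star s₂ * s₁ = 0)
    (hcz : s₁ * star s₁ + s₂ * star s₂ = 1)
    (hs : star s * s = 1) (ht : star t * t = 1)
    (cs1 : s * s₁ = s₁ * s) (cs2 : s * s₂ = s₂ * s)
    (cs1' : s * star s₁ = star s₁ * s) (cs2' : s * star s₂ = star s₂ * s)
    (ct1 : t * s₁ = s₁ * t) (ct2 : t * s₂ = s₂ * t)
    (ct1' : t * star s₁ = star s₁ * t) (ct2' : t * star s₂ = star s₂ * t)
    (cu1 : u * s₁ = s₁ * u) (cu2 : u * s₂ = s₂ * u)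
    (cu1' : u * star s₁ = star s₁ * u) (cu2' : u * star s₂ = star s₂ * u)
    (cv1 : v * s₁ = s₁ * v) (cv2 : v * s₂ = s₂ * v)
    (cv1' : v * star s₁ = star s₁ * v) (cv2' : v * star s₂ = star s₂ * v) :
    piW s₁ s₂ s t * (s₁ * (nnW s₁ s₂ t v u) * star s₁ + s₂ * (mmW s u) * star s₂)
      = (s₁ * (nnW s₁ s₂ s u v) * star s₁ + s₂ * (mmW t v) * star s₂) * piW s₁ s₂ s t := by
  have CS1 : star s * s₁ = s₁ * star s := commSG cs1'
  have CS2 : star s * s₂ = s₂ * star s := commSG cs2'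
  have CS1' : star s * star s₁ = star s₁ * star s := commSS cs1
  have CS2' : star s * star s₂ = star s₂ * star s := commSS cs2
  have CT1 : star t * s₁ = s₁ * star t := commSG ct1'
  have CT2 : star t * s₂ = s₂ * star t := commSG ct2'
  have CT1' : star t * star s₁ = star s₁ * star t := commSS ct1
  have CT2' : star t * star s₂ = star s₂ * star t := commSS ct2
  simp only [piW, nnW, mmW, mul_add, add_mul, mul_sub, sub_mul, mul_assoc, mul_one, one_mul,
    mul_zero, zero_mul, sub_zero, zero_sub, add_zero, zero_add, star_mul, star_add,
    star_sub, star_star, star_one, star_zero, neg_mul, mul_neg, neg_neg,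
    h11, h22, h12, h21, hs, ht,
    red1 _ _ h11, red1 _ _ h22, red1 _ _ hs, red1 _ _ ht,
    red0 _ _ h12, red0 _ _ h21,
    czpair s₁ s₂ hcz, redc s₁ s₂ hcz,
    cs1, cs2, cs1', cs2', ct1, ct2, ct1', ct2',
    CS1, CS2, CS1', CS2', CT1, CT2, CT1', CT2',
    cu1, cu2, cu1', cu2', cv1, cv2, cv1', cv2',
    mass _ _ cs1, mass _ _ cs2, mass _ _ cs1', mass _ _ cs2',
    mass _ _ ct1, mass _ _ ct2, mass _ _ ct1', mass _ _ ct2',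
    mass _ _ CS1, mass _ _ CS2, mass _ _ CS1', mass _ _ CS2',
    mass _ _ CT1, mass _ _ CT2, mass _ _ CT1', mass _ _ CT2',
    mass _ _ cu1, mass _ _ cu2, mass _ _ cu1', mass _ _ cu2',
    mass _ _ cv1, mass _ _ cv2, mass _ _ cv1', mass _ _ cv2']
  abel

end RingPart

section NormPart
variable [NormedRing A] [StarRing A] [CStarRing A]

theorem norm_sq_add_le (a b : A) (h : a * star b = 0) :
    ‖a + b‖ ^ 2 ≤ ‖a‖ ^ 2 + ‖b‖ ^ 2 := by
  have h' : b * star a = 0 := by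
    have h2 := congrArg star h
    simpa only [star_mul, star_star, star_zero] using h2
  have key : (a + b) * star (a + b) = a * star a + b * star b := by
    simp only [star_add, mul_add, add_mul, h, h', add_zero, zero_add]
  calc ‖a + b‖ ^ 2 = ‖(a + b) * star (a + b)‖ := by
        rw [CStarRing.norm_self_mul_star, pow_two]
    _ = ‖a * star a + b * star b‖ := by rw [key]
    _ ≤ ‖a * star a‖ + ‖b * star b‖ := norm_add_le _ _
    _ = ‖a‖ ^ 2 + ‖b‖ ^ 2 := by
        rw [CStarRing.norm_self_mul_star, CStarRing.norm_self_mul_star, pow_two, pow_two]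

theorem norm_sandwich (a x b : A) (ha : ‖a‖ ≤ 1) (hb : ‖b‖ ≤ 1) : ‖a * x * b‖ ≤ ‖x‖ := by
  calc ‖a * x * b‖ ≤ ‖a * x‖ * ‖b‖ := norm_mul_le _ _
    _ ≤ (‖a‖ * ‖x‖) * ‖b‖ :=
        mul_le_mul_of_nonneg_right (norm_mul_le _ _) (norm_nonneg _)
    _ ≤ (1 * ‖x‖) * 1 := by
        have h1 : ‖a‖ * ‖x‖ ≤ 1 * ‖x‖ :=
          mul_le_mul_of_nonneg_right ha (norm_nonneg _)
        have h2 : (‖a‖ * ‖x‖) * ‖b‖ ≤ (1 * ‖x‖) * ‖b‖ :=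
          mul_le_mul_of_nonneg_right h1 (norm_nonneg _)
        refine h2.trans ?_
        exact mul_le_mul_of_nonneg_left hb (by positivity)
    _ = ‖x‖ := by ring

theorem w1_bound (s u v : A) (hs : star s * s = 1) (huu : star u * u = 1)
    (hvv : star v * v = 1) (hnv : ‖v‖ ≤ 1) :
    ‖u * s - s * star s * u * s‖ ^ 2
      ≤ 2 * ‖star s * u * s - v‖ + ‖star s * u * s - v‖ ^ 2 := by
  have key : star (u * s - s * star s * u * s) * (u * s - s * star s * u * s)
      = -(star v * (star s * u * s - v)) - star (star s * u * s - v) * v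
        - star (star s * u * s - v) * (star s * u * s - v) := by
    simp only [star_mul, star_sub, star_star, mul_sub, sub_mul, mul_assoc, neg_mul,
      mul_neg, neg_neg, neg_sub, sub_neg_eq_add,
      red1 _ _ hs, red1 _ _ huu, red1 _ _ hvv, hs, huu, hvv, mul_one, one_mul]
    abel
  have b1 : ‖star v * (star s * u * s - v)‖ ≤ ‖star s * u * s - v‖ := by
    calc ‖star v * (star s * u * s - v)‖ ≤ ‖star v‖ * ‖star s * u * s - v‖ := norm_mul_le _ _
      _ = ‖v‖ * ‖star s * u * s - v‖ := by rw [norm_star]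
      _ ≤ 1 * ‖star s * u * s - v‖ := mul_le_mul_of_nonneg_right hnv (norm_nonneg _)
      _ = ‖star s * u * s - v‖ := one_mul _
  have b2 : ‖star (star s * u * s - v) * v‖ ≤ ‖star s * u * s - v‖ := by
    calc ‖star (star s * u * s - v) * v‖ ≤ ‖star (star s * u * s - v)‖ * ‖v‖ := norm_mul_le _ _
      _ = ‖star s * u * s - v‖ * ‖v‖ := by rw [norm_star]
      _ ≤ ‖star s * u * s - v‖ * 1 := mul_le_mul_of_nonneg_left hnv (norm_nonneg _)
      _ = ‖star s * u * s - v‖ := mul_one _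
  have b3 : ‖star (star s * u * s - v) * (star s * u * s - v)‖ = ‖star s * u * s - v‖ ^ 2 := by
    rw [CStarRing.norm_star_mul_self, pow_two]
  calc ‖u * s - s * star s * u * s‖ ^ 2
      = ‖star (u * s - s * star s * u * s) * (u * s - s * star s * u * s)‖ := by
        rw [CStarRing.norm_star_mul_self, pow_two]
    _ = ‖-(star v * (star s * u * s - v)) - star (star s * u * s - v) * v
          - star (star s * u * s - v) * (star s * u * s - v)‖ := by rw [key]
    _ ≤ ‖-(star v * (star s * u * s - v)) - star (star s * u * s - v) * v‖
          + ‖star (star s * u * s - v) * (star s * u * s - v)‖ := norm_sub_le _ _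
    _ ≤ (‖-(star v * (star s * u * s - v))‖ + ‖star (star s * u * s - v) * v‖)
          + ‖star (star s * u * s - v) * (star s * u * s - v)‖ := by
        have := norm_sub_le (-(star v * (star s * u * s - v))) (star (star s * u * s - v) * v)
        linarith
    _ ≤ 2 * ‖star s * u * s - v‖ + ‖star s * u * s - v‖ ^ 2 := by
        rw [norm_neg, b3]; linarith

theorem w4_bound (s u v : A) (hs : star s * s = 1) (huu' : u * star u = 1)
    (hvv' : v * star v = 1) (hnv : ‖v‖ ≤ 1) :
    ‖star s * u - star s * u * s * star s‖ ^ 2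
      ≤ 2 * ‖star s * u * s - v‖ + ‖star s * u * s - v‖ ^ 2 := by
  have key : (star s * u - star s * u * s * star s) * star (star s * u - star s * u * s * star s)
      = -(v * star (star s * u * s - v)) - (star s * u * s - v) * star v
        - (star s * u * s - v) * star (star s * u * s - v) := by
    simp only [star_mul, star_sub, star_star, mul_sub, sub_mul, mul_assoc, neg_mul,
      mul_neg, neg_neg, neg_sub, sub_neg_eq_add,
      red1 _ _ hs, red1 _ _ huu', red1 _ _ hvv', hs, huu', hvv', mul_one, one_mul]
    abel
  have b1 : ‖v * star (star s * u * s - v)‖ ≤ ‖star s * u * s - v‖ := by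
    calc ‖v * star (star s * u * s - v)‖ ≤ ‖v‖ * ‖star (star s * u * s - v)‖ := norm_mul_le _ _
      _ = ‖v‖ * ‖star s * u * s - v‖ := by rw [norm_star]
      _ ≤ 1 * ‖star s * u * s - v‖ := mul_le_mul_of_nonneg_right hnv (norm_nonneg _)
      _ = ‖star s * u * s - v‖ := one_mul _
  have b2 : ‖(star s * u * s - v) * star v‖ ≤ ‖star s * u * s - v‖ := by
    calc ‖(star s * u * s - v) * star v‖ ≤ ‖star s * u * s - v‖ * ‖star v‖ := norm_mul_le _ _
      _ = ‖star s * u * s - v‖ * ‖v‖ := by rw [norm_star]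
      _ ≤ ‖star s * u * s - v‖ * 1 := mul_le_mul_of_nonneg_left hnv (norm_nonneg _)
      _ = ‖star s * u * s - v‖ := mul_one _
  have b3 : ‖(star s * u * s - v) * star (star s * u * s - v)‖ = ‖star s * u * s - v‖ ^ 2 := by
    rw [CStarRing.norm_self_mul_star, pow_two]
  calc ‖star s * u - star s * u * s * star s‖ ^ 2
      = ‖(star s * u - star s * u * s * star s) * star (star s * u - star s * u * s * star s)‖ := by
        rw [CStarRing.norm_self_mul_star, pow_two]
    _ = ‖-(v * star (star s * u * s - v)) - (star s * u * s - v) * star v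
          - (star s * u * s - v) * star (star s * u * s - v)‖ := by rw [key]
    _ ≤ ‖-(v * star (star s * u * s - v)) - (star s * u * s - v) * star v‖
          + ‖(star s * u * s - v) * star (star s * u * s - v)‖ := norm_sub_le _ _
    _ ≤ (‖-(v * star (star s * u * s - v))‖ + ‖(star s * u * s - v) * star v‖)
          + ‖(star s * u * s - v) * star (star s * u * s - v)‖ := by
        have := norm_sub_le (-(v * star (star s * u * s - v))) ((star s * u * s - v) * star v)
        linarith
    _ ≤ 2 * ‖star s * u * s - v‖ + ‖star s * u * s - v‖ ^ 2 := by
        rw [norm_neg, b3]; linarith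

end NormPart

end Stmt14

/-- Let `s, t` be isometries in a unital C*-algebra `A`, and let
`s₁, s₂` be isometries satisfying the Cuntz relation `s₁·s₁* + s₂·s₂* = 1` and commuting
(together with their adjoints) with `s` and `t`.  Then there is a unitary `z ∈ A` such
that whenever `u, v` are unitaries commuting with `s₁, s₂, s₁*, s₂*`,
`‖z*·u·z − v‖ ≤ 11·(max(‖s*·u·s − v‖, ‖t*·v·t − u‖))^(1/2)`. -/
theorem stmt_14 {A : Type*} [NormedRing A] [StarRing A] [CStarRing A] [CompleteSpace A]
    [NormedAlgebra ℂ A] [StarModule ℂ A]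
    (s t s₁ s₂ : A)
    (hs : star s * s = 1) (ht : star t * t = 1)
    (hs₁ : star s₁ * s₁ = 1) (hs₂ : star s₂ * s₂ = 1)
    (hcuntz : s₁ * star s₁ + s₂ * star s₂ = 1)
    (hcomm : ∀ x ∈ ({s₁, s₂, star s₁, star s₂} : Set A), x * s = s * x ∧ x * t = t * x) :
    ∃ z : A, z ∈ unitary A ∧
      ∀ u v : A, u ∈ unitary A → v ∈ unitary A →
        (∀ x ∈ ({s₁, s₂, star s₁, star s₂} : Set A), x * u = u * x ∧ x * v = v * x) →
        ‖star z * u * z - v‖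
          ≤ 11 * Real.sqrt (max ‖star s * u * s - v‖ ‖star t * v * t - u‖) := by
  obtain hA | hA := subsingleton_or_nontrivial A
  · refine ⟨1, ?_, ?_⟩
    · rw [Unitary.mem_iff]
      exact ⟨Subsingleton.elim _ _, Subsingleton.elim _ _⟩
    · intro u v _ _ _
      have h0 : star (1 : A) * u * 1 - v = 0 := Subsingleton.elim _ _
      rw [h0, norm_zero]
      positivity
  · obtain ⟨hxs1, hxt1⟩ := hcomm s₁ (by simp)
    obtain ⟨hxs2, hxt2⟩ := hcomm s₂ (by simp)
    obtain ⟨hxs1', hxt1'⟩ := hcomm (star s₁) (by simp)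
    obtain ⟨hxs2', hxt2'⟩ := hcomm (star s₂) (by simp)
    have cs1 : s * s₁ = s₁ * s := hxs1.symm
    have cs2 : s * s₂ = s₂ * s := hxs2.symm
    have cs1' : s * star s₁ = star s₁ * s := hxs1'.symm
    have cs2' : s * star s₂ = star s₂ * s := hxs2'.symm
    have ct1 : t * s₁ = s₁ * t := hxt1.symm
    have ct2 : t * s₂ = s₂ * t := hxt2.symm
    have ct1' : t * star s₁ = star s₁ * t := hxt1'.symm
    have ct2' : t * star s₂ = star s₂ * t := hxt2'.symm
    have h12 : star s₁ * s₂ = 0 := Stmt14.cuntz_orth12 s₁ s₂ hs₁ hs₂ hcuntz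
    have h21 : star s₂ * s₁ = 0 := by
      have h2 := congrArg star h12
      simpa only [star_mul, star_star, star_zero] using h2
    have uZs : Stmt14.zuW s₁ s₂ s ∈ unitary A := Unitary.mem_iff.mpr
      ⟨Stmt14.zuU1 s₁ s₂ s hs₁ hs₂ h12 h21 hcuntz hs cs1 cs2 cs1' cs2',
       Stmt14.zuU2 s₁ s₂ s hs₁ hs₂ h12 h21 hcuntz hs cs1 cs2 cs1' cs2'⟩
    have uZt : Stmt14.zuW s₁ s₂ t ∈ unitary A := Unitary.mem_iff.mpr
      ⟨Stmt14.zuU1 s₁ s₂ t hs₁ hs₂ h12 h21 hcuntz ht ct1 ct2 ct1' ct2',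
       Stmt14.zuU2 s₁ s₂ t hs₁ hs₂ h12 h21 hcuntz ht ct1 ct2 ct1' ct2'⟩
    have uWb : Stmt14.wbW s₁ s₂ (Stmt14.zuW s₁ s₂ t) ∈ unitary A := Unitary.mem_iff.mpr
      ⟨Stmt14.wbU1 s₁ s₂ _ hs₁ hs₂ h12 h21 hcuntz (Unitary.mem_iff.mp uZt).1,
       Stmt14.wbU2 s₁ s₂ _ hs₁ hs₂ h12 h21 hcuntz (Unitary.mem_iff.mp uZt).2⟩
    have uWp : Stmt14.wbW s₁ s₂ (Stmt14.zuW s₁ s₂ s) ∈ unitary A := Unitary.mem_iff.mpr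
      ⟨Stmt14.wbU1 s₁ s₂ _ hs₁ hs₂ h12 h21 hcuntz (Unitary.mem_iff.mp uZs).1,
       Stmt14.wbU2 s₁ s₂ _ hs₁ hs₂ h12 h21 hcuntz (Unitary.mem_iff.mp uZs).2⟩
    have uPi : Stmt14.piW s₁ s₂ s t ∈ unitary A := Unitary.mem_iff.mpr
      ⟨Stmt14.piU1 s₁ s₂ s t hs₁ hs₂ h12 h21 hcuntz hs ht cs1 cs2 cs1' cs2' ct1 ct2 ct1' ct2',
       Stmt14.piU2 s₁ s₂ s t hs₁ hs₂ h12 h21 hcuntz hs ht cs1 cs2 cs1' cs2' ct1 ct2 ct1' ct2'⟩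
    have hns1 : ‖s₁‖ = 1 := by
      have h := CStarRing.norm_star_mul_self (x := s₁)
      rw [hs₁, CStarRing.norm_one] at h
      have h1 : (‖s₁‖ - 1) * (‖s₁‖ + 1) = 0 := by nlinarith
      rcases mul_eq_zero.mp h1 with h2 | h2
      · linarith
      · nlinarith [norm_nonneg s₁]
    have hns2 : ‖s₂‖ = 1 := by
      have h := CStarRing.norm_star_mul_self (x := s₂)
      rw [hs₂, CStarRing.norm_one] at h
      have h1 : (‖s₂‖ - 1) * (‖s₂‖ + 1) = 0 := by nlinarith
      rcases mul_eq_zero.mp h1 with h2 | h2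
      · linarith
      · nlinarith [norm_nonneg s₂]
    refine ⟨Stmt14.zuW s₁ s₂ s * Stmt14.wbW s₁ s₂ (Stmt14.zuW s₁ s₂ t) *
      star (Stmt14.piW s₁ s₂ s t) * star (Stmt14.wbW s₁ s₂ (Stmt14.zuW s₁ s₂ s)) *
      star (Stmt14.zuW s₁ s₂ t), ?_, ?_⟩
    · exact mul_mem (mul_mem (mul_mem (mul_mem uZs uWb) (Unitary.star_mem uPi))
        (Unitary.star_mem uWp)) (Unitary.star_mem uZt)
    · intro u v hu hv hcm
      obtain ⟨hyu1, hyv1⟩ := hcm s₁ (by simp)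
      obtain ⟨hyu2, hyv2⟩ := hcm s₂ (by simp)
      obtain ⟨hyu1', hyv1'⟩ := hcm (star s₁) (by simp)
      obtain ⟨hyu2', hyv2'⟩ := hcm (star s₂) (by simp)
      have cu1 : u * s₁ = s₁ * u := hyu1.symm
      have cu2 : u * s₂ = s₂ * u := hyu2.symm
      have cu1' : u * star s₁ = star s₁ * u := hyu1'.symm
      have cu2' : u * star s₂ = star s₂ * u := hyu2'.symm
      have cv1 : v * s₁ = s₁ * v := hyv1.symm
      have cv2 : v * s₂ = s₂ * v := hyv2.symm
      have cv1' : v * star s₁ = star s₁ * v := hyv1'.symm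
      have cv2' : v * star s₂ = star s₂ * v := hyv2'.symm
      have huu : star u * u = 1 := (Unitary.mem_iff.mp hu).1
      have huu' : u * star u = 1 := (Unitary.mem_iff.mp hu).2
      have hvv : star v * v = 1 := (Unitary.mem_iff.mp hv).1
      have hvv' : v * star v = 1 := (Unitary.mem_iff.mp hv).2
      have hnu : ‖u‖ = 1 := CStarRing.norm_of_mem_unitary hu
      have hnv : ‖v‖ = 1 := CStarRing.norm_of_mem_unitary hv
      set epsl := max ‖star s * u * s - v‖ ‖star t * v * t - u‖ with hepsl
      have he1 : ‖star s * u * s - v‖ ≤ epsl := le_max_left _ _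
      have he2 : ‖star t * v * t - u‖ ≤ epsl := le_max_right _ _
      have heps0 : (0 : ℝ) ≤ epsl := le_trans (norm_nonneg _) he1
      -- conjugation identities
      have hI1 : star (Stmt14.zuW s₁ s₂ s) * u * Stmt14.zuW s₁ s₂ s
          = Stmt14.nnW s₁ s₂ s u v + Stmt14.eeW s₁ s₂ s u v :=
        Stmt14.zuConj s₁ s₂ s u v hs₁ hs₂ h12 h21 hcuntz hs cs1 cs2 cs1' cs2' cu1 cu2 cu1' cu2'
      have hI2 : star (Stmt14.zuW s₁ s₂ t) * v * Stmt14.zuW s₁ s₂ t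
          = Stmt14.nnW s₁ s₂ t v u + Stmt14.eeW s₁ s₂ t v u :=
        Stmt14.zuConj s₁ s₂ t v u hs₁ hs₂ h12 h21 hcuntz ht ct1 ct2 ct1' ct2' cv1 cv2 cv1' cv2'
      -- step 1 : inner conjugation by Wb
      have hC3 : star (Stmt14.wbW s₁ s₂ (Stmt14.zuW s₁ s₂ t)) * Stmt14.nnW s₁ s₂ s u v *
            Stmt14.wbW s₁ s₂ (Stmt14.zuW s₁ s₂ t)
          = (s₁ * Stmt14.nnW s₁ s₂ t v u * star s₁ + s₂ * Stmt14.mmW s u * star s₂)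
            + s₁ * Stmt14.eeW s₁ s₂ t v u * star s₁ := by
        have h := Stmt14.cornerConj s₁ s₂ (Stmt14.zuW s₁ s₂ t) v (Stmt14.mmW s u) hs₁ hs₂ h12 h21
        rw [hI2] at h
        calc star (Stmt14.wbW s₁ s₂ (Stmt14.zuW s₁ s₂ t)) * Stmt14.nnW s₁ s₂ s u v *
              Stmt14.wbW s₁ s₂ (Stmt14.zuW s₁ s₂ t)
            = star (Stmt14.wbW s₁ s₂ (Stmt14.zuW s₁ s₂ t)) *
                (s₁ * v * star s₁ + s₂ * Stmt14.mmW s u * star s₂) *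
                Stmt14.wbW s₁ s₂ (Stmt14.zuW s₁ s₂ t) := rfl
          _ = s₁ * (Stmt14.nnW s₁ s₂ t v u + Stmt14.eeW s₁ s₂ t v u) * star s₁
                + s₂ * Stmt14.mmW s u * star s₂ := h
          _ = (s₁ * Stmt14.nnW s₁ s₂ t v u * star s₁ + s₂ * Stmt14.mmW s u * star s₂)
                + s₁ * Stmt14.eeW s₁ s₂ t v u * star s₁ := by noncomm_ring
      have hstep1 : star (Stmt14.wbW s₁ s₂ (Stmt14.zuW s₁ s₂ t)) *
            (star (Stmt14.zuW s₁ s₂ s) * u * Stmt14.zuW s₁ s₂ s) *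
            Stmt14.wbW s₁ s₂ (Stmt14.zuW s₁ s₂ t)
          = (s₁ * Stmt14.nnW s₁ s₂ t v u * star s₁ + s₂ * Stmt14.mmW s u * star s₂)
            + (s₁ * Stmt14.eeW s₁ s₂ t v u * star s₁
               + star (Stmt14.wbW s₁ s₂ (Stmt14.zuW s₁ s₂ t)) * Stmt14.eeW s₁ s₂ s u v *
                 Stmt14.wbW s₁ s₂ (Stmt14.zuW s₁ s₂ t)) := by
        rw [hI1]
        calc star (Stmt14.wbW s₁ s₂ (Stmt14.zuW s₁ s₂ t)) *
              (Stmt14.nnW s₁ s₂ s u v + Stmt14.eeW s₁ s₂ s u v) *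
              Stmt14.wbW s₁ s₂ (Stmt14.zuW s₁ s₂ t)
            = star (Stmt14.wbW s₁ s₂ (Stmt14.zuW s₁ s₂ t)) * Stmt14.nnW s₁ s₂ s u v *
                Stmt14.wbW s₁ s₂ (Stmt14.zuW s₁ s₂ t)
              + star (Stmt14.wbW s₁ s₂ (Stmt14.zuW s₁ s₂ t)) * Stmt14.eeW s₁ s₂ s u v *
                Stmt14.wbW s₁ s₂ (Stmt14.zuW s₁ s₂ t) := by noncomm_ring
          _ = _ := by rw [hC3]; abel
      -- step 2 : permutation
      have hPi2 : Stmt14.piW s₁ s₂ s t * star (Stmt14.piW s₁ s₂ s t) = 1 :=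
        (Unitary.mem_iff.mp uPi).2
      have hp : Stmt14.piW s₁ s₂ s t *
            (s₁ * Stmt14.nnW s₁ s₂ t v u * star s₁ + s₂ * Stmt14.mmW s u * star s₂)
          = (s₁ * Stmt14.nnW s₁ s₂ s u v * star s₁ + s₂ * Stmt14.mmW t v * star s₂) *
            Stmt14.piW s₁ s₂ s t :=
        Stmt14.piConj s₁ s₂ s t u v hs₁ hs₂ h12 h21 hcuntz hs ht cs1 cs2 cs1' cs2'
          ct1 ct2 ct1' ct2' cu1 cu2 cu1' cu2' cv1 cv2 cv1' cv2'
      have hstep2 : ∀ F : A, Stmt14.piW s₁ s₂ s t *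
            ((s₁ * Stmt14.nnW s₁ s₂ t v u * star s₁ + s₂ * Stmt14.mmW s u * star s₂) + F) *
            star (Stmt14.piW s₁ s₂ s t)
          = (s₁ * Stmt14.nnW s₁ s₂ s u v * star s₁ + s₂ * Stmt14.mmW t v * star s₂)
            + Stmt14.piW s₁ s₂ s t * F * star (Stmt14.piW s₁ s₂ s t) := by
        intro F
        calc Stmt14.piW s₁ s₂ s t *
              ((s₁ * Stmt14.nnW s₁ s₂ t v u * star s₁ + s₂ * Stmt14.mmW s u * star s₂) + F) *
              star (Stmt14.piW s₁ s₂ s t)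
            = (Stmt14.piW s₁ s₂ s t *
                (s₁ * Stmt14.nnW s₁ s₂ t v u * star s₁ + s₂ * Stmt14.mmW s u * star s₂)) *
                star (Stmt14.piW s₁ s₂ s t)
              + Stmt14.piW s₁ s₂ s t * F * star (Stmt14.piW s₁ s₂ s t) := by noncomm_ring
          _ = (s₁ * Stmt14.nnW s₁ s₂ s u v * star s₁ + s₂ * Stmt14.mmW t v * star s₂) *
                (Stmt14.piW s₁ s₂ s t * star (Stmt14.piW s₁ s₂ s t))
              + Stmt14.piW s₁ s₂ s t * F * star (Stmt14.piW s₁ s₂ s t) := by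
              rw [hp]; noncomm_ring
          _ = _ := by rw [hPi2, mul_one]
      -- step 3 : undo Wp
      have hWp2 : Stmt14.wbW s₁ s₂ (Stmt14.zuW s₁ s₂ s) *
          star (Stmt14.wbW s₁ s₂ (Stmt14.zuW s₁ s₂ s)) = 1 := (Unitary.mem_iff.mp uWp).2
      have hI4 : star (Stmt14.wbW s₁ s₂ (Stmt14.zuW s₁ s₂ s)) * Stmt14.nnW s₁ s₂ t v u *
            Stmt14.wbW s₁ s₂ (Stmt14.zuW s₁ s₂ s)
          = (s₁ * Stmt14.nnW s₁ s₂ s u v * star s₁ + s₂ * Stmt14.mmW t v * star s₂)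
            + s₁ * Stmt14.eeW s₁ s₂ s u v * star s₁ := by
        have h := Stmt14.cornerConj s₁ s₂ (Stmt14.zuW s₁ s₂ s) u (Stmt14.mmW t v) hs₁ hs₂ h12 h21
        rw [hI1] at h
        calc star (Stmt14.wbW s₁ s₂ (Stmt14.zuW s₁ s₂ s)) * Stmt14.nnW s₁ s₂ t v u *
              Stmt14.wbW s₁ s₂ (Stmt14.zuW s₁ s₂ s)
            = star (Stmt14.wbW s₁ s₂ (Stmt14.zuW s₁ s₂ s)) *
                (s₁ * u * star s₁ + s₂ * Stmt14.mmW t v * star s₂) *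
                Stmt14.wbW s₁ s₂ (Stmt14.zuW s₁ s₂ s) := rfl
          _ = s₁ * (Stmt14.nnW s₁ s₂ s u v + Stmt14.eeW s₁ s₂ s u v) * star s₁
                + s₂ * Stmt14.mmW t v * star s₂ := h
          _ = _ := by noncomm_ring
      have hstep3 : ∀ G : A, Stmt14.wbW s₁ s₂ (Stmt14.zuW s₁ s₂ s) *
            ((s₁ * Stmt14.nnW s₁ s₂ s u v * star s₁ + s₂ * Stmt14.mmW t v * star s₂) + G) *
            star (Stmt14.wbW s₁ s₂ (Stmt14.zuW s₁ s₂ s))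
          = Stmt14.nnW s₁ s₂ t v u
            + Stmt14.wbW s₁ s₂ (Stmt14.zuW s₁ s₂ s) *
              (G - s₁ * Stmt14.eeW s₁ s₂ s u v * star s₁) *
              star (Stmt14.wbW s₁ s₂ (Stmt14.zuW s₁ s₂ s)) := by
        intro G
        have h6 : Stmt14.wbW s₁ s₂ (Stmt14.zuW s₁ s₂ s) *
            (star (Stmt14.wbW s₁ s₂ (Stmt14.zuW s₁ s₂ s)) * Stmt14.nnW s₁ s₂ t v u *
              Stmt14.wbW s₁ s₂ (Stmt14.zuW s₁ s₂ s)) *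
            star (Stmt14.wbW s₁ s₂ (Stmt14.zuW s₁ s₂ s)) = Stmt14.nnW s₁ s₂ t v u := by
          calc Stmt14.wbW s₁ s₂ (Stmt14.zuW s₁ s₂ s) *
              (star (Stmt14.wbW s₁ s₂ (Stmt14.zuW s₁ s₂ s)) * Stmt14.nnW s₁ s₂ t v u *
                Stmt14.wbW s₁ s₂ (Stmt14.zuW s₁ s₂ s)) *
              star (Stmt14.wbW s₁ s₂ (Stmt14.zuW s₁ s₂ s))
              = (Stmt14.wbW s₁ s₂ (Stmt14.zuW s₁ s₂ s) *
                  star (Stmt14.wbW s₁ s₂ (Stmt14.zuW s₁ s₂ s))) * Stmt14.nnW s₁ s₂ t v u *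
                  (Stmt14.wbW s₁ s₂ (Stmt14.zuW s₁ s₂ s) *
                  star (Stmt14.wbW s₁ s₂ (Stmt14.zuW s₁ s₂ s))) := by noncomm_ring
            _ = _ := by rw [hWp2, one_mul, mul_one]
        have h7 := congrArg (fun w => Stmt14.wbW s₁ s₂ (Stmt14.zuW s₁ s₂ s) * w *
          star (Stmt14.wbW s₁ s₂ (Stmt14.zuW s₁ s₂ s))) hI4
        rw [h6] at h7
        calc Stmt14.wbW s₁ s₂ (Stmt14.zuW s₁ s₂ s) *
              ((s₁ * Stmt14.nnW s₁ s₂ s u v * star s₁ + s₂ * Stmt14.mmW t v * star s₂) + G) *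
              star (Stmt14.wbW s₁ s₂ (Stmt14.zuW s₁ s₂ s))
            = Stmt14.wbW s₁ s₂ (Stmt14.zuW s₁ s₂ s) *
                ((s₁ * Stmt14.nnW s₁ s₂ s u v * star s₁ + s₂ * Stmt14.mmW t v * star s₂)
                  + s₁ * Stmt14.eeW s₁ s₂ s u v * star s₁) *
                star (Stmt14.wbW s₁ s₂ (Stmt14.zuW s₁ s₂ s))
              + Stmt14.wbW s₁ s₂ (Stmt14.zuW s₁ s₂ s) *
                (G - s₁ * Stmt14.eeW s₁ s₂ s u v * star s₁) *
                star (Stmt14.wbW s₁ s₂ (Stmt14.zuW s₁ s₂ s)) := by noncomm_ring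
          _ = _ := by rw [← h7]
      -- step 4 : undo Zt
      have hZt2 : Stmt14.zuW s₁ s₂ t * star (Stmt14.zuW s₁ s₂ t) = 1 :=
        (Unitary.mem_iff.mp uZt).2
      have hstep4 : ∀ G : A, Stmt14.zuW s₁ s₂ t * (Stmt14.nnW s₁ s₂ t v u + G) *
            star (Stmt14.zuW s₁ s₂ t)
          = v + Stmt14.zuW s₁ s₂ t * (G - Stmt14.eeW s₁ s₂ t v u) *
              star (Stmt14.zuW s₁ s₂ t) := by
        intro G
        have h6 : Stmt14.zuW s₁ s₂ t * (star (Stmt14.zuW s₁ s₂ t) * v * Stmt14.zuW s₁ s₂ t) *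
            star (Stmt14.zuW s₁ s₂ t) = v := by
          calc Stmt14.zuW s₁ s₂ t * (star (Stmt14.zuW s₁ s₂ t) * v * Stmt14.zuW s₁ s₂ t) *
              star (Stmt14.zuW s₁ s₂ t)
              = (Stmt14.zuW s₁ s₂ t * star (Stmt14.zuW s₁ s₂ t)) * v *
                (Stmt14.zuW s₁ s₂ t * star (Stmt14.zuW s₁ s₂ t)) := by noncomm_ring
            _ = v := by rw [hZt2, one_mul, mul_one]
        have h7 := congrArg
          (fun w => Stmt14.zuW s₁ s₂ t * w * star (Stmt14.zuW s₁ s₂ t)) hI2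
        rw [h6] at h7
        calc Stmt14.zuW s₁ s₂ t * (Stmt14.nnW s₁ s₂ t v u + G) * star (Stmt14.zuW s₁ s₂ t)
            = Stmt14.zuW s₁ s₂ t * (Stmt14.nnW s₁ s₂ t v u + Stmt14.eeW s₁ s₂ t v u) *
                star (Stmt14.zuW s₁ s₂ t)
              + Stmt14.zuW s₁ s₂ t * (G - Stmt14.eeW s₁ s₂ t v u) *
                star (Stmt14.zuW s₁ s₂ t) := by noncomm_ring
          _ = _ := by rw [← h7]
      -- assemble the element identity
      have hzform : star (Stmt14.zuW s₁ s₂ s * Stmt14.wbW s₁ s₂ (Stmt14.zuW s₁ s₂ t) *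
            star (Stmt14.piW s₁ s₂ s t) * star (Stmt14.wbW s₁ s₂ (Stmt14.zuW s₁ s₂ s)) *
            star (Stmt14.zuW s₁ s₂ t)) * u *
            (Stmt14.zuW s₁ s₂ s * Stmt14.wbW s₁ s₂ (Stmt14.zuW s₁ s₂ t) *
            star (Stmt14.piW s₁ s₂ s t) * star (Stmt14.wbW s₁ s₂ (Stmt14.zuW s₁ s₂ s)) *
            star (Stmt14.zuW s₁ s₂ t))
          = Stmt14.zuW s₁ s₂ t * (Stmt14.wbW s₁ s₂ (Stmt14.zuW s₁ s₂ s) *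
              (Stmt14.piW s₁ s₂ s t *
                (star (Stmt14.wbW s₁ s₂ (Stmt14.zuW s₁ s₂ t)) *
                  (star (Stmt14.zuW s₁ s₂ s) * u * Stmt14.zuW s₁ s₂ s) *
                  Stmt14.wbW s₁ s₂ (Stmt14.zuW s₁ s₂ t)) *
                star (Stmt14.piW s₁ s₂ s t)) *
              star (Stmt14.wbW s₁ s₂ (Stmt14.zuW s₁ s₂ s))) * star (Stmt14.zuW s₁ s₂ t) := by
        simp only [star_mul, star_star]
        noncomm_ring
      have hgrand : star (Stmt14.zuW s₁ s₂ s * Stmt14.wbW s₁ s₂ (Stmt14.zuW s₁ s₂ t) *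
            star (Stmt14.piW s₁ s₂ s t) * star (Stmt14.wbW s₁ s₂ (Stmt14.zuW s₁ s₂ s)) *
            star (Stmt14.zuW s₁ s₂ t)) * u *
            (Stmt14.zuW s₁ s₂ s * Stmt14.wbW s₁ s₂ (Stmt14.zuW s₁ s₂ t) *
            star (Stmt14.piW s₁ s₂ s t) * star (Stmt14.wbW s₁ s₂ (Stmt14.zuW s₁ s₂ s)) *
            star (Stmt14.zuW s₁ s₂ t)) - v
          = Stmt14.zuW s₁ s₂ t *
              ((Stmt14.wbW s₁ s₂ (Stmt14.zuW s₁ s₂ s) *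
                (Stmt14.piW s₁ s₂ s t *
                  (s₁ * Stmt14.eeW s₁ s₂ t v u * star s₁
                    + star (Stmt14.wbW s₁ s₂ (Stmt14.zuW s₁ s₂ t)) * Stmt14.eeW s₁ s₂ s u v *
                      Stmt14.wbW s₁ s₂ (Stmt14.zuW s₁ s₂ t)) *
                  star (Stmt14.piW s₁ s₂ s t)
                  - s₁ * Stmt14.eeW s₁ s₂ s u v * star s₁) *
                star (Stmt14.wbW s₁ s₂ (Stmt14.zuW s₁ s₂ s)))
                - Stmt14.eeW s₁ s₂ t v u) * star (Stmt14.zuW s₁ s₂ t) := by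
        rw [hzform, hstep1, hstep2, hstep3, hstep4]
        abel
      rw [hgrand]
      -- now estimate norms
      have hsand : ∀ x : A, ‖s₁ * x * star s₁‖ ≤ ‖x‖ := fun x =>
        Stmt14.norm_sandwich s₁ x (star s₁) (le_of_eq hns1)
          (le_of_eq (by rw [norm_star]; exact hns1))
      have hsand12 : ∀ x : A, ‖s₁ * x * star s₂‖ ≤ ‖x‖ := fun x =>
        Stmt14.norm_sandwich s₁ x (star s₂) (le_of_eq hns1)
          (le_of_eq (by rw [norm_star]; exact hns2))
      have hsand21 : ∀ x : A, ‖s₂ * x * star s₁‖ ≤ ‖x‖ := fun x =>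
        Stmt14.norm_sandwich s₂ x (star s₁) (le_of_eq hns2)
          (le_of_eq (by rw [norm_star]; exact hns1))
      -- bound on ‖eeW s₁ s₂ s u v‖
      have hE1bound : ‖Stmt14.eeW s₁ s₂ s u v‖
          ≤ epsl + Real.sqrt (2 * (2 * epsl + epsl ^ 2)) := by
        have hEE : Stmt14.eeW s₁ s₂ s u v
            = s₁ * (star s * u * s - v) * star s₁
              + (s₁ * (star s * u - star s * u * s * star s) * star s₂
                + s₂ * (u * s - s * star s * u * s) * star s₁) := rfl
        have horth : (s₁ * (star s * u - star s * u * s * star s) * star s₂) *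
            star (s₂ * (u * s - s * star s * u * s) * star s₁) = 0 := by
          simp only [star_mul, star_star, mul_assoc, Stmt14.red0 _ _ h21, mul_zero]
        have hw4 := Stmt14.w4_bound s u v hs huu' hvv' (le_of_eq hnv)
        have hw1 := Stmt14.w1_bound s u v hs huu hvv (le_of_eq hnv)
        have hb : ‖s₁ * (star s * u - star s * u * s * star s) * star s₂‖
            ≤ ‖star s * u - star s * u * s * star s‖ := hsand12 _
        have hc : ‖s₂ * (u * s - s * star s * u * s) * star s₁‖
            ≤ ‖u * s - s * star s * u * s‖ := hsand21 _
        have hbc2 := Stmt14.norm_sq_add_le _ _ horth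
        have hbc : ‖s₁ * (star s * u - star s * u * s * star s) * star s₂
              + s₂ * (u * s - s * star s * u * s) * star s₁‖
            ≤ Real.sqrt (2 * (2 * epsl + epsl ^ 2)) := by
          apply Real.le_sqrt_of_sq_le
          have hn1 := norm_nonneg (s₁ * (star s * u - star s * u * s * star s) * star s₂)
          have hn2 := norm_nonneg (s₂ * (u * s - s * star s * u * s) * star s₁)
          have hn3 := norm_nonneg (star s * u - star s * u * s * star s)
          have hn4 := norm_nonneg (u * s - s * star s * u * s)
          have hn5 := norm_nonneg (star s * u * s - v)
          nlinarith [hbc2, hb, hc, hw4, hw1, he1]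
        calc ‖Stmt14.eeW s₁ s₂ s u v‖
            ≤ ‖s₁ * (star s * u * s - v) * star s₁‖
              + ‖s₁ * (star s * u - star s * u * s * star s) * star s₂
                + s₂ * (u * s - s * star s * u * s) * star s₁‖ := by
              rw [hEE]; exact norm_add_le _ _
          _ ≤ epsl + Real.sqrt (2 * (2 * epsl + epsl ^ 2)) :=
              add_le_add ((hsand _).trans he1) hbc
      -- bound on ‖eeW s₁ s₂ t v u‖
      have hE2bound : ‖Stmt14.eeW s₁ s₂ t v u‖
          ≤ epsl + Real.sqrt (2 * (2 * epsl + epsl ^ 2)) := by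
        have hEE : Stmt14.eeW s₁ s₂ t v u
            = s₁ * (star t * v * t - u) * star s₁
              + (s₁ * (star t * v - star t * v * t * star t) * star s₂
                + s₂ * (v * t - t * star t * v * t) * star s₁) := rfl
        have horth : (s₁ * (star t * v - star t * v * t * star t) * star s₂) *
            star (s₂ * (v * t - t * star t * v * t) * star s₁) = 0 := by
          simp only [star_mul, star_star, mul_assoc, Stmt14.red0 _ _ h21, mul_zero]
        have hw4 := Stmt14.w4_bound t v u ht hvv' huu' (le_of_eq hnu)
        have hw1 := Stmt14.w1_bound t v u ht hvv huu (le_of_eq hnu)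
        have hb : ‖s₁ * (star t * v - star t * v * t * star t) * star s₂‖
            ≤ ‖star t * v - star t * v * t * star t‖ := hsand12 _
        have hc : ‖s₂ * (v * t - t * star t * v * t) * star s₁‖
            ≤ ‖v * t - t * star t * v * t‖ := hsand21 _
        have hbc2 := Stmt14.norm_sq_add_le _ _ horth
        have hbc : ‖s₁ * (star t * v - star t * v * t * star t) * star s₂
              + s₂ * (v * t - t * star t * v * t) * star s₁‖
            ≤ Real.sqrt (2 * (2 * epsl + epsl ^ 2)) := by
          apply Real.le_sqrt_of_sq_le
          have hn1 := norm_nonneg (s₁ * (star t * v - star t * v * t * star t) * star s₂)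
          have hn2 := norm_nonneg (s₂ * (v * t - t * star t * v * t) * star s₁)
          have hn3 := norm_nonneg (star t * v - star t * v * t * star t)
          have hn4 := norm_nonneg (v * t - t * star t * v * t)
          have hn5 := norm_nonneg (star t * v * t - u)
          nlinarith [hbc2, hb, hc, hw4, hw1, he2]
        calc ‖Stmt14.eeW s₁ s₂ t v u‖
            ≤ ‖s₁ * (star t * v * t - u) * star s₁‖
              + ‖s₁ * (star t * v - star t * v * t * star t) * star s₂
                + s₂ * (v * t - t * star t * v * t) * star s₁‖ := by
              rw [hEE]; exact norm_add_le _ _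
          _ ≤ epsl + Real.sqrt (2 * (2 * epsl + epsl ^ 2)) :=
              add_le_add ((hsand _).trans he2) hbc
      -- main norm chain
      have hDbound : ‖Stmt14.zuW s₁ s₂ t *
            ((Stmt14.wbW s₁ s₂ (Stmt14.zuW s₁ s₂ s) *
              (Stmt14.piW s₁ s₂ s t *
                (s₁ * Stmt14.eeW s₁ s₂ t v u * star s₁
                  + star (Stmt14.wbW s₁ s₂ (Stmt14.zuW s₁ s₂ t)) * Stmt14.eeW s₁ s₂ s u v *
                    Stmt14.wbW s₁ s₂ (Stmt14.zuW s₁ s₂ t)) *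
                star (Stmt14.piW s₁ s₂ s t)
                - s₁ * Stmt14.eeW s₁ s₂ s u v * star s₁) *
              star (Stmt14.wbW s₁ s₂ (Stmt14.zuW s₁ s₂ s)))
              - Stmt14.eeW s₁ s₂ t v u) * star (Stmt14.zuW s₁ s₂ t)‖
          ≤ 2 * ‖Stmt14.eeW s₁ s₂ s u v‖ + 2 * ‖Stmt14.eeW s₁ s₂ t v u‖ := by
        rw [CStarRing.norm_mul_mem_unitary _ (Unitary.star_mem uZt),
          CStarRing.norm_mem_unitary_mul _ uZt]
        have k1 : ‖Stmt14.piW s₁ s₂ s t *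
              (s₁ * Stmt14.eeW s₁ s₂ t v u * star s₁
                + star (Stmt14.wbW s₁ s₂ (Stmt14.zuW s₁ s₂ t)) * Stmt14.eeW s₁ s₂ s u v *
                  Stmt14.wbW s₁ s₂ (Stmt14.zuW s₁ s₂ t)) *
              star (Stmt14.piW s₁ s₂ s t)‖
            ≤ ‖Stmt14.eeW s₁ s₂ t v u‖ + ‖Stmt14.eeW s₁ s₂ s u v‖ := by
          rw [CStarRing.norm_mul_mem_unitary _ (Unitary.star_mem uPi),
            CStarRing.norm_mem_unitary_mul _ uPi]
          calc ‖s₁ * Stmt14.eeW s₁ s₂ t v u * star s₁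
                + star (Stmt14.wbW s₁ s₂ (Stmt14.zuW s₁ s₂ t)) * Stmt14.eeW s₁ s₂ s u v *
                  Stmt14.wbW s₁ s₂ (Stmt14.zuW s₁ s₂ t)‖
              ≤ ‖s₁ * Stmt14.eeW s₁ s₂ t v u * star s₁‖
                + ‖star (Stmt14.wbW s₁ s₂ (Stmt14.zuW s₁ s₂ t)) * Stmt14.eeW s₁ s₂ s u v *
                  Stmt14.wbW s₁ s₂ (Stmt14.zuW s₁ s₂ t)‖ := norm_add_le _ _
            _ ≤ ‖Stmt14.eeW s₁ s₂ t v u‖ + ‖Stmt14.eeW s₁ s₂ s u v‖ := by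
                have h1 := hsand (Stmt14.eeW s₁ s₂ t v u)
                have h2 : ‖star (Stmt14.wbW s₁ s₂ (Stmt14.zuW s₁ s₂ t)) *
                    Stmt14.eeW s₁ s₂ s u v * Stmt14.wbW s₁ s₂ (Stmt14.zuW s₁ s₂ t)‖
                    = ‖Stmt14.eeW s₁ s₂ s u v‖ := by
                  rw [CStarRing.norm_mul_mem_unitary _ uWb,
                    CStarRing.norm_mem_unitary_mul _ (Unitary.star_mem uWb)]
                linarith
        have k2 : ‖Stmt14.wbW s₁ s₂ (Stmt14.zuW s₁ s₂ s) *
              (Stmt14.piW s₁ s₂ s t *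
                (s₁ * Stmt14.eeW s₁ s₂ t v u * star s₁
                  + star (Stmt14.wbW s₁ s₂ (Stmt14.zuW s₁ s₂ t)) * Stmt14.eeW s₁ s₂ s u v *
                    Stmt14.wbW s₁ s₂ (Stmt14.zuW s₁ s₂ t)) *
                star (Stmt14.piW s₁ s₂ s t)
                - s₁ * Stmt14.eeW s₁ s₂ s u v * star s₁) *
              star (Stmt14.wbW s₁ s₂ (Stmt14.zuW s₁ s₂ s))‖
            ≤ (‖Stmt14.eeW s₁ s₂ t v u‖ + ‖Stmt14.eeW s₁ s₂ s u v‖)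
              + ‖Stmt14.eeW s₁ s₂ s u v‖ := by
          rw [CStarRing.norm_mul_mem_unitary _ (Unitary.star_mem uWp),
            CStarRing.norm_mem_unitary_mul _ uWp]
          have h3 := hsand (Stmt14.eeW s₁ s₂ s u v)
          have h4 := norm_sub_le (Stmt14.piW s₁ s₂ s t *
              (s₁ * Stmt14.eeW s₁ s₂ t v u * star s₁
                + star (Stmt14.wbW s₁ s₂ (Stmt14.zuW s₁ s₂ t)) * Stmt14.eeW s₁ s₂ s u v *
                  Stmt14.wbW s₁ s₂ (Stmt14.zuW s₁ s₂ t)) *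
              star (Stmt14.piW s₁ s₂ s t))
            (s₁ * Stmt14.eeW s₁ s₂ s u v * star s₁)
          linarith
        have h5 := norm_sub_le (Stmt14.wbW s₁ s₂ (Stmt14.zuW s₁ s₂ s) *
            (Stmt14.piW s₁ s₂ s t *
              (s₁ * Stmt14.eeW s₁ s₂ t v u * star s₁
                + star (Stmt14.wbW s₁ s₂ (Stmt14.zuW s₁ s₂ t)) * Stmt14.eeW s₁ s₂ s u v *
                  Stmt14.wbW s₁ s₂ (Stmt14.zuW s₁ s₂ t)) *
              star (Stmt14.piW s₁ s₂ s t)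
              - s₁ * Stmt14.eeW s₁ s₂ s u v * star s₁) *
            star (Stmt14.wbW s₁ s₂ (Stmt14.zuW s₁ s₂ s))) (Stmt14.eeW s₁ s₂ t v u)
        linarith
      -- numerical endgame
      rcases le_or_gt (4 / 121 : ℝ) epsl with hbig | hsmall
      · have htriv : ‖Stmt14.zuW s₁ s₂ t *
              ((Stmt14.wbW s₁ s₂ (Stmt14.zuW s₁ s₂ s) *
                (Stmt14.piW s₁ s₂ s t *
                  (s₁ * Stmt14.eeW s₁ s₂ t v u * star s₁
                    + star (Stmt14.wbW s₁ s₂ (Stmt14.zuW s₁ s₂ t)) * Stmt14.eeW s₁ s₂ s u v *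
                      Stmt14.wbW s₁ s₂ (Stmt14.zuW s₁ s₂ t)) *
                  star (Stmt14.piW s₁ s₂ s t)
                  - s₁ * Stmt14.eeW s₁ s₂ s u v * star s₁) *
                star (Stmt14.wbW s₁ s₂ (Stmt14.zuW s₁ s₂ s)))
                - Stmt14.eeW s₁ s₂ t v u) * star (Stmt14.zuW s₁ s₂ t)‖ ≤ 2 := by
          have := hgrand.symm
          rw [this]
          calc ‖star (Stmt14.zuW s₁ s₂ s * Stmt14.wbW s₁ s₂ (Stmt14.zuW s₁ s₂ t) *
                star (Stmt14.piW s₁ s₂ s t) * star (Stmt14.wbW s₁ s₂ (Stmt14.zuW s₁ s₂ s)) *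
                star (Stmt14.zuW s₁ s₂ t)) * u *
                (Stmt14.zuW s₁ s₂ s * Stmt14.wbW s₁ s₂ (Stmt14.zuW s₁ s₂ t) *
                star (Stmt14.piW s₁ s₂ s t) * star (Stmt14.wbW s₁ s₂ (Stmt14.zuW s₁ s₂ s)) *
                star (Stmt14.zuW s₁ s₂ t)) - v‖
              ≤ ‖star (Stmt14.zuW s₁ s₂ s * Stmt14.wbW s₁ s₂ (Stmt14.zuW s₁ s₂ t) *
                star (Stmt14.piW s₁ s₂ s t) * star (Stmt14.wbW s₁ s₂ (Stmt14.zuW s₁ s₂ s)) *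
                star (Stmt14.zuW s₁ s₂ t)) * u *
                (Stmt14.zuW s₁ s₂ s * Stmt14.wbW s₁ s₂ (Stmt14.zuW s₁ s₂ t) *
                star (Stmt14.piW s₁ s₂ s t) * star (Stmt14.wbW s₁ s₂ (Stmt14.zuW s₁ s₂ s)) *
                star (Stmt14.zuW s₁ s₂ t))‖ + ‖v‖ := norm_sub_le _ _
            _ ≤ 2 := by
                have hz : Stmt14.zuW s₁ s₂ s * Stmt14.wbW s₁ s₂ (Stmt14.zuW s₁ s₂ t) *
                    star (Stmt14.piW s₁ s₂ s t) *
                    star (Stmt14.wbW s₁ s₂ (Stmt14.zuW s₁ s₂ s)) *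
                    star (Stmt14.zuW s₁ s₂ t) ∈ unitary A :=
                  mul_mem (mul_mem (mul_mem (mul_mem uZs uWb) (Unitary.star_mem uPi))
                    (Unitary.star_mem uWp)) (Unitary.star_mem uZt)
                rw [CStarRing.norm_mul_mem_unitary _ hz,
                  CStarRing.norm_mem_unitary_mul _ (Unitary.star_mem hz), hnu, hnv]
                norm_num
        have hsq : (2 : ℝ) / 11 ≤ Real.sqrt epsl := by
          apply Real.le_sqrt_of_sq_le
          nlinarith
        linarith [htriv, hsq]
      · have hx2 : Real.sqrt epsl ^ 2 = epsl := Real.sq_sqrt heps0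
        have hx0 : (0 : ℝ) ≤ Real.sqrt epsl := Real.sqrt_nonneg _
        have hy2 : Real.sqrt (2 * (2 * epsl + epsl ^ 2)) ^ 2 = 2 * (2 * epsl + epsl ^ 2) :=
          Real.sq_sqrt (by nlinarith)
        have hy0 : (0 : ℝ) ≤ Real.sqrt (2 * (2 * epsl + epsl ^ 2)) := Real.sqrt_nonneg _
        have hxb : Real.sqrt epsl ≤ 2 / 11 := by
          have h1 : epsl ≤ ((2 : ℝ) / 11) ^ 2 := by nlinarith
          calc Real.sqrt epsl ≤ Real.sqrt (((2 : ℝ) / 11) ^ 2) := Real.sqrt_le_sqrt h1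
            _ = 2 / 11 := Real.sqrt_sq (by norm_num)
        have h110 : 110 * Real.sqrt (2 * (2 * epsl + epsl ^ 2)) ≤ 222 * Real.sqrt epsl := by
          have hsq : (110 * Real.sqrt (2 * (2 * epsl + epsl ^ 2))) ^ 2
              ≤ (222 * Real.sqrt epsl) ^ 2 := by
            rw [mul_pow, mul_pow, hx2, hy2]
            nlinarith
          calc 110 * Real.sqrt (2 * (2 * epsl + epsl ^ 2))
              = Real.sqrt ((110 * Real.sqrt (2 * (2 * epsl + epsl ^ 2))) ^ 2) :=
                (Real.sqrt_sq (by positivity)).symm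
            _ ≤ Real.sqrt ((222 * Real.sqrt epsl) ^ 2) := Real.sqrt_le_sqrt hsq
            _ = 222 * Real.sqrt epsl := Real.sqrt_sq (by positivity)
        have hfin : 2 * ‖Stmt14.eeW s₁ s₂ s u v‖ + 2 * ‖Stmt14.eeW s₁ s₂ t v u‖
            ≤ 11 * Real.sqrt epsl := by
          have hb1 := hE1bound
          have hb2 := hE2bound
          nlinarith [h110, hxb, hx0, hx2]
        linarith [hDbound, hfin]
end

section
/- With the notation of the setup (integers n ≥ 1, m ≥ 1 with 25·m² < 2·(2n+1)², q = (2n+1)², the vector ξ = ξ₀/‖ξ₀‖ in ℂ^q, and z the matrix of the cyclic shift by m), one has ‖ξ − z·ξ‖ ≤ 2·√3·(1 + 1/(2n))·(m/(2n+1)). -/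
/-!
Write `τ_a` for translation by `a` on `ℓ²(ℤ/q)`, so that `z = τ_{m·1} = (τ_1)^m`. Since `τ_1` is an
isometry, the triangle inequality along the orbit `ξ₀, τ_1 ξ₀, …, τ_1^m ξ₀` gives
`‖ξ₀ - z ξ₀‖ ≤ m ‖ξ₀ - τ_1 ξ₀‖`. The tent `ξ₀` changes by exactly `1/n` across each of its `2n`
sloped steps and is constant elsewhere, so `‖ξ₀ - τ_1 ξ₀‖² ≤ 2/n`, while
`‖ξ₀‖² = (2n² + 1)/(3n) ≥ 2n/3`. Hence `‖ξ - z ξ‖ ≤ m √(2/n) / √(2n/3) = √3 m/n`, and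
`√3 m/n = 2√3 (1 + 1/(2n)) m/(2n+1)`.
-/

open Finset

theorem Isometry.dist_iterate_succ {α : Type*} [PseudoMetricSpace α] {f : α → α}
    (hf : Isometry f) (x : α) (i : ℕ) : dist (f^[i] x) (f^[i + 1] x) = dist x (f x) := by
  induction i with
  | zero => rfl
  | succ i ih =>
    rw [Function.iterate_succ_apply', Function.iterate_succ_apply' f (i + 1), hf.dist_eq, ih]

theorem Isometry.dist_iterate_le {α : Type*} [PseudoMetricSpace α] {f : α → α}
    (hf : Isometry f) (x : α) (m : ℕ) : dist x (f^[m] x) ≤ m * dist x (f x) := by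
  have h := dist_le_range_sum_dist (fun i => f^[i] x) m
  simp only [hf.dist_iterate_succ, sum_const, card_range, nsmul_eq_mul] at h
  exact h

namespace EuclideanSpace
variable {𝕜 G : Type*} [RCLike 𝕜] [AddCommGroup G] [Fintype G]

variable (𝕜) in
noncomputable def translate (a : G) : EuclideanSpace 𝕜 G ≃ₗᵢ[𝕜] EuclideanSpace 𝕜 G :=
  LinearIsometryEquiv.piLpCongrLeft 2 𝕜 𝕜 (Equiv.addRight a)

@[simp] theorem translate_apply (a : G) (v : EuclideanSpace 𝕜 G) (i : G) :
    translate 𝕜 a v i = v (i - a) := by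
  simp [translate, sub_eq_add_neg]

theorem translate_iterate (a : G) (m : ℕ) : (translate 𝕜 a)^[m] = translate 𝕜 (m • a) := by
  induction m with
  | zero => ext v i; simp
  | succ m ih =>
    ext v i
    rw [Function.iterate_succ_apply', ih]
    simp [succ_nsmul, sub_add_eq_sub_sub_swap]

theorem norm_sub_translate_nsmul_le (v : EuclideanSpace 𝕜 G) (a : G) (m : ℕ) :
    ‖v - translate 𝕜 (m • a) v‖ ≤ m * ‖v - translate 𝕜 a v‖ := by
  simpa [← translate_iterate, dist_eq_norm] using
    (translate 𝕜 a).isometry.dist_iterate_le v m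

section Fin
variable {q : ℕ}

theorem norm_sq_eq_sum_range (f : ℕ → ℝ) (v : EuclideanSpace 𝕜 (Fin q))
    (hv : ∀ i, v i = f i) : ‖v‖ ^ 2 = ∑ k ∈ range q, f k ^ 2 := by
  simp [norm_sq_eq, hv, ← Fin.sum_univ_eq_sum_range]

theorem norm_sub_translate_one_sq [NeZero q] (f : ℕ → ℝ) (hf : f q = f 0)
    (v : EuclideanSpace 𝕜 (Fin q)) (hv : ∀ i, v i = f i) :
    ‖v - translate 𝕜 1 v‖ ^ 2 = ∑ k ∈ range q, (f (k + 1) - f k) ^ 2 := by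
  have hwrap : ∀ i : Fin q, f ((i + 1 : Fin q) : ℕ) = f (i + 1) := fun i => by
    rw [Fin.val_add, Fin.val_one', Nat.add_mod_mod]
    rcases (Nat.add_one_le_of_lt i.isLt).lt_or_eq with h | h
    · rw [Nat.mod_eq_of_lt h]
    · rw [h, Nat.mod_self, hf]
  rw [norm_sq_eq, ← Equiv.sum_comp (Equiv.addRight (1 : Fin q)), ← Fin.sum_univ_eq_sum_range]
  refine Fintype.sum_congr _ _ fun i => ?_
  simp only [PiLp.sub_apply, translate_apply, Equiv.coe_addRight, add_sub_cancel_right, hv,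
    hwrap]
  rw [← RCLike.ofReal_sub, RCLike.norm_ofReal, sq_abs]

end Fin

end EuclideanSpace

open EuclideanSpace

open Fin.NatCast in
theorem Matrix.toEuclideanLin_cyclicShift {𝕜 : Type*} [RCLike 𝕜] {q : ℕ} [NeZero q] (m : ℕ) :
    Matrix.toEuclideanLin (Matrix.of fun i j : Fin q =>
      if (i : ℕ) = ((j : ℕ) + m) % q then (1 : 𝕜) else 0) = (translate 𝕜 (m • 1)).toLinearMap := by
  ext v i
  have hcond : ∀ j : Fin q, (i : ℕ) = ((j : ℕ) + m) % q ↔ j = i - m • 1 := by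
    intro j
    rw [eq_sub_iff_add_eq, eq_comm, nsmul_one, Fin.ext_iff, Fin.val_add, Fin.val_natCast,
      Nat.add_mod_mod]
  simp [Matrix.mulVec, dotProduct, hcond]

/-- The coordinates of `ξ₀` as a maximum of affine functions of `k`: this makes the tent visibly
`1/n`-Lipschitz, and it takes the same value at `k = q` as at `k = 0`, which handles the
wrap-around of the cyclic shift. -/
noncomputable def cyclicTent (n q k : ℕ) : ℝ :=
  max 0 (max (((n : ℝ) - k) / n) (((k : ℝ) + n - q) / n))

section CyclicTent
variable {n q k : ℕ}

theorem cyclicTent_of_lt (hq : 2 * n ≤ q) (hk : k < n) : cyclicTent n q k = (n - k) / n := by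
  have hk' : (k : ℝ) < n := by exact_mod_cast hk
  have hq' : 2 * (n : ℝ) ≤ q := by exact_mod_cast hq
  rw [cyclicTent, max_eq_left (div_le_div_of_nonneg_right (by linarith) (by positivity)),
    max_eq_right (div_nonneg (by linarith) (by positivity))]

theorem cyclicTent_eq_zero (h₁ : n ≤ k) (h₂ : k + n ≤ q) : cyclicTent n q k = 0 := by
  have h₁' : (n : ℝ) ≤ k := by exact_mod_cast h₁
  have h₂' : (k : ℝ) + n ≤ q := by exact_mod_cast h₂
  rw [cyclicTent, max_eq_left (max_le (div_nonpos_of_nonpos_of_nonneg (by linarith) (by positivity))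
    (div_nonpos_of_nonpos_of_nonneg (by linarith) (by positivity)))]

theorem cyclicTent_of_le (hq : 2 * n ≤ q) (hk : q ≤ k + n) :
    cyclicTent n q k = (k + n - q) / n := by
  have hk' : (q : ℝ) ≤ k + n := by exact_mod_cast hk
  have hq' : 2 * (n : ℝ) ≤ q := by exact_mod_cast hq
  rw [cyclicTent, max_eq_right (div_le_div_of_nonneg_right (by linarith) (by positivity)),
    max_eq_right (div_nonneg (by linarith) (by positivity))]

theorem cyclicTent_self : cyclicTent n q q = cyclicTent n q 0 := by
  simp only [cyclicTent, Nat.cast_zero, sub_zero, zero_add, add_sub_cancel_left]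
  rw [max_comm ((n - q : ℝ) / n)]

theorem abs_cyclicTent_succ_sub_le : |cyclicTent n q (k + 1) - cyclicTent n q k| ≤ 1 / n := by
  refine (abs_max_sub_max_le_max _ _ _ _).trans (max_le (by simp) ?_)
  refine (abs_max_sub_max_le_max _ _ _ _).trans (max_le ?_ ?_) <;>
  · rw [← sub_div, abs_div, Nat.abs_cast]
    push_cast
    ring_nf
    simp

theorem cyclicTent_eq_ite (hq : 2 * n ≤ q) :
    ((cyclicTent n q k : ℝ) : ℂ) = if k < n then (((n - k : ℕ) : ℂ) / n)
      else if k ≤ q - n then 0 else (((k - (q - n) : ℕ) : ℂ) / n) := by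
  split_ifs with h₁ h₂
  · rw [cyclicTent_of_lt hq h₁]
    push_cast [Nat.cast_sub h₁.le]
    rfl
  · rw [cyclicTent_eq_zero (not_lt.1 h₁) (by omega), Complex.ofReal_zero]
  · rw [cyclicTent_of_le hq (by omega), Nat.cast_sub (by omega : q - n ≤ k),
      Nat.cast_sub (by omega : n ≤ q)]
    push_cast
    ring

theorem sum_range_cyclicTent_succ_sub_sq_le (hq : 2 * n ≤ q) :
    ∑ k ∈ range q, (cyclicTent n q (k + 1) - cyclicTent n q k) ^ 2 ≤ 2 / n := by
  have hstep : ∀ k, (cyclicTent n q (k + 1) - cyclicTent n q k) ^ 2 ≤ (1 / n) ^ 2 := fun k => by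
    rw [← sq_abs]
    exact pow_le_pow_left₀ (abs_nonneg _) abs_cyclicTent_succ_sub_le 2
  have hflat : ∑ k ∈ Ico n (q - n), (cyclicTent n q (k + 1) - cyclicTent n q k) ^ 2 = 0 :=
    sum_eq_zero fun k hk => by
      obtain ⟨h₁, h₂⟩ := mem_Ico.1 hk
      rw [cyclicTent_eq_zero (by omega) (by omega), cyclicTent_eq_zero h₁ (by omega)]
      ring
  rw [← sum_range_add_sum_Ico _ (by omega : n ≤ q),
    ← sum_Ico_consecutive _ (by omega : n ≤ q - n) (by omega : q - n ≤ q), hflat, zero_add]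
  calc _ ≤ (range n).card • (1 / (n : ℝ)) ^ 2 + (Ico (q - n) q).card • (1 / (n : ℝ)) ^ 2 :=
        add_le_add (sum_le_card_nsmul _ _ _ fun k _ => hstep k)
          (sum_le_card_nsmul _ _ _ fun k _ => hstep k)
    _ = 2 / n := by
      rw [card_range, Nat.card_Ico, Nat.sub_sub_self (by omega), nsmul_eq_mul, div_pow, one_pow,
        mul_one_div, sq, div_self_mul_self']
      ring

theorem sum_range_sub_sq_add_sq (x : ℝ) (N : ℕ) :
    ∑ j ∈ range N, ((x - j) ^ 2 + (j : ℝ) ^ 2)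
      = N * x ^ 2 - N * (N - 1) * x + (N - 1) * N * (2 * N - 1) / 3 := by
  induction N with
  | zero => simp
  | succ N ih =>
    rw [sum_range_succ, ih]
    push_cast
    ring

theorem two_mul_div_three_le_sum_range_cyclicTent_sq (hn : 0 < n) (hq : 2 * n ≤ q) :
    2 * n / 3 ≤ ∑ k ∈ range q, cyclicTent n q k ^ 2 := by
  have hn' : (0 : ℝ) < n := by exact_mod_cast hn
  have hup : ∑ k ∈ range n, cyclicTent n q k ^ 2 = ∑ j ∈ range n, (((n : ℝ) - j) / n) ^ 2 :=
    sum_congr rfl fun k hk => by rw [cyclicTent_of_lt hq (mem_range.1 hk)]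
  have hdown : ∑ j ∈ range (q - (q - n)), cyclicTent n q (q - n + j) ^ 2
      = ∑ j ∈ range n, ((j : ℝ) / n) ^ 2 := by
    rw [Nat.sub_sub_self (by omega)]
    refine sum_congr rfl fun j _ => ?_
    rw [cyclicTent_of_le hq (by omega), Nat.cast_add, Nat.cast_sub (by omega)]
    ring_nf
  have hflat : 0 ≤ ∑ k ∈ Ico n (q - n), cyclicTent n q k ^ 2 :=
    sum_nonneg fun _ _ => sq_nonneg _
  have htotal : ∑ j ∈ range n, (((n : ℝ) - j) / n) ^ 2 + ∑ j ∈ range n, ((j : ℝ) / n) ^ 2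
      = (2 * n ^ 3 + n) / (3 * n ^ 2) := by
    simp_rw [← sum_add_distrib, div_pow, ← add_div, ← sum_div, sum_range_sub_sq_add_sq]
    field_simp
    ring
  rw [← sum_range_add_sum_Ico _ (by omega : n ≤ q),
    ← sum_Ico_consecutive _ (by omega : n ≤ q - n) (by omega : q - n ≤ q),
    sum_Ico_eq_sum_range _ (q - n), hup, hdown]
  calc 2 * (n : ℝ) / 3 ≤ (2 * n ^ 3 + n) / (3 * n ^ 2) := by
        rw [div_le_div_iff₀ (by norm_num) (by positivity)]
        nlinarith
    _ ≤ _ := by linarith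

end CyclicTent

theorem stmt_17_general (n m : ℕ) (hn : 1 ≤ n)
    (q : ℕ) (hq : q = (2 * n + 1) ^ 2)
    (ξ₀ : EuclideanSpace ℂ (Fin q))
    (hξ₀ : ∀ k : Fin q, ξ₀ k =
      if (k : ℕ) < n then (((n - (k : ℕ) : ℕ) : ℂ) / (n : ℂ))
      else if (k : ℕ) ≤ q - n then 0
      else ((((k : ℕ) - (q - n) : ℕ) : ℂ) / (n : ℂ)))
    (ξ : EuclideanSpace ℂ (Fin q)) (hξ : ξ = ((‖ξ₀‖ : ℂ))⁻¹ • ξ₀)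
    (z : Matrix (Fin q) (Fin q) ℂ)
    (hz : z = Matrix.of fun i j : Fin q =>
      if (i : ℕ) = ((j : ℕ) + m) % q then (1 : ℂ) else 0) :
    ‖ξ - Matrix.toEuclideanLin z ξ‖
      ≤ 2 * Real.sqrt 3 * (1 + 1 / (2 * (n : ℝ))) * ((m : ℝ) / (2 * (n : ℝ) + 1)) := by
  have hq2n : 2 * n ≤ q := by rw [hq]; nlinarith
  have : NeZero q := ⟨by omega⟩
  have hn' : (1 : ℝ) ≤ n := by exact_mod_cast hn
  have hn0 : (n : ℝ) ≠ 0 := by positivity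
  have hv : ∀ k : Fin q, ξ₀ k = (cyclicTent n q k : ℂ) := fun k => by
    rw [hξ₀, cyclicTent_eq_ite hq2n]
  have hnorm : 2 * n / 3 ≤ ‖ξ₀‖ ^ 2 := by
    rw [norm_sq_eq_sum_range (cyclicTent n q) ξ₀ hv]
    exact two_mul_div_three_le_sum_range_cyclicTent_sq hn hq2n
  have hstep : ‖ξ₀ - translate ℂ 1 ξ₀‖ ^ 2 ≤ 2 / n := by
    rw [norm_sub_translate_one_sq (cyclicTent n q) cyclicTent_self ξ₀ hv]
    exact sum_range_cyclicTent_succ_sub_sq_le hq2n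
  have hratio : ‖ξ₀ - translate ℂ 1 ξ₀‖ * n ≤ √3 * ‖ξ₀‖ := by
    rw [← pow_le_pow_iff_left₀ (by positivity) (by positivity) two_ne_zero, mul_pow, mul_pow,
      Real.sq_sqrt zero_le_three]
    calc _ ≤ 2 / (n : ℝ) * n ^ 2 := by gcongr
      _ = 3 * (2 * n / 3) := by field_simp
      _ ≤ 3 * ‖ξ₀‖ ^ 2 := by gcongr
  have hξ₀_pos : 0 < ‖ξ₀‖ := by
    nlinarith [norm_nonneg ξ₀]
  have hzξ : ‖ξ - Matrix.toEuclideanLin z ξ‖ = ‖ξ₀ - translate ℂ (m • 1) ξ₀‖ / ‖ξ₀‖ := by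
    rw [hz, Matrix.toEuclideanLin_cyclicShift, hξ, LinearMap.map_smul, ← smul_sub, norm_smul,
      norm_inv, Complex.norm_real, norm_norm, inv_mul_eq_div]
    rfl
  calc ‖ξ - Matrix.toEuclideanLin z ξ‖ ≤ m * ‖ξ₀ - translate ℂ 1 ξ₀‖ / ‖ξ₀‖ := by
        rw [hzξ]
        gcongr
        exact norm_sub_translate_nsmul_le ξ₀ 1 m
    _ ≤ √3 * m / n := by
        rw [div_le_div_iff₀ hξ₀_pos (by positivity)]
        nlinarith [m.cast_nonneg (α := ℝ)]
    _ = _ := by field_simp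

/-- With `q = (2n+1)²`, `25·m² < 2·(2n+1)²`, the unit vector
`ξ = ξ₀/‖ξ₀‖ ∈ ℂ^q` and `z` the cyclic shift by `m`, one has
`‖ξ − z·ξ‖ ≤ 2·√3·(1 + 1/(2n))·(m/(2n+1))`. -/
theorem stmt_17 (n m : ℕ) (hn : 1 ≤ n) (hm : 1 ≤ m)
    (h25 : 25 * m ^ 2 < 2 * (2 * n + 1) ^ 2)
    (q : ℕ) (hq : q = (2 * n + 1) ^ 2)
    (ξ₀ : EuclideanSpace ℂ (Fin q))
    (hξ₀ : ∀ k : Fin q, ξ₀ k =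
      if (k : ℕ) < n then (((n - (k : ℕ) : ℕ) : ℂ) / (n : ℂ))
      else if (k : ℕ) ≤ q - n then 0
      else ((((k : ℕ) - (q - n) : ℕ) : ℂ) / (n : ℂ)))
    (ξ : EuclideanSpace ℂ (Fin q)) (hξ : ξ = ((‖ξ₀‖ : ℂ))⁻¹ • ξ₀)
    (z : Matrix (Fin q) (Fin q) ℂ)
    (hz : z = Matrix.of fun i j : Fin q =>
      if (i : ℕ) = ((j : ℕ) + m) % q then (1 : ℂ) else 0) :
    ‖ξ - Matrix.toEuclideanLin z ξ‖
      ≤ 2 * Real.sqrt 3 * (1 + 1 / (2 * (n : ℝ))) * ((m : ℝ) / (2 * (n : ℝ) + 1)) :=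
  stmt_17_general n m hn q hq ξ₀ hξ₀ ξ hξ z hz
end

section
/- Let n ≥ 49 and m ≥ 1 be integers with 25·m² < 2·(2n+1)²; set q = (2n+1)² and ζ = exp(2πi/q). Let y ∈ M_q(ℂ) be the diagonal matrix with diagonal entries ζ^{k·m} (k = 0,…,q−1) and let z ∈ M_q(ℂ) be the permutation matrix of the cyclic shift by m (z·e_k = e_{(k+m) mod q}). Then for all real numbers α, β, γ ≥ 0, the operator norm (as operators on ℓ²(ℂ^q)) satisfies ‖α·1 + β·y + γ·z‖ ≥ (α + β + γ)·(1 − (25/2)·m²/(2n+1)²)^(1/2). -/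
/-!
Test the operator `α + βy + γz` against the tent vector `w k = max (N - d k) 0`, where
`N = 2n + 1` and `d k = min k (q - k)` is the distance from `k` to `0` in `ℤ/q`. Its quadratic form
is `α ∑ w² + β ∑ w_k² cos (2πkm/q) + γ ∑ w_k w_{k-m}`. Since `1 - cos t ≤ t²/2` and the phase
`2πkm/q` may be replaced by `2π d_k m/q`, the clock term loses at most `(2πm/q)²/2 · ∑ (w_k d_k)²
≤ π²m²N/4`; since `w` is `1`-Lipschitz for `d`, the shift term loses at most
`½ ∑ (w_k - w_{k-m})² ≤ (N + m)m²`. Both losses are at most `(25m²/4N²) ∑ w²` because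
`∑ w² ≥ 2N³/3`, and `√(1 - 2ε) ≤ 1 - ε` finishes the proof.
-/

open Fin.NatCast Finset

namespace Fin

variable {q : ℕ}

def circDist (k : Fin q) : ℕ := min k (q - k)

theorem circDist_le_val (k : Fin q) : k.circDist ≤ k := min_le_left _ _

theorem circDist_add_le (a b : Fin q) : (a + b).circDist ≤ a.circDist + b.circDist := by
  have ha := a.isLt
  have hb := b.isLt
  unfold circDist
  rw [Fin.val_add]
  rcases lt_or_ge ((a : ℕ) + b) q with h | h
  · rw [Nat.mod_eq_of_lt h]; omega
  · rw [Nat.mod_eq_sub_mod h, Nat.mod_eq_of_lt (by omega)]; omega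

theorem circDist_sub_le (a b : Fin q) : (a - b).circDist ≤ a.circDist + b.circDist := by
  have ha := a.isLt
  have hb := b.isLt
  have hsub : ((a - b : Fin q) : ℕ) = (q - b + a) % q := by rw [Fin.sub_def]
  unfold circDist
  rw [hsub]
  rcases lt_or_ge (q - b + (a : ℕ)) q with h | h
  · rw [Nat.mod_eq_of_lt h]; omega
  · rw [Nat.mod_eq_sub_mod h, Nat.mod_eq_of_lt (by omega)]; omega

theorem card_filter_circDist_lt_le (L : ℕ) : #{k : Fin q | k.circDist < L} ≤ 2 * L := by
  calc #{k : Fin q | k.circDist < L} ≤ #(range L ∪ Ico (q - L) q) := by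
        refine card_le_card_of_injOn Fin.val (fun k hk => ?_) Fin.val_injective.injOn
        have := k.isLt
        simp only [coe_filter, mem_univ, true_and, Set.mem_ofPred_eq, circDist, inf_lt_iff] at hk
        simp only [coe_union, coe_range, coe_Ico, Set.mem_union, Set.mem_Iio, Set.mem_Ico]
        omega
    _ ≤ #(range L) + #(Ico (q - L) q) := card_union_le _ _
    _ ≤ 2 * L := by simp only [card_range, Nat.card_Ico]; omega

theorem circDist_natCast_le [NeZero q] (m : ℕ) : (m : Fin q).circDist ≤ m :=
  (circDist_le_val _).trans (by rw [Fin.val_natCast]; exact Nat.mod_le m q)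

theorem sum_le_of_eq_zero_of_le_circDist {L : ℕ} {f : Fin q → ℝ} {B : ℝ} (hB : 0 ≤ B)
    (hf : ∀ k, f k ≤ B) (hsupp : ∀ k : Fin q, L ≤ k.circDist → f k = 0) :
    ∑ k, f k ≤ 2 * L * B := by
  rw [← sum_filter_of_ne (p := fun k : Fin q => k.circDist < L)
    fun k _ hk => by by_contra h; exact hk (hsupp k (not_lt.1 h))]
  calc _ ≤ #{k : Fin q | k.circDist < L} • B := sum_le_card_nsmul _ _ _ fun k _ => hf k
    _ ≤ 2 * L * B := by
      rw [nsmul_eq_mul]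
      gcongr
      exact_mod_cast card_filter_circDist_lt_le L

theorem cos_circDist_mul (k : Fin q) (m : ℕ) :
    Real.cos (2 * Real.pi * ((k : ℕ) * m) / q) = Real.cos (2 * Real.pi * (k.circDist * m) / q) := by
  have hk := k.isLt
  have hq : (q : ℝ) ≠ 0 := Nat.cast_ne_zero.2 (by omega)
  unfold circDist
  rcases le_total (k : ℕ) (q - k) with h | h
  · rw [min_eq_left h]
  · rw [min_eq_right h, ← Real.cos_nat_mul_two_pi_sub _ m]
    congr 1
    push_cast [Nat.cast_sub hk.le]
    field_simp

end Fin

theorem sum_mul_comp_sub_eq {G : Type*} [AddCommGroup G] [Fintype G] (w : G → ℝ) (s : G) :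
    ∑ k, w k * w (k - s) = ∑ k, w k ^ 2 - (∑ k, (w k - w (k - s)) ^ 2) / 2 := by
  have hshift : ∑ k, w (k - s) ^ 2 = ∑ k, w k ^ 2 := (Equiv.subRight s).sum_comp (w · ^ 2)
  have hexpand : ∑ k, (w k - w (k - s)) ^ 2
      = ∑ k, w k ^ 2 + ∑ k, w (k - s) ^ 2 - 2 * ∑ k, w k * w (k - s) := by
    rw [mul_sum, ← sum_add_distrib, ← sum_sub_distrib]
    exact sum_congr rfl fun k _ => by ring
  rw [hexpand, hshift]
  ring

theorem sum_sq_mul_cos_ge {q : ℕ} (w : Fin q → ℝ) (m : ℕ) :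
    ∑ k, w k ^ 2 - (2 * Real.pi * m / q) ^ 2 / 2 * ∑ k : Fin q, (w k * k.circDist) ^ 2
      ≤ ∑ k : Fin q, w k ^ 2 * Real.cos (2 * Real.pi * ((k : ℕ) * m) / q) := by
  rw [mul_sum, ← sum_sub_distrib]
  refine sum_le_sum fun k _ => ?_
  rw [Fin.cos_circDist_mul]
  calc _ = w k ^ 2 * (1 - (2 * Real.pi * (k.circDist * m) / q) ^ 2 / 2) := by ring
    _ ≤ _ := mul_le_mul_of_nonneg_left Real.one_sub_sq_div_two_le_cos (sq_nonneg _)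

theorem sum_range_sub_sq (N : ℕ) :
    ∑ j ∈ range N, ((N - j : ℕ) : ℝ) ^ 2 = N * (N + 1) * (2 * N + 1) / 6 := by
  induction N with
  | zero => simp
  | succ N ih =>
    rw [sum_range_succ', Nat.sub_zero]
    simp only [Nat.succ_sub_succ, ih]
    push_cast
    ring

theorem ContinuousLinearMap.le_opNorm_of_mul_sq_norm_le_re_inner {𝕜 E : Type*} [RCLike 𝕜]
    [NormedAddCommGroup E] [InnerProductSpace 𝕜 E] (T : E →L[𝕜] E) {x : E} (hx : x ≠ 0) {c : ℝ}
    (h : c * ‖x‖ ^ 2 ≤ RCLike.re (inner 𝕜 (T x) x)) : c ≤ ‖T‖ := by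
  calc c ≤ T.rayleighQuotient x := by
        rwa [rayleighQuotient, reApplyInnerSelf_apply, le_div_iff₀ (by positivity)]
    _ ≤ |T.rayleighQuotient x| := le_abs_self _
    _ ≤ ‖T‖ := T.rayleighQuotient_le_norm x

theorem EuclideanSpace.norm_sq_toLp_ofReal {ι : Type*} [Fintype ι] (w : ι → ℝ) :
    ‖WithLp.toLp 2 (fun i => (w i : ℂ))‖ ^ 2 = ∑ i, w i ^ 2 := by
  simp [EuclideanSpace.norm_sq_eq]

theorem Complex.re_exp_two_pi_mul_I_div_pow (q n : ℕ) :
    (Complex.exp (2 * Real.pi * Complex.I / q) ^ n).re = Real.cos (2 * Real.pi * n / q) := by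
  rw [← Complex.exp_nat_mul, ← Complex.exp_ofReal_mul_I_re]
  congr 2
  push_cast
  ring

section Tent

variable {q : ℕ}

-- Truncated subtraction makes this `max (N - k.circDist) 0`.
def tent (N : ℕ) (k : Fin q) : ℝ := (N - k.circDist : ℕ)

theorem tent_nonneg (N : ℕ) (k : Fin q) : 0 ≤ tent N k := Nat.cast_nonneg _

theorem tent_eq_zero_of_le {N : ℕ} {k : Fin q} (h : N ≤ k.circDist) : tent N k = 0 := by
  simp [tent, Nat.sub_eq_zero_of_le h]

theorem tent_mul_circDist_le (N : ℕ) (k : Fin q) : tent N k * k.circDist ≤ (N : ℝ) ^ 2 / 4 := by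
  rcases lt_or_ge k.circDist N with h | h
  · rw [tent, Nat.cast_sub h.le]
    nlinarith [sq_nonneg ((N : ℝ) - 2 * k.circDist)]
  · rw [tent_eq_zero_of_le h, zero_mul]
    positivity

theorem sum_sq_tent_mul_circDist_le (N : ℕ) :
    ∑ k : Fin q, (tent N k * k.circDist) ^ 2 ≤ (N : ℝ) ^ 5 / 8 := by
  have h := Fin.sum_le_of_eq_zero_of_le_circDist (L := N) (B := (N : ℝ) ^ 4 / 16) (by positivity)
    (f := fun k : Fin q => (tent N k * k.circDist) ^ 2)
    (fun k => by
      have := tent_mul_circDist_le N k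
      have : 0 ≤ tent N k * k.circDist := mul_nonneg (tent_nonneg N k) (Nat.cast_nonneg _)
      nlinarith)
    (fun k hk => by simp [tent_eq_zero_of_le hk])
  linarith

theorem sum_tent_sq_ge (N : ℕ) (hN : 2 * N ≤ q + 1) :
    2 * (N : ℝ) ^ 3 / 3 ≤ ∑ k : Fin q, tent N k ^ 2 := by
  rcases Nat.eq_zero_or_pos N with rfl | hN0
  · simpa using sum_nonneg fun (k : Fin q) _ => sq_nonneg (tent 0 k)
  set F : ℕ → ℝ := fun j => ((N - j : ℕ) : ℝ) ^ 2
  have hsum : ∑ k : Fin q, tent N k ^ 2 = ∑ j ∈ range q, F (min j (q - j)) :=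
    Fin.sum_univ_eq_sum_range (fun j => F (min j (q - j))) q
  have hdisj : Disjoint (range N) (Ico (q + 1 - N) q) := by
    rw [Finset.disjoint_left]
    intro j hj hj'
    simp only [mem_range, mem_Ico] at hj hj'
    omega
  have hsub : range N ∪ Ico (q + 1 - N) q ⊆ range q := by
    intro j
    simp only [mem_union, mem_range, mem_Ico]
    omega
  have hleft : ∑ j ∈ range N, F (min j (q - j)) = ∑ j ∈ range N, F j :=
    sum_congr rfl fun j hj => by rw [min_eq_left (by simp only [mem_range] at hj; omega)]
  have hright : ∑ j ∈ Ico (q + 1 - N) q, F (min j (q - j)) = ∑ j ∈ range N, F j - N ^ 2 := by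
    calc _ = ∑ j ∈ Ico (q + 1 - N) q, F (q - j) :=
          sum_congr rfl fun j hj => by rw [min_eq_right (by simp only [mem_Ico] at hj; omega)]
      _ = ∑ j ∈ Ico 1 N, F j := by
          rw [sum_Ico_reflect F _ (by omega), Nat.add_sub_cancel_left,
            Nat.sub_sub_self (by omega : N ≤ q + 1)]
      _ = _ := by simp [sum_Ico_eq_sub F hN0, F]
  have hF := sum_range_sub_sq N
  calc 2 * (N : ℝ) ^ 3 / 3 ≤ 2 * (N * (N + 1) * (2 * N + 1) / 6) - N ^ 2 := by
        nlinarith [(Nat.cast_nonneg N : (0 : ℝ) ≤ N)]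
    _ = ∑ j ∈ range N ∪ Ico (q + 1 - N) q, F (min j (q - j)) := by
        rw [sum_union hdisj, hleft, hright, hF]
        ring
    _ ≤ ∑ k : Fin q, tent N k ^ 2 :=
        hsum ▸ sum_le_sum_of_subset_of_nonneg hsub fun j _ _ => sq_nonneg _

variable [NeZero q]

theorem abs_tent_sub_tent_le (N : ℕ) (a b : Fin q) :
    |tent N a - tent N b| ≤ (a - b).circDist := by
  have hab := Fin.circDist_add_le b (a - b)
  have hba := Fin.circDist_sub_le a (a - b)
  rw [add_sub_cancel] at hab
  rw [sub_sub_cancel] at hba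
  rw [abs_sub_le_iff, sub_le_iff_le_add, sub_le_iff_le_add]
  constructor <;> (unfold tent; norm_cast; omega)

theorem sum_sq_tent_sub_tent_sub_le (N : ℕ) (s : Fin q) :
    ∑ k : Fin q, (tent N k - tent N (k - s)) ^ 2 ≤ 2 * (N + s.circDist) * (s.circDist : ℝ) ^ 2 := by
  refine (Fin.sum_le_of_eq_zero_of_le_circDist (L := N + s.circDist) (B := (s.circDist : ℝ) ^ 2)
    (by positivity) (fun k => ?_) (fun k hk => ?_)).trans_eq (by push_cast; ring)
  · rw [← sq_abs]
    have := abs_tent_sub_tent_le N k (k - s)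
    rw [sub_sub_cancel] at this
    exact pow_le_pow_left₀ (abs_nonneg _) this 2
  · have h := Fin.circDist_add_le (k - s) s
    rw [sub_add_cancel] at h
    rw [tent_eq_zero_of_le (by omega), tent_eq_zero_of_le (by omega), sub_zero, sq, mul_zero]

end Tent

section TentEstimates

variable {q N m : ℕ} (hN : 0 < N)
include hN

theorem mul_sum_tent_sq_ge (hq : 2 * N ≤ q + 1) :
    25 * (m : ℝ) ^ 2 * N / 6 ≤ 25 * m ^ 2 / (4 * N ^ 2) * ∑ k : Fin q, tent N k ^ 2 := by
  have hN' : (0 : ℝ) < N := Nat.cast_pos.2 hN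
  calc 25 * (m : ℝ) ^ 2 * N / 6 = 25 * m ^ 2 / (4 * N ^ 2) * (2 * N ^ 3 / 3) := by
        field_simp
        ring
    _ ≤ _ := by gcongr; exact sum_tent_sq_ge N hq

theorem one_sub_mul_sum_tent_sq_le_sum_mul_cos (hq : N ^ 2 ≤ q) :
    (1 - 25 * m ^ 2 / (4 * N ^ 2)) * ∑ k : Fin q, tent N k ^ 2
      ≤ ∑ k : Fin q, tent N k ^ 2 * Real.cos (2 * Real.pi * ((k : ℕ) * m) / q) := by
  have hN' : (0 : ℝ) < N := Nat.cast_pos.2 hN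
  have hq' : (N : ℝ) ^ 2 ≤ q := by exact_mod_cast hq
  have hq0 : (0 : ℝ) < q := lt_of_lt_of_le (by positivity) hq'
  have hphase : 2 * Real.pi * m / q ≤ 8 * m / N ^ 2 := by
    rw [div_le_div_iff₀ (by positivity) (by positivity)]
    have hm0 : (0 : ℝ) ≤ m := Nat.cast_nonneg m
    calc 2 * Real.pi * m * (N : ℝ) ^ 2 ≤ 8 * m * (N : ℝ) ^ 2 := by
          gcongr; linarith [Real.pi_le_four]
      _ ≤ 8 * m * (q : ℝ) := by gcongr
  have hcos : (2 * Real.pi * m / q) ^ 2 / 2 * ∑ k : Fin q, (tent N k * k.circDist) ^ 2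
      ≤ 4 * (m : ℝ) ^ 2 * N :=
    calc _ ≤ (8 * m / N ^ 2 : ℝ) ^ 2 / 2 * (N ^ 5 / 8) := by
          gcongr
          exact sum_sq_tent_mul_circDist_le N
      _ = 4 * (m : ℝ) ^ 2 * N := by field_simp; ring
  have h2N : 2 * N ≤ q + 1 := by nlinarith
  nlinarith [sum_sq_mul_cos_ge (tent (q := q) N) m, mul_sum_tent_sq_ge (q := q) (m := m) hN h2N,
    mul_nonneg (sq_nonneg (m : ℝ)) hN'.le]

variable [NeZero q]

theorem one_sub_mul_sum_tent_sq_le_sum_mul_sub (hq : 2 * N ≤ q + 1) (hm : m ≤ 3 * N) :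
    (1 - 25 * m ^ 2 / (4 * N ^ 2)) * ∑ k : Fin q, tent N k ^ 2
      ≤ ∑ k : Fin q, tent N k * tent N (k - (m : Fin q)) := by
  have hd : ((m : Fin q).circDist : ℝ) ≤ m := by exact_mod_cast Fin.circDist_natCast_le m
  have hdiff : ∑ k : Fin q, (tent N k - tent N (k - (m : Fin q))) ^ 2 ≤ 2 * (N + m) * (m : ℝ) ^ 2 :=
    (sum_sq_tent_sub_tent_sub_le N (m : Fin q)).trans (by gcongr)
  have hm' : (m : ℝ) ≤ 3 * N := by exact_mod_cast hm
  have hmN : ((N : ℝ) + m) * m ^ 2 ≤ 25 * (m : ℝ) ^ 2 * N / 6 := by nlinarith [sq_nonneg (m : ℝ)]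
  rw [sum_mul_comp_sub_eq]
  nlinarith [mul_sum_tent_sq_ge (m := m) hN hq]

end TentEstimates

namespace Matrix

theorem re_inner_toEuclideanCLM_toLp_ofReal {ι : Type*} [Fintype ι] [DecidableEq ι]
    (M : Matrix ι ι ℂ) (w : ι → ℝ) :
    RCLike.re (inner ℂ (toEuclideanCLM (𝕜 := ℂ) M (WithLp.toLp 2 (fun i => (w i : ℂ))))
      (WithLp.toLp 2 (fun i => (w i : ℂ))))
      = ∑ i, w i * ((M *ᵥ fun i => (w i : ℂ)) i).re := by
  rw [toEuclideanCLM_toLp, PiLp.inner_apply, RCLike.re_to_complex, Complex.re_sum]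
  refine sum_congr rfl fun i _ => ?_
  simp [Complex.mul_re]

noncomputable def clock (q m : ℕ) : Matrix (Fin q) (Fin q) ℂ :=
  diagonal fun k => Complex.exp (2 * Real.pi * Complex.I / q) ^ ((k : ℕ) * m)

def cyclicShift {R : Type*} [Zero R] [One R] (q m : ℕ) : Matrix (Fin q) (Fin q) R :=
  of fun i j => if (i : ℕ) = ((j : ℕ) + m) % q then 1 else 0

theorem cyclicShift_mulVec {R : Type*} [NonAssocSemiring R] {q : ℕ} [NeZero q] (m : ℕ)
    (f : Fin q → R) (i : Fin q) : (cyclicShift q m *ᵥ f) i = f (i - (m : Fin q)) := by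
  have hiff : ∀ j : Fin q, (i : ℕ) = ((j : ℕ) + m) % q ↔ i - (m : Fin q) = j := fun j => by
    rw [sub_eq_iff_eq_add, Fin.ext_iff, Fin.val_add, Fin.val_natCast, Nat.add_mod_mod]
  simp [cyclicShift, mulVec, dotProduct, hiff]

theorem re_inner_clock_cyclicShift {q : ℕ} [NeZero q] (m : ℕ) (α β γ : ℝ) (w : Fin q → ℝ) :
    RCLike.re (inner ℂ
      (toEuclideanCLM (𝕜 := ℂ) ((α : ℂ) • 1 + (β : ℂ) • clock q m + (γ : ℂ) • cyclicShift q m)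
        (WithLp.toLp 2 (fun i => (w i : ℂ))))
      (WithLp.toLp 2 (fun i => (w i : ℂ))))
      = α * ∑ k, w k ^ 2 + β * ∑ k : Fin q, w k ^ 2 * Real.cos (2 * Real.pi * ((k : ℕ) * m) / q)
        + γ * ∑ k, w k * w (k - (m : Fin q)) := by
  rw [re_inner_toEuclideanCLM_toLp_ofReal, mul_sum, mul_sum, mul_sum, ← sum_add_distrib,
    ← sum_add_distrib]
  refine sum_congr rfl fun k _ => ?_
  have hphase := Complex.re_exp_two_pi_mul_I_div_pow q ((k : ℕ) * m)
  push_cast at hphase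
  simp only [add_mulVec, smul_mulVec, one_mulVec, Pi.add_apply, Pi.smul_apply, clock,
    mulVec_diagonal, cyclicShift_mulVec, smul_eq_mul, Complex.add_re,
    Complex.mul_re, hphase, Complex.ofReal_re, Complex.ofReal_im]
  ring

end Matrix

theorem Matrix.mul_one_sub_le_norm_clock_cyclicShift {q N m : ℕ} [NeZero q] (hN : 0 < N)
    (hq : N ^ 2 ≤ q) (hm : m ≤ 3 * N) {α β γ : ℝ} (hα : 0 ≤ α) (hβ : 0 ≤ β) (hγ : 0 ≤ γ) :
    (α + β + γ) * (1 - 25 * m ^ 2 / (4 * N ^ 2)) ≤ ‖toEuclideanCLM (𝕜 := ℂ) (n := Fin q)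
      ((α : ℂ) • 1 + (β : ℂ) • clock q m + (γ : ℂ) • cyclicShift q m)‖ := by
  have h2N : 2 * N ≤ q + 1 := by nlinarith
  have hS0 : 0 < ∑ k : Fin q, tent N k ^ 2 :=
    lt_of_lt_of_le (by positivity) (sum_tent_sq_ge N h2N)
  have hv : WithLp.toLp 2 (fun k => (tent N k : ℂ)) ≠ 0 := fun h => by
    have := EuclideanSpace.norm_sq_toLp_ofReal (tent (q := q) N)
    rw [h, norm_zero] at this
    linarith
  refine ContinuousLinearMap.le_opNorm_of_mul_sq_norm_le_re_inner _ hv ?_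
  rw [re_inner_clock_cyclicShift, EuclideanSpace.norm_sq_toLp_ofReal]
  have hC := one_sub_mul_sum_tent_sq_le_sum_mul_cos (m := m) hN hq
  have hS1 := one_sub_mul_sum_tent_sq_le_sum_mul_sub hN h2N hm
  have hε : 0 ≤ 25 * (m : ℝ) ^ 2 / (4 * N ^ 2) := by positivity
  nlinarith [mul_le_mul_of_nonneg_left hC hβ, mul_le_mul_of_nonneg_left hS1 hγ,
    mul_nonneg hα (mul_nonneg hε hS0.le)]

theorem stmt_19_general (n m : ℕ)
    (h25 : 25 * m ^ 2 < 2 * (2 * n + 1) ^ 2)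
    (q : ℕ) (hq : q = (2 * n + 1) ^ 2)
    (ζ : ℂ) (hζ : ζ = Complex.exp (2 * Real.pi * Complex.I / (q : ℂ)))
    (y z : Matrix (Fin q) (Fin q) ℂ)
    (hy : y = Matrix.diagonal fun k : Fin q => ζ ^ ((k : ℕ) * m))
    (hz : z = Matrix.of fun i j : Fin q =>
      if (i : ℕ) = ((j : ℕ) + m) % q then (1 : ℂ) else 0)
    (α β γ : ℝ) (hα : 0 ≤ α) (hβ : 0 ≤ β) (hγ : 0 ≤ γ) :
    (α + β + γ) * Real.sqrt (1 - (25 / 2) * (m : ℝ) ^ 2 / (2 * (n : ℝ) + 1) ^ 2)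
      ≤ ‖Matrix.toEuclideanCLM (𝕜 := ℂ) (n := Fin q)
          ((α : ℂ) • 1 + (β : ℂ) • y + (γ : ℂ) • z)‖ := by
  subst hζ hy hz
  have : NeZero q := ⟨by rw [hq]; positivity⟩
  have h25' : 25 * (m : ℝ) ^ 2 < 2 * (2 * n + 1) ^ 2 := by exact_mod_cast h25
  have hsqrt : √(1 - (25 / 2) * (m : ℝ) ^ 2 / (2 * n + 1) ^ 2)
      ≤ 1 - 25 * m ^ 2 / (4 * ((2 * n + 1 : ℕ) : ℝ) ^ 2) := by
    have hε : (25 / 2) * (m : ℝ) ^ 2 / (2 * n + 1) ^ 2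
        = 2 * (25 * (m : ℝ) ^ 2 / (4 * (2 * n + 1) ^ 2)) := by field_simp; ring
    set ε := 25 * (m : ℝ) ^ 2 / (4 * (2 * n + 1) ^ 2)
    have hε1 : ε ≤ 1 := by
      rw [div_le_one (by positivity)]
      linarith [sq_nonneg (2 * (n : ℝ) + 1)]
    push_cast
    rw [hε, Real.sqrt_le_iff]
    constructor
    · linarith
    · nlinarith [sq_nonneg ε]
  calc _ ≤ (α + β + γ) * (1 - 25 * m ^ 2 / (4 * ((2 * n + 1 : ℕ) : ℝ) ^ 2)) := by gcongr
    _ ≤ _ := Matrix.mul_one_sub_le_norm_clock_cyclicShift (Nat.succ_pos _) hq.ge (by nlinarith)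
        hα hβ hγ

/-- Let `n ≥ 49`, `m ≥ 1` with `25·m² < 2·(2n+1)²`, `q = (2n+1)²`,
`ζ = exp(2πi/q)`, `y` the diagonal matrix with entries `ζ^{k·m}` and `z` the cyclic shift
by `m`.  Then for all `α, β, γ ≥ 0`, the operator norm on `ℓ²(ℂ^q)` satisfies
`‖α·1 + β·y + γ·z‖ ≥ (α+β+γ)·(1 − (25/2)·m²/(2n+1)²)^(1/2)`. -/
theorem stmt_19 (n m : ℕ) (hn : 49 ≤ n) (hm : 1 ≤ m)
    (h25 : 25 * m ^ 2 < 2 * (2 * n + 1) ^ 2)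
    (q : ℕ) (hq : q = (2 * n + 1) ^ 2)
    (ζ : ℂ) (hζ : ζ = Complex.exp (2 * Real.pi * Complex.I / (q : ℂ)))
    (y z : Matrix (Fin q) (Fin q) ℂ)
    (hy : y = Matrix.diagonal fun k : Fin q => ζ ^ ((k : ℕ) * m))
    (hz : z = Matrix.of fun i j : Fin q =>
      if (i : ℕ) = ((j : ℕ) + m) % q then (1 : ℂ) else 0)
    (α β γ : ℝ) (hα : 0 ≤ α) (hβ : 0 ≤ β) (hγ : 0 ≤ γ) :
    (α + β + γ) * Real.sqrt (1 - (25 / 2) * (m : ℝ) ^ 2 / (2 * (n : ℝ) + 1) ^ 2)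
      ≤ ‖Matrix.toEuclideanCLM (𝕜 := ℂ) (n := Fin q)
          ((α : ℂ) • 1 + (β : ℂ) • y + (γ : ℂ) • z)‖ :=
  stmt_19_general n m h25 q hq ζ hζ y z hy hz α β γ hα hβ hγ
end
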